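/- arXiv:1406.6445 — 7 statements merged into one kernel-verified Lean document; each statement's English description precedes it below -/
import Mathlib

section
/- Let (P, L, I) be a thick finite generalised quadrangle of order (s,t), let H be a group acting on it by automorphisms, and let N be a normal abelian subgroup of H whose induced action on P is regular. Fix a point x ∈ P. Then the following are equivalent: (i) H acts transitively on L; (ii) H acts transitively on the flags, i.e. for any two flags (x₁,ℓ₁), (x₂,ℓ₂) there is h ∈ H with h • x₁ = x₂ and h • ℓ₁ = ℓ₂; (iii) for any two lines ℓ, ℓ' incident with x there exists h ∈ H such that {h n h⁻¹ : n ∈ N_ℓ} = N_{ℓ'}, where N_ℓ and N_{ℓ'} denote the setwise stabilisers of ℓ and ℓ' in N. -/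
/-- **Theorem (transitive pseudo-hyperoval criterion).**
Let `(P, L, I)` be a thick finite generalised quadrangle of order `(s,t)`, let `H` act on it
by automorphisms, and let `N` be a normal abelian subgroup of `H` acting regularly on `P`.
Fix a point `x`. Then line-transitivity of `H`, flag-transitivity of `H`, and transitivity
(by conjugation) of `H` on the setwise stabilisers in `N` of the lines through `x`
are all equivalent. -/
theorem line_flag_pseudohyperoval_transitivity_equiv
    {P L H : Type*} [Fintype P] [Fintype L] [Group H]
    [MulAction H P] [MulAction H L]
    {I : P → L → Prop} {s t : ℕ}
    (hs : 2 ≤ s) (ht : 2 ≤ t)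
    (hline : ∀ ℓ : L, {y : P | I y ℓ}.ncard = s + 1)
    (hpoint : ∀ y : P, {ℓ : L | I y ℓ}.ncard = t + 1)
    (hplinear : ∀ y z : P, y ≠ z → {ℓ : L | I y ℓ ∧ I z ℓ}.Subsingleton)
    (hGQ : ∀ (y : P) (ℓ : L), ¬ I y ℓ →
      ∃! zm : P × L, I y zm.2 ∧ I zm.1 zm.2 ∧ I zm.1 ℓ)
    (hauto : ∀ (h : H) (y : P) (ℓ : L), I y ℓ ↔ I (h • y) (h • ℓ))
    (N : Subgroup H) (hNnormal : N.Normal)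
    (hNab : ∀ a b : N, a * b = b * a)
    (hNreg : ∀ y z : P, ∃! n : N, (n : H) • y = z)
    (x : P) :
    ((∀ ℓ ℓ' : L, ∃ h : H, h • ℓ = ℓ') ↔
      (∀ (x₁ x₂ : P) (ℓ₁ ℓ₂ : L), I x₁ ℓ₁ → I x₂ ℓ₂ →
        ∃ h : H, h • x₁ = x₂ ∧ h • ℓ₁ = ℓ₂)) ∧
    ((∀ ℓ ℓ' : L, ∃ h : H, h • ℓ = ℓ') ↔
      (∀ ℓ ℓ' : L, I x ℓ → I x ℓ' →
        ∃ h : H, (fun n : H => h * n * h⁻¹) '' {n : H | n ∈ N ∧ n • ℓ = ℓ} =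
          {n : H | n ∈ N ∧ n • ℓ' = ℓ'})) := by
  -- commuting in H
  have hcomm : ∀ a b : N, (a : H) * b = (b : H) * a := by
    intro a b
    have := congrArg (Subtype.val) (hNab a b)
    push_cast at this
    exact this
  -- every line has a third point avoiding any two given points
  have third : ∀ (ℓ : L) (p q : P), ∃ r, I r ℓ ∧ r ≠ p ∧ r ≠ q := by
    intro ℓ p q
    have h1 : ({y : P | I y ℓ} \ {p, q}).Nonempty := by
      rw [Set.nonempty_iff_ne_empty]
      intro hemp
      have hsub : {y : P | I y ℓ} ⊆ {p, q} := by
        intro y hy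
        by_contra hyn
        exact (Set.eq_empty_iff_forall_notMem.mp hemp y) ⟨hy, hyn⟩
      have hle := Set.ncard_le_ncard hsub (Set.toFinite _)
      have h2 : ({p, q} : Set P).ncard ≤ 2 := by
        refine le_trans (Set.ncard_insert_le _ _) ?_
        simp [Set.ncard_singleton]
      rw [hline ℓ] at hle
      omega
    obtain ⟨r, hr, hrn⟩ := h1
    simp only [Set.mem_insert_iff, Set.mem_singleton_iff, not_or] at hrn
    exact ⟨r, hr, hrn.1, hrn.2⟩
  have lnonempty : ∀ ℓ : L, ∃ p, I p ℓ := by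
    intro ℓ
    have : {y : P | I y ℓ}.Nonempty :=
      Set.nonempty_of_ncard_ne_zero (by rw [hline ℓ]; omega)
    exact this
  -- KEY LEMMA A: if n ∈ N maps a point of ℓ into ℓ, then n fixes ℓ
  have lemA : ∀ (n : N) (p : P) (ℓ : L), I p ℓ → I ((n : H) • p) ℓ → (n : H) • ℓ = ℓ := by
    intro n p ℓ hp hq
    by_cases hfix : (n : H) • p = p
    · have hn1 : n = 1 := by
        obtain ⟨u, hu, huniq⟩ := hNreg p p
        rw [huniq n hfix, huniq 1 (by simp)]
      rw [hn1]; simp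
    · by_contra hne
      have hpq : p ≠ (n : H) • p := fun h => hfix h.symm
      have hqℓ' : I ((n : H) • p) ((n : H) • ℓ) := (hauto (n : H) p ℓ).mp hp
      obtain ⟨r, hrℓ, hrp, hrq⟩ := third ℓ p ((n : H) • p)
      obtain ⟨m, hm, _⟩ := hNreg p r
      have hnr : ¬ I r ((n : H) • ℓ) := by
        intro hcon
        exact hne (hplinear r ((n : H) • p) hrq ⟨hcon, hqℓ'⟩ ⟨hrℓ, hq⟩)
      obtain ⟨zm, _, huniq⟩ := hGQ r ((n : H) • ℓ) hnr
      have h1 : (((n : H) • p, ℓ) : P × L) = zm := huniq _ ⟨hrℓ, hq, hqℓ'⟩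
      have hmr : I r ((m : H) • ℓ) := by
        rw [← hm]; exact (hauto (m : H) p ℓ).mp hp
      have hnrm : I ((n : H) • r) ((m : H) • ℓ) := by
        have : (n : H) • r = (m : H) • ((n : H) • p) := by
          rw [← hm, ← mul_smul, ← mul_smul, hcomm n m]
        rw [this]
        exact (hauto (m : H) _ ℓ).mp hq
      have hnrℓ' : I ((n : H) • r) ((n : H) • ℓ) := (hauto (n : H) r ℓ).mp hrℓ
      have h2 : (((n : H) • r, (m : H) • ℓ) : P × L) = zm := huniq _ ⟨hmr, hnrm, hnrℓ'⟩
      have h3 : (n : H) • p = (n : H) • r := by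
        have := h1.trans h2.symm
        exact (Prod.ext_iff.mp this).1
      exact hrp (smul_left_cancel _ h3).symm
  -- LEMMA B: stabiliser of a line in N is transitive on its points
  have lemB : ∀ (ℓ : L) (p q : P), I p ℓ → I q ℓ →
      ∃ n : N, (n : H) • p = q ∧ (n : H) • ℓ = ℓ := by
    intro ℓ p q hp hq
    obtain ⟨n, hn, _⟩ := hNreg p q
    exact ⟨n, hn, lemA n p ℓ hp (by rw [hn]; exact hq)⟩
  -- LEMMA C: two lines with the same N-stabiliser are N-translates
  have lemC : ∀ ℓ₁ ℓ₂ : L,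
      {g : H | g ∈ N ∧ g • ℓ₁ = ℓ₁} = {g : H | g ∈ N ∧ g • ℓ₂ = ℓ₂} →
      ∃ n : N, (n : H) • ℓ₁ = ℓ₂ := by
    intro ℓ₁ ℓ₂ hstab
    obtain ⟨p₁, hp₁⟩ := lnonempty ℓ₁
    obtain ⟨p₂, hp₂⟩ := lnonempty ℓ₂
    obtain ⟨n, hn, _⟩ := hNreg p₁ p₂
    have hp₂ℓ : I p₂ ((n : H) • ℓ₁) := by
      rw [← hn]; exact (hauto (n : H) p₁ ℓ₁).mp hp₁
    -- stabiliser of n • ℓ₁ equals stabiliser of ℓ₁ (abelian)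
    have hstabℓ : ∀ g : H, (g ∈ N ∧ g • ((n : H) • ℓ₁) = (n : H) • ℓ₁) ↔
        (g ∈ N ∧ g • ℓ₁ = ℓ₁) := by
      intro g
      constructor
      · rintro ⟨hgN, hgf⟩
        refine ⟨hgN, ?_⟩
        have : (n : H) • (g • ℓ₁) = (n : H) • ℓ₁ := by
          rw [← mul_smul, ← hcomm ⟨g, hgN⟩ n, mul_smul]
          exact hgf
        exact smul_left_cancel _ this
      · rintro ⟨hgN, hgf⟩
        refine ⟨hgN, ?_⟩
        rw [← mul_smul, hcomm ⟨g, hgN⟩ n, mul_smul, hgf]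
    -- point sets coincide
    have hpts : ∀ y : P, I y ((n : H) • ℓ₁) ↔ I y ℓ₂ := by
      intro y
      constructor
      · intro hy
        obtain ⟨m, hm, hmℓ⟩ := lemB ((n : H) • ℓ₁) p₂ y hp₂ℓ hy
        have hm2 : (m : H) ∈ {g : H | g ∈ N ∧ g • ℓ₂ = ℓ₂} := by
          rw [← hstab]
          exact (hstabℓ (m : H)).mp ⟨m.2, hmℓ⟩
        rw [← hm]
        have := (hauto (m : H) p₂ ℓ₂).mp hp₂
        rwa [hm2.2] at this
      · intro hy
        obtain ⟨m, hm, hmℓ⟩ := lemB ℓ₂ p₂ y hp₂ hy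
        have hm2 : (m : H) ∈ {g : H | g ∈ N ∧ g • ℓ₁ = ℓ₁} := by
          rw [hstab]
          exact ⟨m.2, hmℓ⟩
        have hm3 : (m : H) • ((n : H) • ℓ₁) = (n : H) • ℓ₁ :=
          ((hstabℓ (m : H)).mpr hm2).2
        rw [← hm]
        have := (hauto (m : H) p₂ ((n : H) • ℓ₁)).mp hp₂ℓ
        rwa [hm3] at this
    obtain ⟨r, hr, hrp₂, _⟩ := third ℓ₂ p₂ p₂
    exact ⟨n, hplinear p₂ r hrp₂.symm ⟨hp₂ℓ, (hpts r).mpr hr⟩ ⟨hp₂, hr⟩⟩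
  constructor
  · -- (i) ↔ (ii)
    constructor
    · intro hlt x₁ x₂ ℓ₁ ℓ₂ h₁ h₂
      obtain ⟨h, hh⟩ := hlt ℓ₁ ℓ₂
      have hx1 : I (h • x₁) ℓ₂ := by
        rw [← hh]; exact (hauto h x₁ ℓ₁).mp h₁
      obtain ⟨n, hn1, hn2⟩ := lemB ℓ₂ (h • x₁) x₂ hx1 h₂
      exact ⟨(n : H) * h, by rw [mul_smul, hn1], by rw [mul_smul, hh, hn2]⟩
    · intro hft ℓ ℓ'
      obtain ⟨p, hp⟩ := lnonempty ℓ
      obtain ⟨p', hp'⟩ := lnonempty ℓ'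
      obtain ⟨h, _, hh⟩ := hft p p' ℓ ℓ' hp hp'
      exact ⟨h, hh⟩
  · -- (i) ↔ (iii)
    constructor
    · intro hlt ℓ ℓ' _ _
      obtain ⟨h, hh⟩ := hlt ℓ ℓ'
      refine ⟨h, ?_⟩
      ext g
      simp only [Set.mem_image, Set.mem_setOf_eq]
      constructor
      · rintro ⟨m, ⟨hmN, hmℓ⟩, rfl⟩
        refine ⟨hNnormal.conj_mem m hmN h, ?_⟩
        rw [mul_smul, mul_smul, ← hh, inv_smul_smul, hmℓ]
      · rintro ⟨hgN, hgℓ'⟩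
        refine ⟨h⁻¹ * g * h, ⟨?_, ?_⟩, by group⟩
        · have := hNnormal.conj_mem g hgN h⁻¹
          simpa using this
        · rw [mul_smul, mul_smul, hh, hgℓ', ← hh, inv_smul_smul]
    · intro hiii m m'
      obtain ⟨p, hp⟩ := lnonempty m
      obtain ⟨p', hp'⟩ := lnonempty m'
      obtain ⟨n₁, hn₁, _⟩ := hNreg p x
      obtain ⟨n₂, hn₂, _⟩ := hNreg p' x
      have hxℓ : I x ((n₁ : H) • m) := by
        rw [← hn₁]; exact (hauto _ p m).mp hp
      have hxℓ' : I x ((n₂ : H) • m') := by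
        rw [← hn₂]; exact (hauto _ p' m').mp hp'
      obtain ⟨h, hh⟩ := hiii ((n₁ : H) • m) ((n₂ : H) • m') hxℓ hxℓ'
      have hst : {g : H | g ∈ N ∧ g • (h • (n₁ : H) • m) = h • (n₁ : H) • m} =
          {g : H | g ∈ N ∧ g • ((n₂ : H) • m') = (n₂ : H) • m'} := by
        rw [← hh]
        ext g
        simp only [Set.mem_image, Set.mem_setOf_eq]
        constructor
        · rintro ⟨hgN, hgfix⟩
          refine ⟨h⁻¹ * g * h, ⟨?_, ?_⟩, by group⟩
          · have := hNnormal.conj_mem g hgN h⁻¹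
            simpa using this
          · have : (h⁻¹ * g * h) • ((n₁ : H) • m) =
                h⁻¹ • (g • (h • (n₁ : H) • m)) := by
              rw [mul_smul, mul_smul]
            rw [this, hgfix, inv_smul_smul]
        · rintro ⟨m0, ⟨hm0N, hm0ℓ⟩, rfl⟩
          refine ⟨hNnormal.conj_mem m0 hm0N h, ?_⟩
          rw [mul_smul, mul_smul, inv_smul_smul, hm0ℓ]
      obtain ⟨n, hnℓ⟩ := lemC (h • (n₁ : H) • m) ((n₂ : H) • m') hst
      refine ⟨(n₂ : H)⁻¹ * ((n : H) * (h * (n₁ : H))), ?_⟩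
      rw [mul_smul, mul_smul, mul_smul, hnℓ, inv_smul_smul]
end

section
/- Let p be a prime and let s, t, d be positive integers with s ≥ 2, t ≥ 2, (s+1)(s·t+1) = p^d and p^d < (s+1)^4. Then there is a positive integer k with d = 3k, s = p^k − 1 and t = p^k + 1. -/
/-- **Arithmetic lemma.** If `p` is prime, `s, t ≥ 2`, `d ≥ 1`,
`(s+1)(st+1) = p^d` and `p^d < (s+1)^4`, then `d = 3k`, `s = p^k - 1` and
`t = p^k + 1` for some positive integer `k`. -/
theorem gq_order_arithmetic
    {p s t d : ℕ} (hp : p.Prime) (hs : 2 ≤ s) (ht : 2 ≤ t) (hd : 1 ≤ d)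
    (hprod : (s + 1) * (s * t + 1) = p ^ d)
    (hlt : p ^ d < (s + 1) ^ 4) :
    ∃ k : ℕ, 1 ≤ k ∧ d = 3 * k ∧ s = p ^ k - 1 ∧ t = p ^ k + 1 := by
  have hp1 : 1 < p := hp.one_lt
  have hdvd : (s + 1) ∣ p ^ d := ⟨s * t + 1, hprod.symm⟩
  obtain ⟨a, had, hsa⟩ := (Nat.dvd_prime_pow hp).mp hdvd
  have hpa1 : 1 < p ^ a := by omega
  have ha1 : 1 ≤ a := by
    by_contra h
    have : a = 0 := by omega
    simp [this] at hsa; omega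
  set b := d - a with hbdef
  have hab : a + b = d := by omega
  have hppos : 0 < p ^ a := by omega
  have hbeq : s * t + 1 = p ^ b := by
    have h1 : p ^ a * (s * t + 1) = p ^ a * p ^ b := by
      rw [← pow_add, hab, ← hprod, hsa]
    exact Nat.eq_of_mul_eq_mul_left hppos h1
  have hlt1 : p ^ a < p ^ b := by
    have : s + 1 < s * t + 1 := by nlinarith
    omega
  have haltb : a < b := (Nat.pow_lt_pow_iff_right hp1).mp hlt1
  -- key identity: t * p^a + 1 = p^b + t
  have hkey : t * p ^ a + 1 = p ^ b + t := by
    have : t * (s + 1) = s * t + t := by ring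
    rw [hsa] at this
    omega
  have hdvdt : p ^ a ∣ t - 1 := by
    have h1 : t - 1 = t * p ^ a - p ^ b := by omega
    rw [h1]
    exact Nat.dvd_sub (dvd_mul_left _ _) (pow_dvd_pow p haltb.le)
  obtain ⟨m, hm⟩ := hdvdt
  have htm : t = m * p ^ a + 1 := by rw [mul_comm]; omega
  have hm1 : 1 ≤ m := by
    rcases Nat.eq_zero_or_pos m with h | h
    · simp [h] at htm; omega
    · exact h
  -- key identity 2: m * p^a + 1 = p^(b-a) + m
  have hkey2 : m * p ^ a + 1 = p ^ (b - a) + m := by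
    have hX : (m * p ^ a + 1) * p ^ a = p ^ b + m * p ^ a := by
      rw [← htm]; omega
    have hpb : p ^ (b - a) * p ^ a = p ^ b := by
      rw [← pow_add]; congr 1; omega
    have hY : (p ^ (b - a) + m) * p ^ a = p ^ b + m * p ^ a := by
      rw [add_mul, hpb]
    exact Nat.eq_of_mul_eq_mul_right hppos (hX.trans hY.symm)
  have hba : a ≤ b - a := by
    have h1 : p ^ a ≤ p ^ (b - a) := by
      obtain ⟨m', hm'⟩ : ∃ m', m = m' + 1 := ⟨m - 1, by omega⟩
      have h2 : m * p ^ a = m' * p ^ a + p ^ a := by rw [hm', add_mul, one_mul]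
      have h3 : m' ≤ m' * p ^ a := Nat.le_mul_of_pos_right m' hppos
      omega
    exact (Nat.pow_le_pow_iff_right hp1).mp h1
  have hdvdm : p ^ a ∣ m - 1 := by
    have h1 : m - 1 = m * p ^ a - p ^ (b - a) := by omega
    rw [h1]
    exact Nat.dvd_sub (dvd_mul_left _ _) (pow_dvd_pow p hba)
  have hmeq : m = 1 := by
    by_contra hne
    have hmp : p ^ a + 1 ≤ m := by
      have := Nat.le_of_dvd (by omega) hdvdm
      omega
    obtain ⟨c, hc⟩ : ∃ c, m = p ^ a + 1 + c := ⟨m - (p ^ a + 1), by omega⟩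
    have hM : m * p ^ a = p ^ a * p ^ a + p ^ a + c * p ^ a := by rw [hc]; ring
    have hQ : p ^ (2 * a) = p ^ a * p ^ a := by rw [two_mul, pow_add]
    have h3 : c ≤ c * p ^ a := Nat.le_mul_of_pos_right c hppos
    have h2a : p ^ (2 * a) ≤ p ^ (b - a) := by omega
    have hb3a : 2 * a ≤ b - a := (Nat.pow_le_pow_iff_right hp1).mp h2a
    have hd4a : d < 4 * a := by
      have h4 : (s + 1) ^ 4 = p ^ (4 * a) := by rw [hsa, ← pow_mul, mul_comm]
      rw [h4] at hlt
      exact (Nat.pow_lt_pow_iff_right hp1).mp hlt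
    omega
  rw [hmeq, one_mul] at htm hkey2
  have hbeq2 : b - a = a := by
    have : p ^ (b - a) = p ^ a := by omega
    exact Nat.pow_right_injective hp.two_le this
  exact ⟨a, ha1, by omega, by omega, by omega⟩
end

section
/- Let (P, L, I) be a thick finite generalised quadrangle of order (s,t) and let N be an abelian group acting on it by automorphisms whose induced action on P is regular. Fix a point x ∈ P, let ℓ₁, …, ℓ_{t+1} be the lines incident with x, and for each i let U_i be the setwise stabiliser of ℓ_i in N. Let K be the set of all endomorphisms φ of the abelian group N satisfying φ(U_i) ⊆ U_i for all i ∈ {1,…,t+1}. Then K is a subring of the endomorphism ring of N which is a field (IsField K holds); there exists a positive integer n such that |N| = |K|^{3n} and |U_i| = |K|^n for every i; and for all pairwise distinct i, j, k, the join U_i ⊔ U_j ⊔ U_k equals all of N. -/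
set_option maxHeartbeats 1000000
set_option linter.unusedSectionVars false

/-- Bundled data of a thick finite generalised quadrangle with point-regular abelian group. -/
structure GQ (P L N : Type*) [Fintype P] [Fintype L] [AddCommGroup N]
    [AddAction N P] [AddAction N L] where
  I : P → L → Prop
  s : ℕ
  t : ℕ
  hs : 2 ≤ s
  ht : 2 ≤ t
  hline : ∀ m : L, {y : P | I y m}.ncard = s + 1
  hpoint : ∀ y : P, {m : L | I y m}.ncard = t + 1
  hplinear : ∀ y z : P, y ≠ z → {m : L | I y m ∧ I z m}.Subsingleton
  hGQ : ∀ (y : P) (m : L), ¬ I y m →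
      ∃! zm : P × L, I y zm.2 ∧ I zm.1 zm.2 ∧ I zm.1 m
  hauto : ∀ (g : N) (y : P) (m : L), I y m ↔ I (g +ᵥ y) (g +ᵥ m)
  hreg : ∀ y z : P, ∃! g : N, g +ᵥ y = z
  x : P
  ℓ : Fin (t + 1) → L
  hℓinj : Function.Injective ℓ
  hℓinc : ∀ i, I x (ℓ i)
  hℓall : ∀ m : L, I x m → ∃ i, ℓ i = m

/-- a set of natural cardinality `k` has more than two elements if `k ≥ 3`. -/
lemma GQaux_exists_third {α : Type*} {A : Set α} {k : ℕ} (hA : A.ncard = k) (hk : 3 ≤ k)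
    (a b : α) : ∃ c ∈ A, c ≠ a ∧ c ≠ b := by
  by_contra hc
  push_neg at hc
  have hsub : A ⊆ {a, b} := by
    intro z hz
    by_cases hza : z = a
    · exact Or.inl hza
    · exact Or.inr (hc z hz hza)
  have := Set.ncard_le_ncard hsub (Set.toFinite _)
  have h2 : ({a, b} : Set α).ncard ≤ 2 := Set.ncard_insert_le a {b} |>.trans (by
    simp [Set.ncard_singleton])
  omega

lemma GQaux_neg_vadd {G A : Type*} [AddGroup G] [AddAction G A] (a : G) (m : A) :
    (-a) +ᵥ (a +ᵥ m) = m := by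
  rw [vadd_vadd, neg_add_cancel, zero_vadd]

lemma GQaux_vadd_neg {G A : Type*} [AddGroup G] [AddAction G A] (a : G) (m : A) :
    a +ᵥ ((-a) +ᵥ m) = m := by
  rw [vadd_vadd, add_neg_cancel, zero_vadd]


-- Higman arithmetic
lemma GQaux_higman_arith (s t F U : ℕ) (hs : 2 ≤ s) (ht : 2 ≤ t)
    (hF : F + (2 + U) = 1 + (t+1)*s + s*s*t) (hU : U + (t+1) = 2*((t+1)*s))
    (hcs : ((t+1) * ((t-1)*s))^2 ≤ F * ((t+1)*((t-1)*s) + ((t+1)*t)*(t-1))) :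
    t ≤ s*s := by
  obtain ⟨d, rfl⟩ : ∃ d, t = d + 1 := ⟨t-1, by omega⟩
  simp only [Nat.add_sub_cancel] at hcs
  by_contra hgt
  push_neg at hgt
  zify at hF hU hcs hgt hs ht ⊢
  have hFval : (F : ℤ) = s*s*(d+1) + (d+1) - (d+1)*s - s := by linear_combination hF - hU
  have key : (((d:ℤ)+1+1) * (d*s))^2
      = F * ((d+1+1)*(d*s) + ((d+1+1)*(d+1))*d)
        + ((d+2)*d*(d+1)*(s-1))*((d+1) - s*s) := by
    rw [hFval]; ring
  have hd1 : (1:ℤ) ≤ d := by linarith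
  have hpos : (0:ℤ) < (d+2)*d*(d+1)*(s-1) := by
    have h1 : (0:ℤ) < d + 2 := by linarith
    have h2 : (0:ℤ) < d := by linarith
    have h3 : (0:ℤ) < d + 1 := by linarith
    have h4 : (0:ℤ) < s - 1 := by linarith
    exact mul_pos (mul_pos (mul_pos h1 h2) h3) h4
  have hgt' : (0:ℤ) < (d+1) - s*s := by linarith
  have := mul_pos hpos hgt'
  linarith [hcs, key, this]

-- parameter arithmetic: t = s + 2
lemma GQaux_param_arith (s t : ℕ) (hs : 2 ≤ s) (ht : 2 ≤ t)
    (hdvd : (s+1)^3 ∣ (s+1) * (s*t+1)) (hhig : t ≤ s*s) : t = s + 2 := by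
  obtain ⟨k, hk⟩ : (s+1)^2 ∣ s*t+1 := by
    obtain ⟨c, hc⟩ := hdvd
    refine ⟨c, ?_⟩
    have h1 : (s+1) * (s*t+1) = (s+1) * ((s+1)^2 * c) := by rw [hc]; ring
    exact Nat.eq_of_mul_eq_mul_left (by omega) h1
  have hmod : k % s = 1 % s := by
    have h2 : 1 + t*s = k + ((s+2)*k)*s := by
      calc 1 + t*s = s*t+1 := by ring
      _ = (s+1)^2*k := hk
      _ = k + ((s+2)*k)*s := by ring
    calc k % s = (k + ((s+2)*k)*s) % s := (Nat.add_mul_mod_self_right _ _ _).symm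
    _ = (1 + t*s) % s := by rw [← h2]
    _ = 1 % s := Nat.add_mul_mod_self_right _ _ _
  by_cases hk1 : k = 1
  · subst hk1
    have h3 : s * t = s * (s + 2) := by
      have hexp : (s+1)^2 * 1 = s*s + 2*s + 1 := by ring
      have h4 : s*(s+2) = s*s + 2*s := by ring
      omega
    exact Nat.eq_of_mul_eq_mul_left (by omega) h3
  · exfalso
    have h1s : 1 % s = 1 := Nat.mod_eq_of_lt (by omega)
    have hmod1 : k % s = 1 := by rw [hmod, h1s]
    have h5 := Nat.div_add_mod k s
    have hks : s + 1 ≤ k := by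
      by_cases hq0 : k / s = 0
      · rw [hq0, Nat.mul_zero, hmod1] at h5
        omega
      · have hq : 1 ≤ k / s := Nat.pos_of_ne_zero hq0
        have h6 := Nat.mul_le_mul_left s hq
        rw [Nat.mul_one] at h6
        omega
    have hineq : (s+1)^2 * (s+1) ≤ (s+1)^2 * k := Nat.mul_le_mul_left _ hks
    have hbig : s*t ≤ s*(s*s) := Nat.mul_le_mul_left s hhig
    nlinarith [hk, hineq, hbig, hs]



lemma GQaux_card_sup {N : Type*} [AddCommGroup N] (H K : AddSubgroup N) (h : H ⊓ K = ⊥) :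
    Nat.card ↥(H ⊔ K) = Nat.card H * Nat.card K := by
  let φ : ↥H × ↥K →+ N :=
    ((H.subtype).comp (AddMonoidHom.fst ↥H ↥K)) + ((K.subtype).comp (AddMonoidHom.snd ↥H ↥K))
  have hφ : ∀ p : ↥H × ↥K, φ p = (p.1 : N) + (p.2 : N) := fun p => rfl
  have hinj : Function.Injective φ := by
    intro p q hpq
    rw [hφ, hφ] at hpq
    have hmem : (p.1 : N) - q.1 ∈ H ⊓ K := by
      refine AddSubgroup.mem_inf.mpr ⟨sub_mem p.1.2 q.1.2, ?_⟩
      have heq2 : (p.1 : N) - q.1 = (q.2 : N) - p.2 :=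
        sub_eq_sub_iff_add_eq_add.mpr (hpq.trans (add_comm _ _))
      rw [heq2]
      exact sub_mem q.2.2 p.2.2
    rw [h, AddSubgroup.mem_bot, sub_eq_zero] at hmem
    have h2 : (p.2 : N) = q.2 := by
      rw [hmem] at hpq
      exact add_left_cancel hpq
    exact Prod.ext (Subtype.ext hmem) (Subtype.ext h2)
  have hrange : ∀ n : N, (n ∈ Set.range φ) ↔ n ∈ H ⊔ K := by
    intro n
    constructor
    · rintro ⟨⟨p1, p2⟩, rfl⟩
      rw [hφ]
      exact add_mem (AddSubgroup.mem_sup_left p1.2) (AddSubgroup.mem_sup_right p2.2)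
    · intro hn
      obtain ⟨y, hy, z, hz, rfl⟩ := AddSubgroup.mem_sup.mp hn
      exact ⟨(⟨y, hy⟩, ⟨z, hz⟩), rfl⟩
  have e1 : ↥H × ↥K ≃ ↥(Set.range φ) := Equiv.ofInjective φ hinj
  have e2 : ↥(Set.range φ) ≃ ↥(H ⊔ K) := Equiv.subtypeEquivRight hrange
  rw [← Nat.card_prod]
  exact (Nat.card_congr (e1.trans e2)).symm

namespace GQ

variable {P L N : Type*} [Fintype P] [Fintype L] [AddCommGroup N]
    [AddAction N P] [AddAction N L] (S : GQ P L N)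

/-- collinearity of two (distinct) points -/
def col (a b : P) : Prop := a ≠ b ∧ ∃ m, S.I a m ∧ S.I b m

lemma col_symm {a b : P} (h : S.col a b) : S.col b a :=
  ⟨h.1.symm, h.2.imp fun _ hm => ⟨hm.2, hm.1⟩⟩

lemma col_irrefl (a : P) : ¬ S.col a a := fun h => h.1 rfl

lemma col_of_line {a b : P} {m : L} (hab : a ≠ b) (ha : S.I a m) (hb : S.I b m) :
    S.col a b := ⟨hab, m, ha, hb⟩

lemma line_eq {a b : P} {m m' : L} (hab : a ≠ b) (h1 : S.I a m) (h2 : S.I b m)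
    (h1' : S.I a m') (h2' : S.I b m') : m = m' :=
  S.hplinear a b hab ⟨h1, h2⟩ ⟨h1', h2'⟩

lemma exists_unique_col_pt {y : P} {m : L} (h : ¬ S.I y m) :
    ∃! z : P, S.I z m ∧ S.col z y := by
  obtain ⟨⟨z0, m0⟩, ⟨hm0, hz0m0, hz0m⟩, huniq⟩ := S.hGQ y m h
  refine ⟨z0, ⟨hz0m, ?_, m0, hz0m0, hm0⟩, ?_⟩
  · rintro rfl; exact h hz0m
  · rintro z ⟨hzm, hzy, mm, hzmm, hymm⟩
    have := huniq (z, mm) ⟨hymm, hzmm, hzm⟩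
    exact congrArg Prod.fst this

/-- on a line not through `y`, at most one point is collinear with `y`. -/
lemma col_unique_on_line {y z z' : P} {m : L} (h : ¬ S.I y m)
    (hz : S.I z m) (hz' : S.I z' m) (hc : S.col z y) (hc' : S.col z' y) : z = z' := by
  obtain ⟨w, _, hu⟩ := S.exists_unique_col_pt h
  rw [hu z ⟨hz, hc⟩, hu z' ⟨hz', hc'⟩]

/-- no triangles: three pairwise collinear points lie on a common line. -/
lemma triangle {a b c : P} (hab : S.col a b) (hac : S.col a c) (hbc : S.col b c) :
    ∃ m, S.I a m ∧ S.I b m ∧ S.I c m := by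
  obtain ⟨hbc', m, hbm, hcm⟩ := hbc
  by_cases ham : S.I a m
  · exact ⟨m, ham, hbm, hcm⟩
  · exact absurd (S.col_unique_on_line ham hbm hcm (S.col_symm hab) (S.col_symm hac)) hbc'

/-! ### Finiteness and existence helpers -/

lemma exists_pt_on_line (m : L) : ∃ y, S.I y m := by
  have h := S.hline m
  by_contra hc
  push_neg at hc
  have : {y : P | S.I y m} = ∅ := Set.eq_empty_iff_forall_notMem.2 hc
  rw [this] at h; simp at h

lemma exists_line_through (y : P) : ∃ m, S.I y m := by
  have h := S.hpoint y
  by_contra hc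
  push_neg at hc
  have : {m : L | S.I y m} = ∅ := Set.eq_empty_iff_forall_notMem.2 hc
  rw [this] at h; simp at h


/-! ### The point-regular group: identification of points with `N` -/

/-- the orbit map `n ↦ n +ᵥ x`. -/
def pt (n : N) : P := n +ᵥ S.x

lemma pt_injective : Function.Injective S.pt := by
  intro a b hab
  obtain ⟨g, hg, hu⟩ := S.hreg S.x (b +ᵥ S.x)
  exact (hu a hab).trans (hu b rfl).symm

lemma pt_surjective : Function.Surjective S.pt := fun z =>
  ⟨(S.hreg S.x z).exists.choose, (S.hreg S.x z).exists.choose_spec⟩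

lemma pt_bijective : Function.Bijective S.pt := ⟨S.pt_injective, S.pt_surjective⟩

include S in
lemma finiteN : Finite N := Finite.of_injective S.pt S.pt_injective

lemma pt_zero : S.pt 0 = S.x := zero_vadd _ _

lemma pt_vadd (a b : N) : S.pt (a + b) = a +ᵥ S.pt b := by
  rw [pt, pt, vadd_vadd]

lemma pt_eq_vadd (a : N) : S.pt a = a +ᵥ S.x := rfl

lemma pt_neg_cancel (a : N) : (-a) +ᵥ S.pt a = S.x := by
  rw [pt, vadd_vadd, neg_add_cancel, zero_vadd]

lemma pt_neg_add (a b : N) : (-a) +ᵥ S.pt (a + b) = S.pt b := by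
  rw [pt_vadd, vadd_vadd, neg_add_cancel, zero_vadd]

lemma pt_neg_gen (a b : N) : (-a) +ᵥ S.pt b = S.pt (b - a) := by
  rw [pt, pt, vadd_vadd, sub_eq_neg_add]

/-- the set of group elements sending `x` onto the line `ℓ i`. -/
def T (i : Fin (S.t + 1)) : Set N := {n | S.I (S.pt n) (S.ℓ i)}

/-- the stabilizer subgroups. -/
def Ust (i : Fin (S.t + 1)) : AddSubgroup N := AddAction.stabilizer N (S.ℓ i)

lemma mem_T_iff {i} {n : N} : n ∈ S.T i ↔ S.I (S.pt n) (S.ℓ i) := Iff.rfl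

lemma zero_mem_T (i) : (0:N) ∈ S.T i := by
  show S.I (S.pt 0) (S.ℓ i); rw [S.pt_zero]; exact S.hℓinc i

lemma T_ncard (i) : (S.T i).ncard = S.s + 1 := by
  have himg : S.pt '' S.T i = {y : P | S.I y (S.ℓ i)} := by
    ext z
    constructor
    · rintro ⟨n, hn, rfl⟩; exact hn
    · intro hz
      obtain ⟨n, rfl⟩ := S.pt_surjective z
      exact ⟨n, hz, rfl⟩
  have := Set.ncard_image_of_injective (S.T i) S.pt_injective
  rw [himg] at this
  rw [← this, S.hline]

lemma add_mem_T {i} {a b : N} (ha : a ∈ S.T i) (hb : b ∈ S.T i) (hab : a ≠ b) :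
    a + b ∈ S.T i := by
  by_contra hc
  obtain ⟨w, hw, huniq⟩ := S.hGQ (S.pt (a + b)) (S.ℓ i) hc
  have h1 := huniq (S.pt a, a +ᵥ S.ℓ i) ⟨by
      rw [S.pt_vadd]
      exact (S.hauto a _ _).mp hb,
    (S.hauto a _ _).mp (S.hℓinc i), ha⟩
  have h2 := huniq (S.pt b, b +ᵥ S.ℓ i) ⟨by
      rw [add_comm a b, S.pt_vadd]
      exact (S.hauto b _ _).mp ha,
    (S.hauto b _ _).mp (S.hℓinc i), hb⟩
  exact hab (S.pt_injective (congrArg Prod.fst (h1.trans h2.symm)))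

lemma T_sub_stab {i} {a : N} (ha : a ∈ S.T i) : a ∈ S.Ust i := by
  rw [Ust, AddAction.mem_stabilizer_iff]
  by_cases h0 : a = 0
  · rw [h0, zero_vadd]
  · have h3 : 3 ≤ S.s + 1 := by have := S.hs; omega
    obtain ⟨b, hb, hb0, hba⟩ := GQaux_exists_third (S.T_ncard i) h3 0 a
    have hab : a + b ∈ S.T i := S.add_mem_T ha hb (fun h => hba h.symm)
    have hx1 : S.I S.x ((-a) +ᵥ S.ℓ i) := by
      have h := (S.hauto (-a) _ _).mp ha
      rwa [S.pt_neg_cancel] at h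
    have hx2 : S.I (S.pt b) ((-a) +ᵥ S.ℓ i) := by
      have h := (S.hauto (-a) _ _).mp hab
      rwa [S.pt_neg_add] at h
    have hxb : S.x ≠ S.pt b := by
      intro h
      exact hb0 (S.pt_injective (by rw [S.pt_zero, ← h]))
    have hll := S.line_eq hxb (S.hℓinc i) hb hx1 hx2
    calc a +ᵥ S.ℓ i = a +ᵥ ((-a) +ᵥ S.ℓ i) := by rw [← hll]
    _ = S.ℓ i := GQaux_vadd_neg a _

lemma mem_Ust {i} {n : N} : n ∈ S.Ust i ↔ n ∈ S.T i := by
  constructor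
  · intro h
    have h' : n +ᵥ S.ℓ i = S.ℓ i := h
    show S.I (S.pt n) (S.ℓ i)
    rw [← h']
    exact (S.hauto n _ _).mp (S.hℓinc i)
  · exact S.T_sub_stab

lemma Ust_card (i) : Nat.card (S.Ust i) = S.s + 1 := by
  have e : ↥(S.Ust i) ≃ ↥(S.T i) := Equiv.subtypeEquivRight (fun n => S.mem_Ust)
  rw [Nat.card_congr e, Nat.card_coe_set_eq, S.T_ncard]

lemma pt_ne_x {n : N} (hn : n ≠ 0) : S.pt n ≠ S.x := by
  intro h
  exact hn (S.pt_injective (by rw [S.pt_zero, h]))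

lemma eq_of_mem_two {n : N} (hn : n ≠ 0) {i j} (hi : n ∈ S.Ust i) (hj : n ∈ S.Ust j) :
    i = j := by
  by_contra hij
  have h1 : S.I (S.pt n) (S.ℓ i) := (S.mem_Ust.mp hi)
  have h2 : S.I (S.pt n) (S.ℓ j) := (S.mem_Ust.mp hj)
  exact hij (S.hℓinj (S.line_eq (Ne.symm (S.pt_ne_x hn)) (S.hℓinc i) h1 (S.hℓinc j) h2))

lemma Ust_inf {i j} (hij : i ≠ j) : S.Ust i ⊓ S.Ust j = ⊥ := by
  rw [eq_bot_iff]
  intro n hn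
  rw [AddSubgroup.mem_inf] at hn
  rw [AddSubgroup.mem_bot]
  by_contra hn0
  exact hij (S.eq_of_mem_two hn0 hn.1 hn.2)

lemma mixed_notin {i j} (hij : i ≠ j) {u v : N} (hu : u ∈ S.Ust i) (hu0 : u ≠ 0)
    (hv : v ∈ S.Ust j) (hv0 : v ≠ 0) (k) : u + v ∉ S.Ust k := by
  intro hk
  have hum : ¬ S.I S.x (u +ᵥ S.ℓ j) := by
    intro hx
    have h2 : S.I (S.pt (-u)) (S.ℓ j) := by
      have h := (S.hauto (-u) _ _).mp hx
      rw [GQaux_neg_vadd] at h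
      exact h
    have h3 : -u ∈ S.Ust j := S.mem_Ust.mpr h2
    have h4 : u ∈ S.Ust j := by simpa using neg_mem h3
    exact hij (S.eq_of_mem_two hu0 hu h4)
  obtain ⟨w, hw, huniq⟩ := S.hGQ S.x (u +ᵥ S.ℓ j) hum
  have e1 := huniq (S.pt u, S.ℓ i) ⟨S.hℓinc i, S.mem_Ust.mp hu,
    (S.hauto u _ _).mp (S.hℓinc j)⟩
  have e2 := huniq (S.pt (u + v), S.ℓ k) ⟨S.hℓinc k, S.mem_Ust.mp hk, by
    rw [S.pt_vadd]
    exact (S.hauto u _ _).mp (S.mem_Ust.mp hv)⟩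
  have h5 : u = u + v := S.pt_injective (congrArg Prod.fst (e1.trans e2.symm))
  exact hv0 (by simpa using h5.symm)

lemma inf_sup {i j k} (hij : i ≠ j) (hik : i ≠ k) (hjk : j ≠ k) :
    (S.Ust i ⊔ S.Ust j) ⊓ S.Ust k = ⊥ := by
  rw [eq_bot_iff]
  intro n hn
  rw [AddSubgroup.mem_inf] at hn
  obtain ⟨hsup, hk⟩ := hn
  obtain ⟨u, hu, v, hv, rfl⟩ := AddSubgroup.mem_sup.mp hsup
  rw [AddSubgroup.mem_bot]
  by_cases hu0 : u = 0
  · subst hu0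
    rw [zero_add] at hk ⊢
    by_cases hv0 : v = 0
    · exact hv0
    · exact absurd (S.eq_of_mem_two hv0 hv hk) hjk
  · by_cases hv0 : v = 0
    · subst hv0
      rw [add_zero] at hk ⊢
      exact absurd (S.eq_of_mem_two hu0 hu hk) hik
    · exact absurd hk (S.mixed_notin hij hu hu0 hv hv0 k)

lemma decomp {p : N} (hp : ∀ k, p ∉ S.Ust k) {m : L} (hm : S.I (S.pt p) m) :
    ∃ e c z w, e ≠ c ∧ z ∈ S.Ust e ∧ z ≠ 0 ∧ w ∈ S.Ust c ∧ w ≠ 0 ∧ p = z + w ∧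
      m = z +ᵥ S.ℓ c := by
  have hxm : ¬ S.I S.x m := by
    intro h
    obtain ⟨i, rfl⟩ := S.hℓall m h
    exact hp i (S.mem_Ust.mpr hm)
  obtain ⟨⟨zt, mt⟩, ⟨h1, h2, h3⟩, _⟩ := S.hGQ S.x m hxm
  obtain ⟨e, he⟩ := S.hℓall mt h1
  obtain ⟨z, rfl⟩ := S.pt_surjective zt
  have hz : z ∈ S.Ust e := S.mem_Ust.mpr (by rw [mem_T_iff, he]; exact h2)
  have hz0 : z ≠ 0 := by
    rintro rfl
    rw [S.pt_zero] at h3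
    exact hxm h3
  have hxc : S.I S.x ((-z) +ᵥ m) := by
    have h := (S.hauto (-z) _ _).mp h3
    rwa [S.pt_neg_cancel] at h
  obtain ⟨c, hc⟩ := S.hℓall _ hxc
  have hmz : m = z +ᵥ S.ℓ c := by rw [hc, GQaux_vadd_neg]
  have hw : p - z ∈ S.Ust c := by
    apply S.mem_Ust.mpr
    rw [mem_T_iff, hc]
    have h := (S.hauto (-z) _ _).mp hm
    rwa [S.pt_neg_gen] at h
  have hw0 : p - z ≠ 0 := by
    intro h
    rw [sub_eq_zero] at h
    subst h
    exact hp e hz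
  refine ⟨e, c, z, p - z, ?_, hz, hz0, hw, hw0, by abel, hmz⟩
  rintro rfl
  exact hp e (by simpa using add_mem hz hw)
lemma exists_third_line {p : N} (hp : ∀ k, p ∉ S.Ust k) (m1 m2 : L) :
    ∃ m, S.I (S.pt p) m ∧ m ≠ m1 ∧ m ≠ m2 := by
  have h3 : 3 ≤ S.t + 1 := by have := S.ht; omega
  obtain ⟨m, hm, h1, h2⟩ := GQaux_exists_third (S.hpoint (S.pt p)) h3 m1 m2
  exact ⟨m, hm, h1, h2⟩

lemma exists_ne_zero_mem (i) : ∃ v, v ∈ S.Ust i ∧ v ≠ 0 := by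
  have h3 : 3 ≤ S.s + 1 := by have := S.hs; omega
  obtain ⟨v, hvT, hv0, -⟩ := GQaux_exists_third (S.T_ncard i) h3 0 0
  exact ⟨v, S.mem_Ust.mpr hvT, hv0⟩

lemma exists_ne_fin (i : Fin (S.t + 1)) : ∃ j, j ≠ i := by
  have h1 : 0 < S.t + 1 := Nat.succ_pos _
  have h2 : 1 < S.t + 1 := by have := S.ht; omega
  by_cases h : i = ⟨0, h1⟩
  · refine ⟨⟨1, h2⟩, ?_⟩
    rw [h]
    intro hc
    simpa using congrArg Fin.val hc
  · exact ⟨⟨0, h1⟩, fun hc => h hc.symm⟩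

lemma second_decomp {i j} (hij : i ≠ j) {u v : N} (hu : u ∈ S.Ust i) (hu0 : u ≠ 0)
    (hv : v ∈ S.Ust j) (hv0 : v ≠ 0) :
    ∃ k l a b, k ≠ l ∧ k ≠ i ∧ k ≠ j ∧ l ≠ i ∧ l ≠ j ∧
      a ∈ S.Ust k ∧ a ≠ 0 ∧ b ∈ S.Ust l ∧ b ≠ 0 ∧ u + v = a + b := by
  have hp : ∀ k, u + v ∉ S.Ust k := S.mixed_notin hij hu hu0 hv hv0
  obtain ⟨m, hm, hm1, hm2⟩ := S.exists_third_line hp (u +ᵥ S.ℓ j) (v +ᵥ S.ℓ i)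
  obtain ⟨e, c, z, w, hec, hz, hz0, hw, hw0, heq, hme⟩ := S.decomp hp hm
  by_cases hei : e = i
  · have hz' : z ∈ S.Ust i := hei ▸ hz
    have h_uz_wv : u - z = w - v := by
      rw [sub_eq_sub_iff_add_eq_add, heq]
      abel
    by_cases hcj : c = j
    · have hd1 : u - z ∈ S.Ust i := sub_mem hu hz'
      have hd2 : u - z ∈ S.Ust j := by
        rw [h_uz_wv]
        exact sub_mem (hcj ▸ hw) hv
      have hd0 : u - z = 0 := by
        have hmem := AddSubgroup.mem_inf.mpr ⟨hd1, hd2⟩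
        rw [S.Ust_inf hij] at hmem
        exact AddSubgroup.mem_bot.mp hmem
      have huz : u = z := sub_eq_zero.mp hd0
      exact absurd (by rw [hme, ← huz, hcj]) hm1
    · have hci : c ≠ i := fun h => hec (hei.trans h.symm)
      have hd1 : u - z ∈ S.Ust i := sub_mem hu hz'
      have hd2 : u - z ∈ S.Ust c ⊔ S.Ust j := by
        rw [h_uz_wv]
        exact sub_mem (AddSubgroup.mem_sup_left hw) (AddSubgroup.mem_sup_right hv)
      have hd0 : u - z = 0 := by
        have hmem := AddSubgroup.mem_inf.mpr ⟨hd2, hd1⟩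
        rw [S.inf_sup hcj hci (Ne.symm hij)] at hmem
        exact AddSubgroup.mem_bot.mp hmem
      have huz : u = z := sub_eq_zero.mp hd0
      have hwv : w = v := by
        rw [← huz] at heq
        exact (add_left_cancel heq).symm
      have hvc : v ∈ S.Ust c := hwv ▸ hw
      exact absurd (S.eq_of_mem_two hv0 hvc hv) hcj
  · by_cases hej : e = j
    · have hz' : z ∈ S.Ust j := hej ▸ hz
      have h_vz_wu : v - z = w - u := by
        rw [sub_eq_sub_iff_add_eq_add, add_comm v u, heq]
        abel
      by_cases hci : c = i
      · have hd1 : v - z ∈ S.Ust j := sub_mem hv hz'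
        have hd2 : v - z ∈ S.Ust i := by
          rw [h_vz_wu]
          exact sub_mem (hci ▸ hw) hu
        have hd0 : v - z = 0 := by
          have hmem := AddSubgroup.mem_inf.mpr ⟨hd2, hd1⟩
          rw [S.Ust_inf hij] at hmem
          exact AddSubgroup.mem_bot.mp hmem
        have hvz : v = z := sub_eq_zero.mp hd0
        exact absurd (by rw [hme, ← hvz, hci]) hm2
      · have hcj : c ≠ j := fun h => hec (hej.trans h.symm)
        have hd1 : v - z ∈ S.Ust j := sub_mem hv hz'
        have hd2 : v - z ∈ S.Ust c ⊔ S.Ust i := by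
          rw [h_vz_wu]
          exact sub_mem (AddSubgroup.mem_sup_left hw) (AddSubgroup.mem_sup_right hu)
        have hd0 : v - z = 0 := by
          have hmem := AddSubgroup.mem_inf.mpr ⟨hd2, hd1⟩
          rw [S.inf_sup hci hcj hij] at hmem
          exact AddSubgroup.mem_bot.mp hmem
        have hvz : v = z := sub_eq_zero.mp hd0
        have hwu : w = u := by
          have hthis : u + v = v + w := by rw [← hvz] at heq; exact heq
          rw [add_comm u v] at hthis
          exact (add_left_cancel hthis).symm
        have huc : u ∈ S.Ust c := hwu ▸ hw
        exact absurd (S.eq_of_mem_two hu0 huc hu) hci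
    · by_cases hci : c = i
      · have hw' : w ∈ S.Ust i := hci ▸ hw
        have h_uw_zv : u - w = z - v := by
          rw [sub_eq_sub_iff_add_eq_add, heq]
        have hd1 : u - w ∈ S.Ust i := sub_mem hu hw'
        have hd2 : u - w ∈ S.Ust e ⊔ S.Ust j := by
          rw [h_uw_zv]
          exact sub_mem (AddSubgroup.mem_sup_left hz) (AddSubgroup.mem_sup_right hv)
        have hd0 : u - w = 0 := by
          have hmem := AddSubgroup.mem_inf.mpr ⟨hd2, hd1⟩
          rw [S.inf_sup hej hei (Ne.symm hij)] at hmem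
          exact AddSubgroup.mem_bot.mp hmem
        have hzv : z = v := by
          have := sub_eq_zero.mp ((h_uw_zv ▸ hd0 : z - v = 0))
          exact this
        have hve : v ∈ S.Ust e := hzv ▸ hz
        exact absurd (S.eq_of_mem_two hv0 hve hv) hej
      · by_cases hcj : c = j
        · have hw' : w ∈ S.Ust j := hcj ▸ hw
          have h_vw_zu : v - w = z - u := by
            rw [sub_eq_sub_iff_add_eq_add, add_comm v u, heq]
          have hd1 : v - w ∈ S.Ust j := sub_mem hv hw'
          have hd2 : v - w ∈ S.Ust e ⊔ S.Ust i := by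
            rw [h_vw_zu]
            exact sub_mem (AddSubgroup.mem_sup_left hz) (AddSubgroup.mem_sup_right hu)
          have hd0 : v - w = 0 := by
            have hmem := AddSubgroup.mem_inf.mpr ⟨hd2, hd1⟩
            rw [S.inf_sup hei hej hij] at hmem
            exact AddSubgroup.mem_bot.mp hmem
          have hzu : z = u := by
            exact sub_eq_zero.mp ((h_vw_zu ▸ hd0 : z - u = 0))
          have hue : u ∈ S.Ust e := hzu ▸ hz
          exact absurd (S.eq_of_mem_two hu0 hue hu) hei
        · exact ⟨e, c, z, w, hec, hei, hej, hci, hcj, hz, hz0, hw, hw0, heq⟩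

lemma exists_mem_decomp {n : N} (hn : n ≠ 0) (h : ∀ k, n ∉ S.Ust k) :
    ∃ k l a b, k ≠ l ∧ a ∈ S.Ust k ∧ a ≠ 0 ∧ b ∈ S.Ust l ∧ b ≠ 0 ∧ n = a + b := by
  obtain ⟨m, hm⟩ := S.exists_line_through (S.pt n)
  obtain ⟨e, c, z, w, hec, hz, hz0, hw, hw0, heq, -⟩ := S.decomp h hm
  exact ⟨e, c, z, w, hec, hz, hz0, hw, hw0, heq⟩

/-- Kernel lemma: an endomorphism preserving all the stabilisers which kills a nonzero
element is zero. -/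
lemma eendo_zero (φ : AddMonoid.End N) (hφ : ∀ i, ∀ u ∈ S.Ust i, φ u ∈ S.Ust i)
    {z : N} (hz0 : z ≠ 0) (hz : φ z = 0) : φ = 0 := by
  have stepA : ∃ i z', z' ≠ 0 ∧ z' ∈ S.Ust i ∧ φ z' = 0 := by
    by_cases h : ∃ k, z ∈ S.Ust k
    · obtain ⟨k, hk⟩ := h
      exact ⟨k, z, hz0, hk, hz⟩
    · push_neg at h
      obtain ⟨k, l, a, b, hkl, ha, ha0, hb, hb0, heq⟩ := S.exists_mem_decomp hz0 h
      have hab : φ a + φ b = 0 := by rw [← map_add, ← heq]; exact hz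
      have h1 : φ a ∈ S.Ust k := hφ k a ha
      have h2 : φ a ∈ S.Ust l := by
        have hh : φ a = -φ b := eq_neg_of_add_eq_zero_left hab
        rw [hh]
        exact neg_mem (hφ l b hb)
      by_cases hfa : φ a = 0
      · exact ⟨k, a, ha0, ha, hfa⟩
      · exact absurd (S.eq_of_mem_two hfa h1 h2) hkl
  obtain ⟨i, z', hz'0, hz'U, hz'φ⟩ := stepA
  have stepB : ∀ j, j ≠ i → ∀ v ∈ S.Ust j, φ v = 0 := by
    intro j hji v hv
    by_cases hv0 : v = 0
    · rw [hv0, map_zero]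
    · obtain ⟨k, l, a, b, hkl, hki, hkj, hli, hlj, ha, ha0, hb, hb0, heq⟩ :=
        S.second_decomp (Ne.symm hji) hz'U hz'0 hv hv0
      have hφp : φ v = φ a + φ b := by
        have hcg := congrArg φ heq
        rw [map_add, map_add, hz'φ, zero_add] at hcg
        exact hcg
      have h1 : φ v ∈ S.Ust j := hφ j v hv
      have h2 : φ v ∈ S.Ust k ⊔ S.Ust l := by
        rw [hφp]
        exact add_mem (AddSubgroup.mem_sup_left (hφ k a ha))
          (AddSubgroup.mem_sup_right (hφ l b hb))
      have hmem := AddSubgroup.mem_inf.mpr ⟨h2, h1⟩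
      rw [S.inf_sup hkl hkj hlj] at hmem
      exact AddSubgroup.mem_bot.mp hmem
  have stepC : ∀ u ∈ S.Ust i, φ u = 0 := by
    intro u hu
    by_cases hu0 : u = 0
    · rw [hu0, map_zero]
    · obtain ⟨j, hji⟩ := S.exists_ne_fin i
      obtain ⟨v, hv, hv0⟩ := S.exists_ne_zero_mem j
      obtain ⟨k, l, a, b, hkl, hki, hkj, hli, hlj, ha, ha0, hb, hb0, heq⟩ :=
        S.second_decomp (Ne.symm hji) hu hu0 hv hv0
      have hφp : φ u + φ v = φ a + φ b := by rw [← map_add, ← map_add, heq]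
      rw [stepB j hji v hv, stepB k hki a ha, stepB l hli b hb] at hφp
      simpa using hφp
  refine AddMonoidHom.ext fun n => ?_
  show φ n = 0
  by_cases hn0 : n = 0
  · rw [hn0, map_zero]
  by_cases h : ∃ k, n ∈ S.Ust k
  · obtain ⟨k, hk⟩ := h
    by_cases hki : k = i
    · exact stepC n (hki ▸ hk)
    · exact stepB k hki n hk
  · push_neg at h
    obtain ⟨k, l, a, b, hkl, ha, ha0, hb, hb0, heq⟩ := S.exists_mem_decomp hn0 h
    have hA : φ a = 0 := by
      by_cases hk : k = i
      exacts [stepC a (hk ▸ ha), stepB k hk a ha]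
    have hB : φ b = 0 := by
      by_cases hl : l = i
      exacts [stepC b (hl ▸ hb), stepB l hl b hb]
    rw [heq, map_add, hA, hB, add_zero]

/-- the subring of endomorphisms preserving all the stabilisers. -/
def Kring : Subring (AddMonoid.End N) where
  carrier := {φ | ∀ i, ∀ u ∈ S.Ust i, φ u ∈ S.Ust i}
  zero_mem' := fun i u _ => by
    show (0 : N) ∈ S.Ust i
    exact zero_mem _
  one_mem' := fun i u hu => hu
  add_mem' := fun {a b} ha hb i u hu => add_mem (ha i u hu) (hb i u hu)
  neg_mem' := fun {a} ha i u hu => neg_mem (ha i u hu)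
  mul_mem' := fun {a b} ha hb i u hu => ha i _ (hb i u hu)

lemma coe_Kring : (S.Kring : Set (AddMonoid.End N)) =
    {φ | ∀ i, ∀ u ∈ S.Ust i, φ u ∈ S.Ust i} := rfl

include S in
lemma finite_end : Finite (AddMonoid.End N) := by
  have : Finite N := S.finiteN
  exact Finite.of_injective (fun f : AddMonoid.End N => (f : N → N))
    (fun f g h => by
      apply AddMonoidHom.ext
      intro n
      exact congrFun h n)

lemma K_injective {φ : AddMonoid.End N} (hφ : φ ∈ S.Kring) (h0 : φ ≠ 0) :
    Function.Injective φ := by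
  intro a b hab
  by_contra hne
  have hz : φ (a - b) = 0 := by rw [map_sub, hab, sub_self]
  exact h0 (S.eendo_zero φ hφ (sub_ne_zero.mpr hne) hz)

lemma Kfield : IsField S.Kring := by
  have hFN : Finite N := S.finiteN
  have hFE : Finite (AddMonoid.End N) := S.finite_end
  have hF : Finite S.Kring := Subtype.finite
  obtain ⟨v0, _, hv00⟩ := S.exists_ne_zero_mem ⟨0, Nat.succ_pos _⟩
  haveI : Nontrivial S.Kring := by
    refine ⟨1, 0, fun h => ?_⟩
    have h1 : ((1 : S.Kring) : AddMonoid.End N) v0 = v0 := rfl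
    have h0 : ((0 : S.Kring) : AddMonoid.End N) v0 = 0 := rfl
    rw [h] at h1
    exact hv00 (h1.symm.trans h0 ▸ rfl)
  haveI : NoZeroDivisors S.Kring := by
    refine ⟨fun {a b} hab => ?_⟩
    by_cases ha : a = 0
    · exact Or.inl ha
    · refine Or.inr ?_
      have hainj : Function.Injective (a : AddMonoid.End N) :=
        S.K_injective a.2 (fun h => ha (Subtype.ext (by exact_mod_cast h)))
      apply Subtype.ext
      apply AddMonoidHom.ext
      intro n
      have : (a : AddMonoid.End N) ((b : AddMonoid.End N) n) = (a : AddMonoid.End N) 0 := by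
        rw [map_zero]
        have := congrArg (fun ψ : S.Kring => (ψ : AddMonoid.End N) n) hab
        exact this
      exact hainj this
  haveI : IsDomain S.Kring := NoZeroDivisors.to_isDomain _
  exact Finite.isDomain_to_isField S.Kring
/-! ### Counting -/

section Counting

attribute [local instance] Classical.propDecidable

/-- points on a line, as a finset -/
noncomputable def pts (m : L) : Finset P := Finset.univ.filter (fun y => S.I y m)

/-- lines through a point, as a finset -/
noncomputable def lns (y : P) : Finset L := Finset.univ.filter (fun m => S.I y m)

lemma mem_pts {m : L} {y : P} : y ∈ S.pts m ↔ S.I y m := by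
  simp [pts]

lemma mem_lns {y : P} {m : L} : m ∈ S.lns y ↔ S.I y m := by
  simp [lns]

lemma card_pts (m : L) : (S.pts m).card = S.s + 1 := by
  have h := S.hline m
  rwa [Set.ncard_eq_toFinset_card', Set.toFinset_setOf] at h

lemma card_lns (y : P) : (S.lns y).card = S.t + 1 := by
  have h := S.hpoint y
  rwa [Set.ncard_eq_toFinset_card', Set.toFinset_setOf] at h

/-- the chosen line through a collinear pair -/
noncomputable def theline {c d : P} (h : S.col c d) : L := h.2.choose

lemma theline_inc1 {c d : P} (h : S.col c d) : S.I c (S.theline h) := h.2.choose_spec.1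

lemma theline_inc2 {c d : P} (h : S.col c d) : S.I d (S.theline h) := h.2.choose_spec.2

lemma theline_eq {c d : P} {m : L} (h : S.col c d) (h1 : S.I c m) (h2 : S.I d m) :
    m = S.theline h := S.line_eq h.1 h1 h2 (S.theline_inc1 h) (S.theline_inc2 h)

lemma card_pts_erase {m : L} {z : P} (hz : S.I z m) : ((S.pts m).erase z).card = S.s := by
  rw [Finset.card_erase_of_mem (S.mem_pts.mpr hz), S.card_pts]
  omega

lemma lines_disj {z : P} {m m' : L} (hm : S.I z m) (hm' : S.I z m') (hne : m ≠ m') :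
    Disjoint ((S.pts m).erase z) ((S.pts m').erase z) := by
  rw [Finset.disjoint_left]
  intro u hu hu'
  rw [Finset.mem_erase, mem_pts] at hu hu'
  exact hne (S.line_eq (Ne.symm hu.1) hm hu.2 hm' hu'.2)

/-- the perpendicular set (points collinear with `a`) -/
noncomputable def perp (a : P) : Finset P := Finset.univ.filter (fun u => S.col u a)

lemma card_perp (a : P) : (S.perp a).card = (S.t + 1) * S.s := by
  have hset : S.perp a = (S.lns a).biUnion (fun m => (S.pts m).erase a) := by
    ext u
    simp only [perp, Finset.mem_filter, Finset.mem_univ, true_and, Finset.mem_biUnion,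
      Finset.mem_erase, mem_lns, mem_pts]
    constructor
    · rintro ⟨hne, m, hum, ham⟩
      exact ⟨m, ham, hne, hum⟩
    · rintro ⟨m, ham, hne, hum⟩
      exact ⟨hne, m, hum, ham⟩
  rw [hset, Finset.card_biUnion]
  · rw [Finset.sum_congr rfl (fun m hm => S.card_pts_erase (S.mem_lns.mp hm)),
      Finset.sum_const, S.card_lns, smul_eq_mul]
  · intro m hm m' hm' hne
    exact S.lines_disj (S.mem_lns.mp hm) (S.mem_lns.mp hm') hne

lemma noncol_symm {a b : P} (h : ¬ S.col a b) : ¬ S.col b a := fun hc => h (S.col_symm hc)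

/-- the trace of two noncollinear points has `t+1` elements -/
lemma card_trace {a b : P} (hab : a ≠ b) (hnc : ¬ S.col a b) :
    (Finset.univ.filter (fun z => S.col z a ∧ S.col z b)).card = S.t + 1 := by
  rw [← S.card_lns a]
  apply Finset.card_bij (fun z hz => S.theline (Finset.mem_filter.mp hz).2.1)
  · intro z hz
    exact S.mem_lns.mpr (S.theline_inc2 _)
  · intro z hz z' hz' heq
    obtain ⟨-, hza, hzb⟩ := Finset.mem_filter.mp hz
    obtain ⟨-, hz'a, hz'b⟩ := Finset.mem_filter.mp hz'
    have hbm : ¬ S.I b (S.theline hza) := by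
      intro hbm
      exact hnc ⟨hab, _, S.theline_inc2 hza, hbm⟩
    refine S.col_unique_on_line hbm (S.theline_inc1 hza) ?_ hzb hz'b
    rw [heq]
    exact S.theline_inc1 hz'a
  · intro m hm
    rw [mem_lns] at hm
    have hbm : ¬ S.I b m := by
      intro hbm
      exact hnc ⟨hab, m, hm, hbm⟩
    obtain ⟨z, ⟨hzm, hzb⟩, -⟩ := S.exists_unique_col_pt hbm
    have hza : S.col z a := by
      refine S.col_of_line ?_ hzm hm
      rintro rfl
      exact hnc hzb
    refine ⟨z, Finset.mem_filter.mpr ⟨Finset.mem_univ _, hza, hzb⟩, ?_⟩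
    exact (S.theline_eq _ hzm hm).symm
/-- counting far neighbours of a point `z` collinear with one special point `a`. -/
lemma far_nbrs_one {z a : P} (hza : S.col z a) :
    (Finset.univ.filter (fun u => S.col u z ∧ u ≠ a ∧ ¬ S.col u a)).card = S.t * S.s := by
  set m1 := S.theline hza with hm1def
  set E := (S.lns z).erase m1 with hEdef
  have hEcard : E.card = S.t := by
    rw [hEdef, Finset.card_erase_of_mem (S.mem_lns.mpr (S.theline_inc1 hza)), S.card_lns]
    omega
  have hset : Finset.univ.filter (fun u => S.col u z ∧ u ≠ a ∧ ¬ S.col u a)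
      = E.biUnion (fun m => (S.pts m).erase z) := by
    ext u
    simp only [Finset.mem_filter, Finset.mem_univ, true_and, Finset.mem_biUnion,
      Finset.mem_erase, mem_lns, mem_pts, hEdef]
    constructor
    · rintro ⟨⟨huz, m, hum, hzm⟩, hua, hnua⟩
      refine ⟨m, ⟨?_, hzm⟩, huz, hum⟩
      rintro rfl
      exact hnua ⟨hua, m1, hum, S.theline_inc2 hza⟩
    · rintro ⟨m, ⟨hne1, hzm⟩, huz, hum⟩
      have ham : ¬ S.I a m := by
        intro ham
        exact hne1 (S.theline_eq hza hzm ham)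
      refine ⟨⟨huz, m, hum, hzm⟩, ?_, ?_⟩
      · rintro rfl; exact ham hum
      · intro hcol
        exact huz (S.col_unique_on_line ham hum hzm hcol hza)
  rw [hset, Finset.card_biUnion]
  · rw [Finset.sum_congr rfl (fun m hm => S.card_pts_erase
      (S.mem_lns.mp (Finset.mem_erase.mp hm).2)), Finset.sum_const, hEcard, smul_eq_mul]
  · intro m hm m' hm' hne
    exact S.lines_disj (S.mem_lns.mp (Finset.mem_erase.mp hm).2)
      (S.mem_lns.mp (Finset.mem_erase.mp hm').2) hne

/-- counting far neighbours of a point `z` collinear with two noncollinear special points. -/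
lemma far_nbrs_two {z a b : P} (hza : S.col z a) (hzb : S.col z b) (hab : a ≠ b)
    (hnab : ¬ S.col a b) :
    (Finset.univ.filter (fun u => S.col u z ∧ (u ≠ a ∧ ¬ S.col u a) ∧
      (u ≠ b ∧ ¬ S.col u b))).card = (S.t - 1) * S.s := by
  set m1 := S.theline hza with hm1def
  set m2 := S.theline hzb with hm2def
  have hm12 : m1 ≠ m2 := by
    intro h
    exact hnab ⟨hab, m1, S.theline_inc2 hza, h ▸ S.theline_inc2 hzb⟩
  set E := ((S.lns z).erase m1).erase m2 with hEdef
  have hEcard : E.card = S.t - 1 := by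
    rw [hEdef, Finset.card_erase_of_mem (Finset.mem_erase.mpr
        ⟨Ne.symm hm12, S.mem_lns.mpr (S.theline_inc1 hzb)⟩),
      Finset.card_erase_of_mem (S.mem_lns.mpr (S.theline_inc1 hza)), S.card_lns]
    omega
  have hset : Finset.univ.filter (fun u => S.col u z ∧ (u ≠ a ∧ ¬ S.col u a) ∧
      (u ≠ b ∧ ¬ S.col u b)) = E.biUnion (fun m => (S.pts m).erase z) := by
    ext u
    simp only [Finset.mem_filter, Finset.mem_univ, true_and, Finset.mem_biUnion,
      Finset.mem_erase, mem_lns, mem_pts, hEdef]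
    constructor
    · rintro ⟨⟨huz, m, hum, hzm⟩, ⟨hua, hnua⟩, hub, hnub⟩
      refine ⟨m, ⟨?_, ?_, hzm⟩, huz, hum⟩
      · rintro rfl
        exact hnub ⟨hub, m2, hum, S.theline_inc2 hzb⟩
      · rintro rfl
        exact hnua ⟨hua, m1, hum, S.theline_inc2 hza⟩
    · rintro ⟨m, ⟨hne2, hne1, hzm⟩, huz, hum⟩
      have ham : ¬ S.I a m := fun ham => hne1 (S.theline_eq hza hzm ham)
      have hbm : ¬ S.I b m := fun hbm => hne2 (S.theline_eq hzb hzm hbm)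
      refine ⟨⟨huz, m, hum, hzm⟩, ⟨?_, ?_⟩, ?_, ?_⟩
      · rintro rfl; exact ham hum
      · intro hcol
        exact huz (S.col_unique_on_line ham hum hzm hcol hza)
      · rintro rfl; exact hbm hum
      · intro hcol
        exact huz (S.col_unique_on_line hbm hum hzm hcol hzb)
  rw [hset, Finset.card_biUnion]
  · rw [Finset.sum_congr rfl (fun m hm => S.card_pts_erase
      (S.mem_lns.mp (Finset.mem_erase.mp (Finset.mem_erase.mp hm).2).2)),
      Finset.sum_const, hEcard, smul_eq_mul]
  · intro m hm m' hm' hne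
    exact S.lines_disj (S.mem_lns.mp (Finset.mem_erase.mp (Finset.mem_erase.mp hm).2).2)
      (S.mem_lns.mp (Finset.mem_erase.mp (Finset.mem_erase.mp hm').2).2) hne
lemma GQaux_double_count {α β : Type*} (A : Finset α) (B : Finset β) (R : α → β → Prop) :
    ∑ z ∈ A, (B.filter (fun u => R z u)).card = ∑ u ∈ B, (A.filter (fun z => R z u)).card := by
  simp only [Finset.card_filter]
  exact Finset.sum_comm

lemma GQaux_ite_mul (p q : Prop) [Decidable p] [Decidable q] :
    (if p then (1:ℕ) else 0) * (if q then 1 else 0) = if p ∧ q then 1 else 0 := by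
  by_cases hp : p <;> by_cases hq : q <;> simp [hp, hq]

lemma cardP : Fintype.card P = 1 + (S.t + 1) * S.s + S.s * S.s * S.t := by
  set a := S.x with ha
  have hsplit := Finset.card_filter_add_card_filter_not
    (s := (Finset.univ : Finset P)) (p := fun u => u = a ∨ S.col u a)
  have h1 : (Finset.univ.filter (fun u => u = a ∨ S.col u a)).card = 1 + (S.t+1)*S.s := by
    have hins : Finset.univ.filter (fun u => u = a ∨ S.col u a) = insert a (S.perp a) := by
      ext u
      simp [perp, Finset.mem_insert]
    rw [hins, Finset.card_insert_of_notMem (by simp [perp]; exact S.col_irrefl a),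
      S.card_perp]
    omega
  have h2 : (Finset.univ.filter (fun u => ¬(u = a ∨ S.col u a))).card = S.s*S.s*S.t := by
    set F := Finset.univ.filter (fun u => ¬(u = a ∨ S.col u a)) with hF
    have hdc := GQaux_double_count (S.perp a) F (fun z u => S.col u z)
    have hL : ∀ z ∈ S.perp a, (F.filter (fun u => S.col u z)).card = S.t * S.s := by
      intro z hz
      have hza : S.col z a := (Finset.mem_filter.mp hz).2
      have heq : F.filter (fun u => S.col u z)
          = Finset.univ.filter (fun u => S.col u z ∧ u ≠ a ∧ ¬ S.col u a) := by
        rw [hF, Finset.filter_filter]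
        ext u
        simp only [Finset.mem_filter, Finset.mem_univ, true_and]
        tauto
      rw [heq, S.far_nbrs_one hza]
    have hR : ∀ u ∈ F, ((S.perp a).filter (fun z => S.col u z)).card = S.t + 1 := by
      intro u hu
      have hu' := (Finset.mem_filter.mp hu).2
      push_neg at hu'
      have heq : (S.perp a).filter (fun z => S.col u z)
          = Finset.univ.filter (fun z => S.col z a ∧ S.col z u) := by
        rw [perp, Finset.filter_filter]
        ext z
        simp only [Finset.mem_filter, Finset.mem_univ, true_and]
        exact ⟨fun ⟨p1, p2⟩ => ⟨p1, S.col_symm p2⟩, fun ⟨p1, p2⟩ => ⟨p1, S.col_symm p2⟩⟩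
      rw [heq, S.card_trace (Ne.symm hu'.1) (S.noncol_symm hu'.2)]
    rw [Finset.sum_congr rfl hL, Finset.sum_congr rfl hR, Finset.sum_const,
      Finset.sum_const, S.card_perp, smul_eq_mul, smul_eq_mul] at hdc
    apply Nat.eq_of_mul_eq_mul_right (show 0 < S.t + 1 by omega)
    rw [← hdc]
    ring
  rw [← Finset.card_univ, ← hsplit, h1, h2]

lemma exists_noncol : ∃ a b : P, a ≠ b ∧ ¬ S.col a b := by
  have h1 : (0 : ℕ) < S.t + 1 := Nat.succ_pos _
  have h2 : 1 < S.t + 1 := by have := S.ht; omega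
  set i0 : Fin (S.t+1) := ⟨0, h1⟩ with hi0
  set i1 : Fin (S.t+1) := ⟨1, h2⟩ with hi1
  have hne : i0 ≠ i1 := by
    intro h
    simpa [hi0, hi1] using congrArg Fin.val h
  have h3 : 3 ≤ S.s + 1 := by have := S.hs; omega
  obtain ⟨z, hz, hz1, -⟩ := GQaux_exists_third (S.hline (S.ℓ i0)) h3 S.x S.x
  obtain ⟨w, hw, hw1, -⟩ := GQaux_exists_third (S.hline (S.ℓ i1)) h3 S.x S.x
  have hz' : S.I z (S.ℓ i0) := hz
  have hw' : S.I w (S.ℓ i1) := hw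
  have hzw : z ≠ w := by
    rintro rfl
    exact hne (S.hℓinj (S.line_eq (Ne.symm hz1) (S.hℓinc i0) hz' (S.hℓinc i1) hw'))
  refine ⟨z, w, hzw, fun hcol => ?_⟩
  obtain ⟨m, hxm, hzm, hwm⟩ := S.triangle (S.col_of_line (Ne.symm hz1) (S.hℓinc i0) hz')
    (S.col_of_line (Ne.symm hw1) (S.hℓinc i1) hw') hcol
  have e0 : S.ℓ i0 = m := S.line_eq (Ne.symm hz1) (S.hℓinc i0) hz' hxm hzm
  have e1 : S.ℓ i1 = m := S.line_eq (Ne.symm hw1) (S.hℓinc i1) hw' hxm hwm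
  exact hne (S.hℓinj (e0.trans e1.symm))

lemma trace_noncol {a b z z' : P} (hab : a ≠ b) (hnc : ¬ S.col a b)
    (hza : S.col z a) (hzb : S.col z b) (hz'a : S.col z' a) (hz'b : S.col z' b)
    (hne : z ≠ z') : ¬ S.col z z' := by
  intro hcol
  by_cases ham : S.I a (S.theline hcol)
  · have hbm : ¬ S.I b (S.theline hcol) := fun hbm => hnc ⟨hab, _, ham, hbm⟩
    exact hne (S.col_unique_on_line hbm (S.theline_inc1 hcol) (S.theline_inc2 hcol) hzb hz'b)
  · exact hne (S.col_unique_on_line ham (S.theline_inc1 hcol) (S.theline_inc2 hcol) hza hz'a)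

lemma far_of_two_traces {z z' u c : P} (hzz' : ¬ S.col z z') (hne : z ≠ z')
    (hzc : S.col z c) (hz'c : S.col z' c) (huz : S.col u z) (huz' : S.col u z')
    (huc : u ≠ c) : ¬ S.col u c := by
  intro hcol
  obtain ⟨m, hum, hzm, hcm⟩ := S.triangle huz hcol hzc
  obtain ⟨m', hum', hz'm', hcm'⟩ := S.triangle huz' hcol hz'c
  have hmm : m = m' := S.line_eq huc hum hcm hum' hcm'
  exact hzz' ⟨hne, m, hzm, hmm ▸ hz'm'⟩

lemma common_far {a b z z' : P} (hab : a ≠ b) (hnab : ¬ S.col a b)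
    (hza : S.col z a) (hzb : S.col z b) (hz'a : S.col z' a) (hz'b : S.col z' b)
    (hne : z ≠ z') :
    (Finset.univ.filter (fun u => (u ≠ a ∧ ¬ S.col u a ∧ u ≠ b ∧ ¬ S.col u b) ∧
      S.col u z ∧ S.col u z')).card = S.t - 1 := by
  have hzz' : ¬ S.col z z' := S.trace_noncol hab hnab hza hzb hz'a hz'b hne
  have htr := S.card_trace hne hzz'
  have hset : Finset.univ.filter (fun u => S.col u z ∧ S.col u z')
      = insert a (insert b (Finset.univ.filter (fun u =>
        (u ≠ a ∧ ¬ S.col u a ∧ u ≠ b ∧ ¬ S.col u b) ∧ S.col u z ∧ S.col u z'))) := by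
    ext u
    simp only [Finset.mem_filter, Finset.mem_univ, true_and, Finset.mem_insert]
    constructor
    · rintro ⟨huz, huz'⟩
      by_cases hua : u = a
      · exact Or.inl hua
      by_cases hub : u = b
      · exact Or.inr (Or.inl hub)
      refine Or.inr (Or.inr ⟨⟨hua, ?_, hub, ?_⟩, huz, huz'⟩)
      · exact S.far_of_two_traces hzz' hne hza hz'a huz huz' hua
      · exact S.far_of_two_traces hzz' hne hzb hz'b huz huz' hub
    · rintro (rfl | rfl | ⟨-, h⟩)
      · exact ⟨S.col_symm hza, S.col_symm hz'a⟩
      · exact ⟨S.col_symm hzb, S.col_symm hz'b⟩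
      · exact h
  have hbnot : b ∉ Finset.univ.filter (fun u =>
      (u ≠ a ∧ ¬ S.col u a ∧ u ≠ b ∧ ¬ S.col u b) ∧ S.col u z ∧ S.col u z') := by
    intro h
    exact (Finset.mem_filter.mp h).2.1.2.2.1 rfl
  have hanot : a ∉ insert b (Finset.univ.filter (fun u =>
      (u ≠ a ∧ ¬ S.col u a ∧ u ≠ b ∧ ¬ S.col u b) ∧ S.col u z ∧ S.col u z')) := by
    intro h
    rcases Finset.mem_insert.mp h with h | h
    · exact hab h
    · exact (Finset.mem_filter.mp h).2.1.1 rfl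
  rw [hset, Finset.card_insert_of_notMem hanot, Finset.card_insert_of_notMem hbnot] at htr
  omega
lemma higman : S.t ≤ S.s * S.s := by
  obtain ⟨a, b, hab, hnab⟩ := S.exists_noncol
  set T := Finset.univ.filter (fun u : P => S.col u a ∧ S.col u b) with hT
  set F := Finset.univ.filter
    (fun u : P => u ≠ a ∧ ¬ S.col u a ∧ u ≠ b ∧ ¬ S.col u b) with hF
  have hTcard : T.card = S.t + 1 := S.card_trace hab hnab
  -- first moment
  have hRz : ∀ z ∈ T, (F.filter (fun u => S.col u z)).card = (S.t - 1) * S.s := by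
    intro z hz
    obtain ⟨-, hza, hzb⟩ := Finset.mem_filter.mp hz
    have heq : F.filter (fun u => S.col u z)
        = Finset.univ.filter (fun u => S.col u z ∧ (u ≠ a ∧ ¬ S.col u a) ∧
            (u ≠ b ∧ ¬ S.col u b)) := by
      rw [hF, Finset.filter_filter]
      ext u
      simp only [Finset.mem_filter, Finset.mem_univ, true_and]
      tauto
    rw [heq, S.far_nbrs_two hza hzb hab hnab]
  have hsum1 : ∑ u ∈ F, (T.filter (fun z => S.col u z)).card
      = (S.t + 1) * ((S.t - 1) * S.s) := by
    rw [GQaux_double_count F T (fun u z => S.col u z), Finset.sum_congr rfl hRz,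
      Finset.sum_const, hTcard, smul_eq_mul]
  -- second moment
  have hcommon : ∀ z ∈ T, ∀ z' ∈ T.erase z,
      (F.filter (fun u => S.col u z ∧ S.col u z')).card = S.t - 1 := by
    intro z hz z' hz'
    obtain ⟨hne', hz'T⟩ := Finset.mem_erase.mp hz'
    obtain ⟨-, hza, hzb⟩ := Finset.mem_filter.mp hz
    obtain ⟨-, hz'a, hz'b⟩ := Finset.mem_filter.mp hz'T
    rw [hF, Finset.filter_filter]
    exact S.common_far hab hnab hza hzb hz'a hz'b (Ne.symm hne')
  have hsum2 : ∑ u ∈ F, ((T.filter (fun z => S.col u z)).card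
        * (T.filter (fun z => S.col u z)).card)
      = (S.t + 1) * ((S.t - 1) * S.s + S.t * (S.t - 1)) := by
    have hsq : ∀ u : P, (T.filter (fun z => S.col u z)).card
        * (T.filter (fun z => S.col u z)).card
        = ∑ z ∈ T, ∑ z' ∈ T, (if S.col u z ∧ S.col u z' then 1 else 0) := by
      intro u
      rw [Finset.card_filter]
      rw [Finset.sum_mul_sum T T (fun z => if S.col u z then (1:ℕ) else 0)
        (fun z' => if S.col u z' then (1:ℕ) else 0)]
      exact Finset.sum_congr rfl fun z _ =>
        Finset.sum_congr rfl fun z' _ => GQaux_ite_mul _ _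
    calc ∑ u ∈ F, ((T.filter (fun z => S.col u z)).card
          * (T.filter (fun z => S.col u z)).card)
        = ∑ u ∈ F, ∑ z ∈ T, ∑ z' ∈ T, (if S.col u z ∧ S.col u z' then 1 else 0) :=
          Finset.sum_congr rfl fun u _ => hsq u
      _ = ∑ z ∈ T, ∑ u ∈ F, ∑ z' ∈ T, (if S.col u z ∧ S.col u z' then 1 else 0) :=
          Finset.sum_comm
      _ = ∑ z ∈ T, ∑ z' ∈ T, ∑ u ∈ F, (if S.col u z ∧ S.col u z' then 1 else 0) :=
          Finset.sum_congr rfl fun z _ => Finset.sum_comm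
      _ = ∑ z ∈ T, ∑ z' ∈ T, (F.filter (fun u => S.col u z ∧ S.col u z')).card :=
          Finset.sum_congr rfl fun z _ => Finset.sum_congr rfl fun z' _ =>
            (Finset.card_filter _ _).symm
      _ = (S.t + 1) * ((S.t - 1) * S.s + S.t * (S.t - 1)) := by
          rw [Finset.sum_congr rfl (fun z hz => ?_), Finset.sum_const, hTcard, smul_eq_mul]
          rw [← Finset.sum_erase_add _ _ hz]
          have hdiag : (F.filter (fun u => S.col u z ∧ S.col u z)).card
              = (S.t - 1) * S.s := by
            rw [Finset.filter_congr (fun u _ => by rw [and_self] :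
              ∀ u ∈ F, (S.col u z ∧ S.col u z) ↔ S.col u z)]
            exact hRz z hz
          rw [hdiag, Finset.sum_congr rfl (hcommon z hz), Finset.sum_const,
            Finset.card_erase_of_mem hz, hTcard, smul_eq_mul]
          have : S.t + 1 - 1 = S.t := by omega
          rw [this, add_comm ((S.t - 1) * S.s)]
  -- size of F
  have hsplit := Finset.card_filter_add_card_filter_not
    (s := (Finset.univ : Finset P))
    (p := fun u : P => u ≠ a ∧ ¬ S.col u a ∧ u ≠ b ∧ ¬ S.col u b)
  have hCins : Finset.univ.filter
      (fun u : P => ¬(u ≠ a ∧ ¬ S.col u a ∧ u ≠ b ∧ ¬ S.col u b))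
      = insert a (insert b (S.perp a ∪ S.perp b)) := by
    ext u
    simp only [Finset.mem_filter, Finset.mem_univ, true_and, Finset.mem_insert,
      Finset.mem_union, perp]
    constructor
    · intro h
      by_cases h1 : u = a
      · exact Or.inl h1
      by_cases h2 : u = b
      · exact Or.inr (Or.inl h2)
      by_cases h3 : S.col u a
      · exact Or.inr (Or.inr (Or.inl (by simp [h3])))
      by_cases h4 : S.col u b
      · exact Or.inr (Or.inr (Or.inr (by simp [h4])))
      · exact absurd ⟨h1, h3, h2, h4⟩ h
    · rintro (rfl | rfl | h | h) <;> intro hc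
      · exact hc.1 rfl
      · exact hc.2.2.1 rfl
      · exact hc.2.1 h
      · exact hc.2.2.2 h
  have hbnot : b ∉ S.perp a ∪ S.perp b := by
    simp only [Finset.mem_union, perp, Finset.mem_filter, Finset.mem_univ, true_and]
    rintro (h | h)
    · exact S.noncol_symm hnab h
    · exact S.col_irrefl b h
  have hanot : a ∉ insert b (S.perp a ∪ S.perp b) := by
    simp only [Finset.mem_insert, Finset.mem_union, perp, Finset.mem_filter,
      Finset.mem_univ, true_and]
    rintro (h | h | h)
    · exact hab h
    · exact S.col_irrefl a h
    · exact hnab h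
  have hinter : S.perp a ∩ S.perp b = T := by
    ext u
    simp only [Finset.mem_inter, perp, Finset.mem_filter, Finset.mem_univ, true_and, hT]
  have hunion := Finset.card_union_add_card_inter (S.perp a) (S.perp b)
  rw [hinter, hTcard, S.card_perp, S.card_perp] at hunion
  set Uc := (S.perp a ∪ S.perp b).card with hUc
  have hCcard : (Finset.univ.filter
      (fun u : P => ¬(u ≠ a ∧ ¬ S.col u a ∧ u ≠ b ∧ ¬ S.col u b))).card = 2 + Uc := by
    rw [hCins, Finset.card_insert_of_notMem hanot, Finset.card_insert_of_notMem hbnot]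
    omega
  have hFeq : F.card + (2 + Uc) = 1 + (S.t + 1) * S.s + S.s * S.s * S.t := by
    rw [← S.cardP, ← Finset.card_univ, ← hsplit, hCcard, hF]
  have hUeq : Uc + (S.t + 1) = 2 * ((S.t + 1) * S.s) := by omega
  -- Cauchy-Schwarz
  have hcs := sq_sum_le_card_mul_sum_sq (s := F)
    (f := fun u => ((T.filter (fun z => S.col u z)).card : ℕ))
  simp only [Nat.cast_id] at hcs
  rw [hsum1] at hcs
  have hcs' : ((S.t+1) * ((S.t-1)*S.s))^2
      ≤ F.card * ((S.t+1)*((S.t-1)*S.s) + ((S.t+1)*S.t)*(S.t-1)) := by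
    calc ((S.t+1) * ((S.t-1)*S.s))^2 ≤ F.card * ∑ u ∈ F,
        ((T.filter (fun z => S.col u z)).card)^2 := hcs
    _ = F.card * ((S.t+1)*((S.t-1)*S.s) + ((S.t+1)*S.t)*(S.t-1)) := by
        congr 1
        rw [Finset.sum_congr rfl (fun u _ => sq ((T.filter (fun z => S.col u z)).card)),
          hsum2]
        ring
  exact GQaux_higman_arith S.s S.t F.card Uc S.hs S.ht hFeq hUeq hcs'
end Counting

/-! ### Cardinalities and parameters -/

lemma card_sup3 {i j k} (hij : i ≠ j) (hik : i ≠ k) (hjk : j ≠ k) :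
    Nat.card ↥(S.Ust i ⊔ S.Ust j ⊔ S.Ust k) = (S.s+1)^3 := by
  rw [GQaux_card_sup _ _ (S.inf_sup hij hik hjk), GQaux_card_sup _ _ (S.Ust_inf hij),
    S.Ust_card, S.Ust_card, S.Ust_card]
  ring

lemma cardN : Nat.card N = (S.s+1) * (S.s*S.t+1) := by
  rw [Nat.card_eq_of_bijective S.pt S.pt_bijective, Nat.card_eq_fintype_card, S.cardP]
  ring

lemma t_eq : S.t = S.s + 2 := by
  have h0 : 0 < S.t + 1 := Nat.succ_pos _
  have h1 : 1 < S.t + 1 := by have := S.ht; omega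
  have h2 : 2 < S.t + 1 := by have := S.ht; omega
  set i0 : Fin (S.t+1) := ⟨0, h0⟩ with hi0
  set i1 : Fin (S.t+1) := ⟨1, h1⟩ with hi1
  set i2 : Fin (S.t+1) := ⟨2, h2⟩ with hi2
  have d01 : i0 ≠ i1 := by intro h; simpa [hi0, hi1] using congrArg Fin.val h
  have d02 : i0 ≠ i2 := by intro h; simpa [hi0, hi2] using congrArg Fin.val h
  have d12 : i1 ≠ i2 := by intro h; simpa [hi1, hi2] using congrArg Fin.val h
  have hdvd := AddSubgroup.card_addSubgroup_dvd_card (S.Ust i0 ⊔ S.Ust i1 ⊔ S.Ust i2)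
  rw [S.card_sup3 d01 d02 d12, S.cardN] at hdvd
  exact GQaux_param_arith S.s S.t S.hs S.ht hdvd S.higman

lemma sup3_top {i j k} (hij : i ≠ j) (hik : i ≠ k) (hjk : j ≠ k) :
    S.Ust i ⊔ S.Ust j ⊔ S.Ust k = ⊤ := by
  haveI : Finite N := S.finiteN
  apply AddSubgroup.eq_top_of_card_eq
  rw [S.card_sup3 hij hik hjk, S.cardN, S.t_eq]
  ring

lemma main_card : ∃ n : ℕ, 1 ≤ n ∧ Nat.card N = Nat.card S.Kring ^ (3*n) ∧
    ∀ i, Nat.card (S.Ust i) = Nat.card S.Kring ^ n := by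
  have hN3 : Nat.card N = (S.s+1)^3 := by
    rw [S.cardN, S.t_eq]; ring
  letI : Field ↥S.Kring := S.Kfield.toField
  letI : Module ↥S.Kring N :=
    { smul := fun φ n => (φ : AddMonoid.End N) n
      one_smul := fun n => rfl
      mul_smul := fun φ ψ n => rfl
      smul_zero := fun φ => map_zero _
      smul_add := fun φ a b => map_add _ _ _
      add_smul := fun φ ψ n => rfl
      zero_smul := fun n => rfl }
  have h0 : 0 < S.t + 1 := Nat.succ_pos _
  set i0 : Fin (S.t+1) := ⟨0, h0⟩ with hi0
  let U0 : Submodule ↥S.Kring N :=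
    { carrier := (S.Ust i0 : Set N)
      add_mem' := fun ha hb => add_mem ha hb
      zero_mem' := zero_mem _
      smul_mem' := fun c {x} hx => c.2 i0 x hx }
  haveI : Finite N := S.finiteN
  haveI : Fintype N := Fintype.ofFinite N
  haveI : Finite (AddMonoid.End N) := S.finite_end
  haveI : Fintype ↥S.Kring := Fintype.ofFinite _
  haveI : Fintype ↥U0 := Fintype.ofFinite _
  have hcard0 := Module.card_eq_pow_finrank (K := ↥S.Kring) (V := ↥U0)
  set n := Module.finrank ↥S.Kring ↥U0 with hn
  have hU0card : Nat.card ↥U0 = S.s + 1 := by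
    have hcongr : Nat.card ↥U0 = Nat.card ↥(S.Ust i0) :=
      Nat.card_congr (Equiv.subtypeEquivRight fun _ => Iff.rfl)
    rw [hcongr, S.Ust_card]
  have hsn : S.s + 1 = Nat.card ↥S.Kring ^ n := by
    rw [← hU0card, Nat.card_eq_fintype_card, Nat.card_eq_fintype_card, hcard0]
  have hn1 : 1 ≤ n := by
    by_contra h
    push_neg at h
    have hzero : n = 0 := by omega
    rw [hzero, pow_zero] at hsn
    have := S.hs
    omega
  refine ⟨n, hn1, ?_, ?_⟩
  · rw [hN3, hsn, ← pow_mul, mul_comm n 3]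
  · intro i
    rw [S.Ust_card, hsn]
end GQ

/-- **Proposition.** Let `(P,L,I)` be a thick finite generalised quadrangle of order `(s,t)`
with a point-regular abelian automorphism group `N` (written additively). Fix a point `x`,
let `ℓ 0, …, ℓ t` be the lines through `x` and `U i` the setwise stabiliser of `ℓ i` in `N`.
Then the endomorphisms of `N` preserving every `U i` form a subring `K` of `End(N)` which
is a field, there is `n ≥ 1` with `|N| = |K|^{3n}` and `|U i| = |K|^n` for all `i`, and
`U i ⊔ U j ⊔ U k = ⊤` for pairwise distinct `i, j, k`. -/
theorem endomorphism_ring_field_and_pseudohyperoval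
    {P L N : Type*} [Fintype P] [Fintype L] [AddCommGroup N]
    [AddAction N P] [AddAction N L]
    {I : P → L → Prop} {s t : ℕ}
    (hs : 2 ≤ s) (ht : 2 ≤ t)
    (hline : ∀ ℓ : L, {y : P | I y ℓ}.ncard = s + 1)
    (hpoint : ∀ y : P, {ℓ : L | I y ℓ}.ncard = t + 1)
    (hplinear : ∀ y z : P, y ≠ z → {ℓ : L | I y ℓ ∧ I z ℓ}.Subsingleton)
    (hGQ : ∀ (y : P) (ℓ : L), ¬ I y ℓ →
      ∃! zm : P × L, I y zm.2 ∧ I zm.1 zm.2 ∧ I zm.1 ℓ)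
    (hauto : ∀ (g : N) (y : P) (ℓ : L), I y ℓ ↔ I (g +ᵥ y) (g +ᵥ ℓ))
    (hreg : ∀ y z : P, ∃! g : N, g +ᵥ y = z)
    (x : P) (ℓ : Fin (t + 1) → L)
    (hℓinj : Function.Injective ℓ)
    (hℓinc : ∀ i, I x (ℓ i))
    (hℓall : ∀ m : L, I x m → ∃ i, ℓ i = m)
    (U : Fin (t + 1) → AddSubgroup N)
    (hU : ∀ i, U i = AddAction.stabilizer N (ℓ i)) :
    ∃ K : Subring (AddMonoid.End N),
      (K : Set (AddMonoid.End N)) = {φ | ∀ i, ∀ u ∈ U i, φ u ∈ U i} ∧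
      IsField K ∧
      (∃ n : ℕ, 1 ≤ n ∧ Nat.card N = Nat.card K ^ (3 * n) ∧
        ∀ i, Nat.card (U i) = Nat.card K ^ n) ∧
      (∀ i j k : Fin (t + 1), i ≠ j → i ≠ k → j ≠ k →
        U i ⊔ U j ⊔ U k = ⊤) := by
  let S : GQ P L N :=
    { I := I, s := s, t := t, hs := hs, ht := ht, hline := hline, hpoint := hpoint,
      hplinear := hplinear, hGQ := hGQ, hauto := hauto, hreg := hreg, x := x, ℓ := ℓ,
      hℓinj := hℓinj, hℓinc := hℓinc, hℓall := hℓall }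
  have hU' : U = S.Ust := funext fun i => hU i
  subst hU'
  exact ⟨S.Kring, rfl, S.Kfield, S.main_card,
    fun i j k hij hik hjk => S.sup3_top hij hik hjk⟩
end

section
/- Let (P, L, I) be a thick finite generalised quadrangle of order (s,t) and let N be an abelian group acting on it by automorphisms whose induced action on P is regular. Fix a point x ∈ P, let ℓ₁, …, ℓ_{t+1} be the lines incident with x, let U_i be the setwise stabiliser of ℓ_i in N, and let K be the subring of the endomorphism ring of N consisting of all endomorphisms φ with φ(U_i) ⊆ U_i for all i. Then the cardinality of K is a power of 2; the subgroups U₁, …, U_{t+1} are pairwise distinct; t = s + 2; and for all pairwise distinct i, j, k, the join U_i ⊔ U_j ⊔ U_k equals all of N (so that {U₁,…,U_{t+1}} is a pseudo-hyperoval of the K-vector space N). -/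
set_option linter.unusedSectionVars false

lemma involution_even {α : Type*} [DecidableEq α] :
    ∀ (s : Finset α) (f : α → α), (∀ a ∈ s, f a ∈ s) → (∀ a ∈ s, f (f a) = a) →
      (∀ a ∈ s, f a ≠ a) → 2 ∣ s.card := by
  intro s
  induction s using Finset.strongInduction with
  | _ s ih =>
    intro f hmap hinv hne
    rcases s.eq_empty_or_nonempty with rfl | ⟨a, ha⟩
    · simp
    · have hfa : f a ∈ s := hmap a ha
      set s' := (s.erase (f a)).erase a with hs'
      have hsub : s' ⊂ s := by
        refine Finset.ssubset_iff_of_subset ?_ |>.mpr ⟨a, ha, by simp [hs']⟩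
        intro x hx
        exact Finset.mem_of_mem_erase (Finset.mem_of_mem_erase hx)
      have hmem : ∀ b ∈ s', b ∈ s := fun b hb =>
        Finset.mem_of_mem_erase (Finset.mem_of_mem_erase hb)
      have h1 : ∀ b ∈ s', f b ∈ s' := by
        intro b hb
        have hbs := hmem b hb
        have hb1 : b ≠ a := (Finset.mem_erase.mp hb).1
        have hb2 : b ≠ f a := (Finset.mem_erase.mp (Finset.mem_of_mem_erase hb)).1
        refine Finset.mem_erase.mpr ⟨?_, Finset.mem_erase.mpr ⟨?_, hmap b hbs⟩⟩
        · intro h; apply hb2; rw [← h, hinv b hbs]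
        · intro h; apply hb1; rw [← hinv a ha, ← h, hinv b hbs]
      have h2 : 2 ∣ s'.card := ih s' hsub f h1 (fun b hb => hinv b (hmem b hb))
        (fun b hb => hne b (hmem b hb))
      have hcard : s.card = s'.card + 2 := by
        have hne' : a ≠ f a := fun h => hne a ha h.symm
        have c1 : (s.erase (f a)).card = s.card - 1 := Finset.card_erase_of_mem hfa
        have ha' : a ∈ s.erase (f a) := Finset.mem_erase.mpr ⟨hne', ha⟩
        have c2 : s'.card = (s.erase (f a)).card - 1 := Finset.card_erase_of_mem ha'
        have hpos : 1 ≤ s.card := Finset.card_pos.mpr ⟨a, ha⟩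
        have hpos2 : 1 ≤ (s.erase (f a)).card := Finset.card_pos.mpr ⟨a, ha'⟩
        omega
      omega

lemma dvd_of_pow_pred_dvd {p b : ℕ} (hp : 2 ≤ p) (hb : 1 ≤ b) :
    ∀ w, (p ^ b - 1 ∣ p ^ w - 1) → b ∣ w := by
  intro w
  induction w using Nat.strong_induction_on with
  | _ w ih =>
    intro h
    rcases lt_or_ge w b with hlt | hge
    · have h1 : p ^ w - 1 < p ^ b - 1 := by
        have := Nat.pow_lt_pow_right (by omega : 1 < p) hlt
        have h2 : 1 ≤ p ^ w := Nat.one_le_pow _ _ (by omega)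
        omega
      have h0 : p ^ w - 1 = 0 := by
        rcases Nat.eq_zero_or_pos (p ^ w - 1) with h0 | h0
        · exact h0
        · exact absurd (Nat.le_of_dvd h0 h) (by omega)
      have : p ^ w = 1 := by
        have h2 : 1 ≤ p ^ w := Nat.one_le_pow _ _ (by omega)
        omega
      have hw : w = 0 := by
        by_contra hw
        have : p ≤ p ^ w := Nat.le_self_pow hw p
        omega
      simp [hw]
    · -- p^w - 1 = p^(w-b) * (p^b - 1) + (p^(w-b) - 1)
      have hkey : p ^ w - 1 = p ^ (w - b) * (p ^ b - 1) + (p ^ (w - b) - 1) := by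
        have h1 : 1 ≤ p ^ b := Nat.one_le_pow _ _ (by omega)
        have h2 : 1 ≤ p ^ (w - b) := Nat.one_le_pow _ _ (by omega)
        have h3 : p ^ (w - b) * p ^ b = p ^ w := by
          rw [← pow_add]; congr 1; omega
        have h4 : p ^ (w-b) ≤ p ^ w := Nat.pow_le_pow_right (by omega) (by omega)
        calc p ^ w - 1 = p ^ (w - b) * p ^ b - p ^ (w-b) + (p ^ (w - b) - 1) := by
              rw [h3]; omega
          _ = p ^ (w - b) * (p ^ b - 1) + (p ^ (w - b) - 1) := by
              rw [Nat.mul_sub]; omega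
      have hdvd2 : p ^ b - 1 ∣ p ^ (w - b) - 1 := by
        have h' := hkey ▸ h
        exact (Nat.dvd_add_right ⟨p ^ (w - b), mul_comm _ _⟩).mp h'
      rcases Nat.eq_zero_or_pos (w - b) with h0 | h0
      · have : w = b := by omega
        simp [this]
      · have hd := ih (w - b) (by omega) hdvd2
        have : b ∣ (w - b) + b := Nat.dvd_add hd dvd_rfl
        have hwb : w - b + b = w := by omega
        rwa [hwb] at this


namespace GQFam



variable {N : Type*} [AddCommGroup N] {t s : ℕ} {U : Fin (t + 1) → AddSubgroup N}

lemma fam_third (ht : 2 ≤ t) (i j : Fin (t + 1)) :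
    ∃ k : Fin (t + 1), k ≠ i ∧ k ≠ j := by
  by_contra hcon
  push_neg at hcon
  have hsub : (Finset.univ : Finset (Fin (t + 1))) ⊆ {i, j} := by
    intro z _
    rcases eq_or_ne z i with rfl | hz
    · exact Finset.mem_insert_self _ _
    · simp [hcon z hz]
  have h1 := Finset.card_le_card hsub
  have h2 : ({i, j} : Finset (Fin (t + 1))).card ≤ 2 :=
    Finset.card_insert_le _ _ |>.trans (by simp)
  simp [Finset.card_univ] at h1
  omega

/-- pairwise trivial intersection, from the triple condition -/
lemma fam_pair (ht : 2 ≤ t)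
    (htrip : ∀ i j k : Fin (t + 1), j ≠ i → k ≠ i → j ≠ k →
      ∀ u ∈ U j, ∀ v ∈ U k, u + v ∈ U i → u = 0) :
    ∀ i j : Fin (t + 1), i ≠ j → ∀ u, u ∈ U i → u ∈ U j → u = 0 := by
  intro i j hij u hui huj
  obtain ⟨k, hki, hkj⟩ := fam_third ht i j
  exact htrip j i k hij hkj (fun h => hki h.symm) u hui 0 (zero_mem _)
    (by simpa using huj)

/-- the "shift" lemma -/
lemma fam_shift (ht : 2 ≤ t)
    (htrip : ∀ i j k : Fin (t + 1), j ≠ i → k ≠ i → j ≠ k →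
      ∀ u ∈ U j, ∀ v ∈ U k, u + v ∈ U i → u = 0)
    {v : N} {n : Fin (t + 1)} (hv : v ∈ U n) (hv0 : v ≠ 0)
    {d : N} (hd : ∃ r, d ∈ U r) : (∃ m, v + d ∈ U m) ↔ d ∈ U n := by
  constructor
  · rintro ⟨m, hm⟩
    obtain ⟨r, hr⟩ := hd
    rcases eq_or_ne r n with rfl | hrn
    · exact hr
    rcases eq_or_ne m n with rfl | hmn
    · simpa using sub_mem hm hv
    rcases eq_or_ne m r with heq | hmr
    · subst heq
      exact absurd (fam_pair ht htrip m n hrn v (by simpa using sub_mem hm hr) hv) hv0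
    · have h0 := htrip m r n hmr.symm hmn.symm hrn d hr v hv (by simpa [add_comm] using hm)
      rw [h0]
      exact zero_mem _
  · intro hdn
    exact ⟨n, add_mem hv hdn⟩

/-- representation function for an element outside the union -/
lemma fam_rep (ht : 2 ≤ t)
    (htrip : ∀ i j k : Fin (t + 1), j ≠ i → k ≠ i → j ≠ k →
      ∀ u ∈ U j, ∀ v ∈ U k, u + v ∈ U i → u = 0)
    (hcov : ∀ i : Fin (t + 1), ∀ g : N, g ∉ U i → ∃ k, k ≠ i ∧ ∃ u ∈ U i, g - u ∈ U k)
    (g : N) (hg : ∀ r, g ∉ U r) :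
    ∃ (a : Fin (t + 1) → N) (π : Fin (t + 1) → Fin (t + 1)),
      (∀ n, a n ∈ U n) ∧ (∀ n, π n ≠ n) ∧ (∀ n, g - a n ∈ U (π n)) ∧
      (∀ n, a n ≠ 0) ∧ (∀ n, π (π n) = n) ∧ (∀ n, a (π n) = g - a n) ∧
      Function.Injective a ∧
      (∀ d k m, d ∈ U k → g - d ∈ U m → d = a k ∧ m = π k) := by
  have hrep : ∀ n : Fin (t + 1), ∃ (u : N) (k : Fin (t + 1)),
      u ∈ U n ∧ k ≠ n ∧ g - u ∈ U k := by
    intro n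
    obtain ⟨k, hk, u, hu, hress⟩ := hcov n g (hg n)
    exact ⟨u, k, hu, hk, hress⟩
  choose a π ha hπ hb using hrep
  have huniq : ∀ (d : N) (k m : Fin (t + 1)), d ∈ U k → g - d ∈ U m →
      d = a k ∧ m = π k := by
    intro d k m hd hgd
    have hmk : m ≠ k := by
      rintro rfl
      exact hg m (by simpa using add_mem hgd hd)
    rcases eq_or_ne m (π k) with heq | hm
    · have hgd' : g - d ∈ U (π k) := heq ▸ hgd
      have h1 : d - a k ∈ U (π k) := by
        have h' := sub_mem (hb k) hgd'
        have he : g - a k - (g - d) = d - a k := by abel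
        rwa [he] at h'
      have h2 : d - a k ∈ U k := sub_mem hd (ha k)
      have h3 := fam_pair ht htrip (π k) k (hπ k) (d - a k) h1 h2
      exact ⟨(sub_eq_zero.mp h3), heq⟩
    · exfalso
      have h2 : -(g - a k) ∈ U (π k) := neg_mem (hb k)
      have hsum : (g - d) + -(g - a k) ∈ U k := by
        have he : (g - d) + -(g - a k) = a k - d := by abel
        rw [he]
        exact sub_mem (ha k) hd
      have h4 := htrip k m (π k) hmk (hπ k) hm (g - d) hgd (-(g - a k)) h2 hsum
      have h5 : g = d := by rwa [sub_eq_zero] at h4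
      exact hg k (h5 ▸ hd)
  have ha0 : ∀ n, a n ≠ 0 := by
    intro n h0
    apply hg (π n)
    have := hb n
    rwa [h0, sub_zero] at this
  have hinv : ∀ n, π (π n) = n ∧ a (π n) = g - a n := by
    intro n
    have h1 : g - a n ∈ U (π n) := hb n
    have h2 : g - (g - a n) ∈ U n := by simpa using ha n
    obtain ⟨he, hpe⟩ := huniq (g - a n) (π n) n h1 h2
    exact ⟨hpe.symm, he.symm⟩
  have hainj : Function.Injective a := by
    intro n m h
    by_contra hnm
    exact ha0 n (fam_pair ht htrip n m hnm (a n) (ha n) (h ▸ ha m))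
  exact ⟨a, π, ha, hπ, hb, ha0, fun n => (hinv n).1, fun n => (hinv n).2, hainj, huniq⟩


section Counting


variable [Fintype N] [DecidableEq N]

open Classical in
noncomputable def Ufin (U : Fin (t + 1) → AddSubgroup N) (r : Fin (t + 1)) : Finset N :=
  Finset.univ.filter (fun z => z ∈ U r)

open Classical in
noncomputable def Dfin (U : Fin (t + 1) → AddSubgroup N) : Finset N :=
  Finset.univ.filter (fun z => ∃ r, z ∈ U r)

@[simp] lemma mem_Ufin {U : Fin (t + 1) → AddSubgroup N} {r : Fin (t + 1)} {z : N} :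
    z ∈ Ufin U r ↔ z ∈ U r := by
  classical
  simp [Ufin]

@[simp] lemma mem_Dfin {U : Fin (t + 1) → AddSubgroup N} {z : N} :
    z ∈ Dfin U ↔ ∃ r, z ∈ U r := by
  classical
  simp [Dfin]

lemma card_Ufin {U : Fin (t + 1) → AddSubgroup N}
    (hcard : ∀ i, Nat.card (U i) = s + 1) (r : Fin (t + 1)) :
    (Ufin U r).card = s + 1 := by
  have h1 : ((Ufin U r : Finset N) : Set N) = (U r : Set N) := by
    ext z; simp
  calc (Ufin U r).card = ((Ufin U r : Finset N) : Set N).ncard :=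
        (Set.ncard_coe_finset _).symm
    _ = (U r : Set N).ncard := by rw [h1]
    _ = Nat.card (U r) := (Nat.card_coe_set_eq _).symm
    _ = s + 1 := hcard r

noncomputable def Er (U : Fin (t + 1) → AddSubgroup N) (r : Fin (t + 1)) : Finset N :=
  (Ufin U r).erase 0

@[simp] lemma mem_Er {U : Fin (t + 1) → AddSubgroup N} {r : Fin (t + 1)} {z : N} :
    z ∈ Er U r ↔ z ≠ 0 ∧ z ∈ U r := by
  simp [Er, Finset.mem_erase]

lemma card_Er {U : Fin (t + 1) → AddSubgroup N}
    (hcard : ∀ i, Nat.card (U i) = s + 1) (r : Fin (t + 1)) :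
    (Er U r).card = s := by
  have := card_Ufin hcard r
  have h0 : (0 : N) ∈ Ufin U r := by simp [zero_mem]
  have := Finset.card_erase_of_mem h0
  simp only [Er]
  omega

lemma Er_disj {U : Fin (t + 1) → AddSubgroup N} (ht : 2 ≤ t)
    (htrip : ∀ i j k : Fin (t + 1), j ≠ i → k ≠ i → j ≠ k →
      ∀ u ∈ U j, ∀ v ∈ U k, u + v ∈ U i → u = 0)
    {r r' : Fin (t + 1)} (h : r ≠ r') : Disjoint (Er U r) (Er U r') := by
  rw [Finset.disjoint_left]
  intro z hz hz'
  rw [mem_Er] at hz hz'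
  exact hz.1 (fam_pair ht htrip r r' h z hz.2 hz'.2)

lemma Dfin_eq {U : Fin (t + 1) → AddSubgroup N} :
    Dfin U = insert 0 (Finset.univ.biUnion (fun r => Er U r)) := by
  ext z
  simp only [mem_Dfin, Finset.mem_insert, Finset.mem_biUnion, mem_Er, Finset.mem_univ,
    true_and]
  constructor
  · rintro ⟨r, hr⟩
    rcases eq_or_ne z 0 with rfl | hz
    · exact Or.inl rfl
    · exact Or.inr ⟨r, hz, hr⟩
  · rintro (rfl | ⟨r, _, hr⟩)
    · exact ⟨0, zero_mem _⟩
    · exact ⟨r, hr⟩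

lemma card_Dfin {U : Fin (t + 1) → AddSubgroup N} (ht : 2 ≤ t)
    (htrip : ∀ i j k : Fin (t + 1), j ≠ i → k ≠ i → j ≠ k →
      ∀ u ∈ U j, ∀ v ∈ U k, u + v ∈ U i → u = 0)
    (hcard : ∀ i, Nat.card (U i) = s + 1) :
    (Dfin U).card = (t + 1) * s + 1 := by
  classical
  rw [Dfin_eq]
  have h0 : (0 : N) ∉ Finset.univ.biUnion (fun r => Er U r) := by simp
  rw [Finset.card_insert_of_notMem h0,
    Finset.card_biUnion (fun r _ r' _ h => Er_disj ht htrip h)]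
  simp [card_Er hcard, Finset.card_univ, mul_comm]


lemma card_N (hs : 1 ≤ s) (ht : 2 ≤ t) {U : Fin (t + 1) → AddSubgroup N}
    (htrip : ∀ i j k : Fin (t + 1), j ≠ i → k ≠ i → j ≠ k →
      ∀ u ∈ U j, ∀ v ∈ U k, u + v ∈ U i → u = 0)
    (hcov : ∀ i : Fin (t + 1), ∀ g : N, g ∉ U i → ∃ k, k ≠ i ∧ ∃ u ∈ U i, g - u ∈ U k)
    (hcard : ∀ i, Nat.card (U i) = s + 1) :
    Fintype.card N = (s + 1) * (s * t + 1) := by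
  classical
  set W : Fin (t + 1) → Finset N := fun k =>
    (Finset.univ.filter (fun z => z ∈ U 0 ⊔ U k)) \ Ufin U 0 with hW
  have hmemW : ∀ k z, z ∈ W k ↔ (z ∈ U 0 ⊔ U k ∧ z ∉ U 0) := by
    intro k z
    simp [hW, Finset.mem_sdiff, Finset.mem_filter]
  have hWcard : ∀ k : Fin (t + 1), k ≠ 0 → (W k).card = (s + 1) * s := by
    intro k hk
    have hbij : ((Ufin U 0) ×ˢ (Er U k)).card = (W k).card := by
      apply Finset.card_bij (fun p _ => p.1 + p.2)
      · rintro ⟨u, v⟩ hp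
        rw [Finset.mem_product] at hp
        obtain ⟨hu, hv⟩ := hp
        rw [mem_Ufin] at hu
        rw [mem_Er] at hv
        rw [hmemW]
        constructor
        · exact add_mem (AddSubgroup.mem_sup_left hu) (AddSubgroup.mem_sup_right hv.2)
        · intro hin
          have hv0 : v ∈ U 0 := by simpa using sub_mem hin hu
          exact hv.1 (fam_pair ht htrip 0 k hk.symm v hv0 hv.2)
      · rintro ⟨u, v⟩ hp ⟨u', v'⟩ hp' heq
        rw [Finset.mem_product] at hp hp'
        simp only [mem_Ufin, mem_Er] at hp hp'
        have h1 : u - u' ∈ U 0 := sub_mem hp.1 hp'.1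
        have h2 : u - u' = v' - v := by
          have : u + v = u' + v' := heq
          abel_nf
          linear_combination (norm := abel) this
        have h3 : v' - v ∈ U k := sub_mem hp'.2.2 hp.2.2
        have h4 := fam_pair ht htrip 0 k hk.symm (u - u') h1 (h2 ▸ h3)
        have h5 : u = u' := by
          have := sub_eq_zero.mp h4
          exact this
        have h6 : v = v' := by
          have h7 : v' - v = 0 := h2 ▸ h4
          have := sub_eq_zero.mp h7
          exact this.symm
        exact Prod.ext h5 h6
      · intro z hz
        rw [hmemW] at hz
        obtain ⟨hzs, hz0⟩ := hz
        obtain ⟨u, hu, v, hv, heq⟩ := AddSubgroup.mem_sup.mp hzs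
        have hv0 : v ≠ 0 := by
          rintro rfl
          have hzz : z = u := by rw [← heq, add_zero]
          exact hz0 (hzz ▸ hu)
        exact ⟨(u, v), by
          rw [Finset.mem_product]
          exact ⟨by simpa using hu, by simp [hv0, hv]⟩, heq⟩
    rw [← hbij, Finset.card_product, card_Ufin hcard, card_Er hcard]
  have hdisjW : ∀ k ∈ Finset.univ.erase (0 : Fin (t + 1)),
      ∀ l ∈ Finset.univ.erase (0 : Fin (t + 1)), k ≠ l → Disjoint (W k) (W l) := by
    intro k hk l hl hkl
    rw [Finset.mem_erase] at hk hl
    rw [Finset.disjoint_left]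
    intro z hzk hzl
    rw [hmemW] at hzk hzl
    obtain ⟨u, hu, v, hv, heq⟩ := AddSubgroup.mem_sup.mp hzk.1
    obtain ⟨u', hu', v', hv', heq'⟩ := AddSubgroup.mem_sup.mp hzl.1
    have hv0 : v ≠ 0 := by
      rintro rfl
      have hzz : z = u := by rw [← heq, add_zero]
      exact hzk.2 (hzz ▸ hu)
    have hv'0 : v' ≠ 0 := by
      rintro rfl
      have hzz : z = u' := by rw [← heq', add_zero]
      exact hzl.2 (hzz ▸ hu')
    have hsum : v + -v' ∈ U 0 := by
      have h2 : v + -v' = u' - u := by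
        have : u + v = u' + v' := heq.trans heq'.symm
        linear_combination (norm := abel) this
      rw [h2]
      exact sub_mem hu' hu
    exact hv0 (htrip 0 k l hk.1 hl.1 hkl v hv (-v') (neg_mem hv') hsum)
  have hcover : (Finset.univ : Finset N) =
      Ufin U 0 ∪ (Finset.univ.erase (0 : Fin (t + 1))).biUnion W := by
    ext z
    simp only [Finset.mem_univ, true_iff, Finset.mem_union, Finset.mem_biUnion]
    by_cases hz : z ∈ U 0
    · exact Or.inl (by simpa using hz)
    · obtain ⟨k, hk, u, hu, hres⟩ := hcov 0 z hz
      refine Or.inr ⟨k, by simp [hk], ?_⟩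
      rw [hmemW]
      refine ⟨?_, hz⟩
      have : z = u + (z - u) := by abel
      rw [this]
      exact add_mem (AddSubgroup.mem_sup_left hu) (AddSubgroup.mem_sup_right hres)
  have hdisj0 : Disjoint (Ufin U 0) ((Finset.univ.erase (0 : Fin (t + 1))).biUnion W) := by
    rw [Finset.disjoint_left]
    intro z hz hzb
    rw [Finset.mem_biUnion] at hzb
    obtain ⟨k, _, hzk⟩ := hzb
    rw [hmemW] at hzk
    exact hzk.2 (by simpa using hz)
  have hcardeq : Fintype.card N = (s + 1) + t * ((s + 1) * s) := by
    rw [← Finset.card_univ, hcover, Finset.card_union_of_disjoint hdisj0,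
      Finset.card_biUnion hdisjW, card_Ufin hcard]
    congr 1
    rw [Finset.sum_congr rfl (fun k hk => hWcard k (Finset.mem_erase.mp hk).1)]
    simp [Finset.card_erase_of_mem, Finset.card_univ]
  rw [hcardeq]; ring

lemma exists_outside (hs : 1 ≤ s) (ht : 2 ≤ t) {U : Fin (t + 1) → AddSubgroup N}
    (htrip : ∀ i j k : Fin (t + 1), j ≠ i → k ≠ i → j ≠ k →
      ∀ u ∈ U j, ∀ v ∈ U k, u + v ∈ U i → u = 0)
    (hcov : ∀ i : Fin (t + 1), ∀ g : N, g ∉ U i → ∃ k, k ≠ i ∧ ∃ u ∈ U i, g - u ∈ U k)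
    (hcard : ∀ i, Nat.card (U i) = s + 1) :
    ∃ g : N, ∀ r, g ∉ U r := by
  classical
  by_contra hcon
  push_neg at hcon
  have hsub : (Finset.univ : Finset N) ⊆ Dfin U := by
    intro z _
    obtain ⟨r, hr⟩ := hcon z
    simp only [mem_Dfin]
    exact ⟨r, hr⟩
  have h1 := Finset.card_le_card hsub
  rw [Finset.card_univ, card_N hs ht htrip hcov hcard, card_Dfin ht htrip hcard] at h1
  have h2 : 0 < s * s * t := Nat.mul_pos (Nat.mul_pos hs hs) (by omega)
  nlinarith [h1, h2]

lemma higman (hs : 2 ≤ s) (ht : 2 ≤ t) {U : Fin (t + 1) → AddSubgroup N}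
    (htrip : ∀ i j k : Fin (t + 1), j ≠ i → k ≠ i → j ≠ k →
      ∀ u ∈ U j, ∀ v ∈ U k, u + v ∈ U i → u = 0)
    (hcov : ∀ i : Fin (t + 1), ∀ g : N, g ∉ U i → ∃ k, k ≠ i ∧ ∃ u ∈ U i, g - u ∈ U k)
    (hcard : ∀ i, Nat.card (U i) = s + 1) :
    t ≤ s * s := by
  classical
  obtain ⟨g, hg⟩ := exists_outside (by omega) ht htrip hcov hcard
  obtain ⟨a, π, ha, hπ, hb, ha0, hππ, haπ, hainj, hchar⟩ := GQFam.fam_rep ht htrip hcov g hg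
  -- the common neighbours of two of the `a`'s are not in the union (coclique)
  have hcoc : ∀ n m : Fin (t + 1), n ≠ m → ∀ r, a m - a n ∉ U r := by
    intro n m hnm r hr
    rcases eq_or_ne r n with rfl | hrn
    · have h1 : a m ∈ U r := by simpa using add_mem hr (ha r)
      exact ha0 m (fam_pair ht htrip m r (fun h => hnm h.symm) (a m) (ha m) h1)
    rcases eq_or_ne r m with rfl | hrm
    · have h1 : a n ∈ U r := by simpa using sub_mem (ha r) hr
      exact ha0 n (fam_pair ht htrip n r hrn.symm (a n) (ha n) h1)
    · have h1 : a n + (a m - a n) ∈ U m := by simpa using ha m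
      exact ha0 n (htrip m n r hnm hrm (fun h => hrn h.symm) (a n) (ha n)
        (a m - a n) hr h1)
  have hbn : ∀ n, g - a n = a (π n) := fun n => (haπ n).symm
  have hbn0 : ∀ n, g - a n ≠ 0 := fun n => (hbn n) ▸ ha0 (π n)
  -- membership in B
  set B : Finset N := Finset.univ \ (Dfin U ∪ (Dfin U).image (fun z => g + z)) with hB
  have hmemB : ∀ z : N, z ∈ B ↔ ((∀ r, z ∉ U r) ∧ (∀ r, z - g ∉ U r)) := by
    intro z
    simp only [hB, Finset.mem_sdiff, Finset.mem_univ, true_and, Finset.mem_union,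
      Finset.mem_image, mem_Dfin, not_or, not_exists]
    constructor
    · rintro ⟨h1, h2⟩
      refine ⟨h1, fun r hr => h2 (z - g) ⟨⟨r, hr⟩, by abel⟩⟩
    · rintro ⟨h1, h2⟩
      refine ⟨h1, ?_⟩
      intro d hd
      obtain ⟨⟨r, hr⟩, heq⟩ := hd
      apply h2 r
      rw [← heq]
      simpa using hr
  -- membership for translated points
  have hz_inB : ∀ (n : Fin (t + 1)) (d : N) (r : Fin (t + 1)), d ∈ U r → d ≠ 0 →
      r ≠ n → r ≠ π n → a n + d ∈ B := by
    intro n d r hd hd0 hrn hrπ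
    rw [hmemB]
    constructor
    · intro r' hmem
      have hdn : d ∈ U n := (fam_shift ht htrip (ha n) (ha0 n) ⟨r, hd⟩).mp ⟨r', hmem⟩
      exact hd0 (fam_pair ht htrip r n hrn d hd hdn)
    · intro r' hmem
      have he : a n + d - g = -(g - a n) + d := by abel
      rw [he] at hmem
      have hdn : d ∈ U (π n) := (fam_shift ht htrip (neg_mem ((hbn n) ▸ ha (π n)))
        (neg_ne_zero.mpr (hbn0 n)) ⟨r, hd⟩).mp ⟨r', hmem⟩
      exact hd0 (fam_pair ht htrip r (π n) hrπ d hd hdn)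
  have hz_out : ∀ (n : Fin (t + 1)) (z : N), z ∈ B → (∀ rr, z - a n ∉ U rr) → True := fun _ _ _ _ => trivial
  -- reverse: if z ∈ B is adjacent to a n then z - a n is in U r for r ∉ {n, π n}
  have hz_rev : ∀ (n : Fin (t + 1)) (z : N) (r : Fin (t + 1)), z ∈ B → z - a n ∈ U r →
      z - a n ≠ 0 → r ≠ n ∧ r ≠ π n := by
    intro n z r hzB hzr hz0
    rw [hmemB] at hzB
    constructor
    · rintro rfl
      exact hzB.1 r (by simpa using add_mem (ha r) hzr)
    · rintro rfl
      have he : z - g = -(g - a n) + (z - a n) := by abel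
      exact hzB.2 (π n) (by
        rw [he]
        exact add_mem (neg_mem (hb n)) hzr)
  -- the adjacency relation to `a n`
  set adj : N → Fin (t + 1) → Prop := fun z n => z - a n ≠ 0 ∧ ∃ r, z - a n ∈ U r with hadj
  -- count of B-neighbours of a n
  have H3 : ∀ n : Fin (t + 1),
      (B.filter (fun z => adj z n)).card = (t - 1) * s := by
    intro n
    have hbij : ((Finset.univ \ ({n, π n} : Finset (Fin (t + 1)))).biUnion
        (fun r => Er U r)).card = (B.filter (fun z => adj z n)).card := by
      apply Finset.card_bij (fun d _ => a n + d)
      · intro d hd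
        simp only [Finset.mem_biUnion, Finset.mem_sdiff, Finset.mem_univ, true_and,
          Finset.mem_insert, Finset.mem_singleton, mem_Er] at hd
        obtain ⟨r, hr, hd0, hdr⟩ := hd
        push_neg at hr
        rw [Finset.mem_filter]
        refine ⟨hz_inB n d r hdr hd0 hr.1 hr.2, ?_⟩
        constructor
        · simpa using hd0
        · exact ⟨r, by simpa using hdr⟩
      · intro d _ d' _ heq
        exact add_left_cancel heq
      · intro z hz
        rw [Finset.mem_filter] at hz
        obtain ⟨hzB, hz2⟩ := hz
        simp only [hadj] at hz2
        obtain ⟨hz0, r, hzr⟩ := hz2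
        refine ⟨z - a n, ?_, by abel⟩
        simp only [Finset.mem_biUnion, Finset.mem_sdiff, Finset.mem_univ, true_and,
          Finset.mem_insert, Finset.mem_singleton, mem_Er]
        obtain ⟨h1, h2⟩ := hz_rev n z r hzB hzr hz0
        exact ⟨r, by push_neg; exact ⟨h1, h2⟩, hz0, hzr⟩
    rw [← hbij, Finset.card_biUnion (fun r _ r' _ h => Er_disj ht htrip h)]
    have hcard2 : (Finset.univ \ ({n, π n} : Finset (Fin (t + 1)))).card = t - 1 := by
      rw [Finset.card_sdiff_of_subset (Finset.subset_univ _), Finset.card_univ]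
      rw [Finset.card_insert_of_notMem (by simp [Ne.symm (hπ n)]), Finset.card_singleton]
      simp
    rw [Finset.sum_congr rfl (fun r _ => card_Er hcard r), Finset.sum_const, hcard2,
      smul_eq_mul]
  -- count of common B-neighbours of a n and a m
  have H4 : ∀ n m : Fin (t + 1), n ≠ m →
      (B.filter (fun z => adj z n ∧ adj z m)).card = t - 1 := by
    intro n m hnm
    set h := a m - a n with hh
    have hhD : ∀ r, h ∉ U r := hcoc n m hnm
    obtain ⟨a', π', ha', hπ', hb', ha'0, hππ', haπ', ha'inj, hchar'⟩ :=
      GQFam.fam_rep ht htrip hcov h hhD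
    have hbij : ((Finset.univ \ ({n, π n} : Finset (Fin (t + 1)))).image a').card
        = (B.filter (fun z => adj z n ∧ adj z m)).card := by
      apply Finset.card_bij (fun d _ => a n + d)
      · intro d hd
        simp only [Finset.mem_image, Finset.mem_sdiff, Finset.mem_univ, true_and,
          Finset.mem_insert, Finset.mem_singleton] at hd
        obtain ⟨r, hr, rfl⟩ := hd
        push_neg at hr
        rw [Finset.mem_filter]
        refine ⟨hz_inB n (a' r) r (ha' r) (ha'0 r) hr.1 hr.2, ?_, ?_⟩
        · exact ⟨by simpa using ha'0 r, ⟨r, by simpa using ha' r⟩⟩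
        · have he : a n + a' r - a m = -(h - a' r) := by rw [hh]; abel
          constructor
          · rw [he]
            have h9 : h - a' r ≠ 0 := by
              rw [← haπ' r]
              exact ha'0 (π' r)
            exact neg_ne_zero.mpr h9
          · exact ⟨π' r, by rw [he]; exact neg_mem (hb' r)⟩
      · intro d _ d' _ heq
        exact add_left_cancel heq
      · intro z hz
        rw [Finset.mem_filter] at hz
        obtain ⟨hzB, hz2, hz3⟩ := hz
        simp only [hadj] at hz2 hz3
        obtain ⟨hz0, r, hzr⟩ := hz2
        obtain ⟨hz0m, rm, hzrm⟩ := hz3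
        obtain ⟨h1, h2⟩ := hz_rev n z r hzB hzr hz0
        have hd1 : z - a n ∈ U r := hzr
        have hd2 : h - (z - a n) ∈ U rm := by
          have he : h - (z - a n) = -(z - a m) := by rw [hh]; abel
          rw [he]
          exact neg_mem hzrm
        obtain ⟨hda, _⟩ := hchar' (z - a n) r rm hd1 hd2
        refine ⟨z - a n, ?_, by abel⟩
        simp only [Finset.mem_image, Finset.mem_sdiff, Finset.mem_univ, true_and,
          Finset.mem_insert, Finset.mem_singleton]
        exact ⟨r, by push_neg; exact ⟨h1, h2⟩, hda.symm⟩
    rw [← hbij, Finset.card_image_of_injective _ ha'inj]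
    rw [Finset.card_sdiff_of_subset (Finset.subset_univ _), Finset.card_univ]
    rw [Finset.card_insert_of_notMem (by simp [Ne.symm (hπ n)]), Finset.card_singleton]
    simp
  -- degree sums
  set deg : N → ℕ := fun z => (Finset.univ.filter (fun n => adj z n)).card with hdeg
  have H5 : ∑ z ∈ B, deg z = (t + 1) * ((t - 1) * s) := by
    have h1 : ∀ z, deg z = ∑ n : Fin (t + 1), if adj z n then 1 else 0 := by
      intro z; simp only [hdeg]; rw [Finset.card_filter]
    calc ∑ z ∈ B, deg z = ∑ z ∈ B, ∑ n : Fin (t + 1), if adj z n then 1 else 0 := by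
          exact Finset.sum_congr rfl (fun z _ => h1 z)
      _ = ∑ n : Fin (t + 1), ∑ z ∈ B, if adj z n then 1 else 0 := Finset.sum_comm
      _ = ∑ n : Fin (t + 1), (B.filter (fun z => adj z n)).card := by
          exact Finset.sum_congr rfl (fun n _ => (Finset.card_filter _ _).symm)
      _ = ∑ n : Fin (t + 1), (t - 1) * s := Finset.sum_congr rfl (fun n _ => H3 n)
      _ = (t + 1) * ((t - 1) * s) := by
          rw [Finset.sum_const, Finset.card_univ, Fintype.card_fin, smul_eq_mul]
  have H6 : ∑ z ∈ B, deg z * deg z =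
      (t + 1) * ((t - 1) * s) + (t + 1) * (t * (t - 1)) := by
    have h1 : ∀ z, deg z * deg z = ∑ n : Fin (t + 1), ∑ m : Fin (t + 1),
        if adj z n ∧ adj z m then 1 else 0 := by
      intro z
      have hite : ∀ (P Q : Prop) [Decidable P] [Decidable Q] [Decidable (P ∧ Q)],
          ((if P then (1 : ℕ) else 0) * (if Q then 1 else 0)) =
            if P ∧ Q then 1 else 0 := by
        intro P Q _ _ _
        by_cases hP : P <;> by_cases hQ : Q <;> simp [hP, hQ]
      simp only [hdeg]
      rw [Finset.card_filter, Finset.sum_mul_sum]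
      exact Finset.sum_congr rfl (fun n _ => Finset.sum_congr rfl
        (fun m _ => hite _ _))
    calc ∑ z ∈ B, deg z * deg z
        = ∑ z ∈ B, ∑ n : Fin (t + 1), ∑ m : Fin (t + 1),
            if adj z n ∧ adj z m then 1 else 0 := Finset.sum_congr rfl (fun z _ => h1 z)
      _ = ∑ n : Fin (t + 1), ∑ z ∈ B, ∑ m : Fin (t + 1),
            if adj z n ∧ adj z m then 1 else 0 := Finset.sum_comm
      _ = ∑ n : Fin (t + 1), ∑ m : Fin (t + 1), ∑ z ∈ B,
            if adj z n ∧ adj z m then 1 else 0 :=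
          Finset.sum_congr rfl (fun n _ => Finset.sum_comm)
      _ = ∑ n : Fin (t + 1), ∑ m : Fin (t + 1),
            (B.filter (fun z => adj z n ∧ adj z m)).card :=
          Finset.sum_congr rfl (fun n _ => Finset.sum_congr rfl
            (fun m _ => (Finset.card_filter _ _).symm))
      _ = ∑ n : Fin (t + 1), ((t - 1) * s + ∑ m ∈ Finset.univ.erase n,
            (B.filter (fun z => adj z n ∧ adj z m)).card) := by
          refine Finset.sum_congr rfl (fun n _ => ?_)
          rw [← Finset.add_sum_erase _ _ (Finset.mem_univ n)]
          congr 1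
          have hset : (B.filter (fun z => adj z n ∧ adj z n)) =
              B.filter (fun z => adj z n) := by
            ext z
            simp [and_self]
          rw [hset, H3 n]
      _ = ∑ n : Fin (t + 1), ((t - 1) * s + t * (t - 1)) := by
          refine Finset.sum_congr rfl (fun n _ => ?_)
          congr 1
          rw [Finset.sum_congr rfl (fun m hm => H4 n m
            (fun h => (Finset.mem_erase.mp hm).1 h.symm))]
          rw [Finset.sum_const, smul_eq_mul]
          congr 1
          rw [Finset.card_erase_of_mem (Finset.mem_univ n), Finset.card_univ,
            Fintype.card_fin]
          omega
      _ = (t + 1) * ((t - 1) * s) + (t + 1) * (t * (t - 1)) := by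
          rw [Finset.sum_const, Finset.card_univ, Fintype.card_fin, smul_eq_mul]
          ring
  -- cardinality of B
  have hBc : B.card + (2 * ((t + 1) * s + 1)) = (s + 1) * (s * t + 1) + (t + 1) := by
    have hDD : Dfin U ∩ (Dfin U).image (fun z => g + z) = Finset.univ.image a := by
      ext z
      simp only [Finset.mem_inter, mem_Dfin, Finset.mem_image, Finset.mem_univ, true_and]
      constructor
      · rintro ⟨⟨r, hr⟩, d, ⟨r', hd⟩, rfl⟩
        have h1 : g + d ∈ U r := hr
        have h2 : g - (g + d) ∈ U r' := by simpa using neg_mem hd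
        obtain ⟨he, _⟩ := hchar (g + d) r r' h1 h2
        exact ⟨r, he.symm⟩
      · rintro ⟨n, rfl⟩
        refine ⟨⟨n, ha n⟩, a n - g, ⟨π n, ?_⟩, by abel⟩
        simpa using neg_mem (hb n)
    have himg : ((Dfin U).image (fun z => g + z)).card = (t + 1) * s + 1 := by
      rw [Finset.card_image_of_injective _ (add_right_injective g),
        card_Dfin ht htrip hcard]
    have hia : (Finset.univ.image a).card = t + 1 := by
      rw [Finset.card_image_of_injective _ hainj, Finset.card_univ, Fintype.card_fin]
    have hU2 := Finset.card_union_add_card_inter (Dfin U) ((Dfin U).image (fun z => g + z))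
    rw [hDD, hia, himg, card_Dfin ht htrip hcard] at hU2
    have hsd : B.card = Fintype.card N -
        ((Dfin U) ∪ (Dfin U).image (fun z => g + z)).card := by
      rw [hB, Finset.card_sdiff_of_subset (Finset.subset_univ _), Finset.card_univ]
    have hle : ((Dfin U) ∪ (Dfin U).image (fun z => g + z)).card ≤ Fintype.card N := by
      rw [← Finset.card_univ]
      exact Finset.card_le_card (Finset.subset_univ _)
    rw [card_N (by omega) ht htrip hcov hcard] at hsd hle
    omega
  -- Cauchy-Schwarz and the final inequality
  have hCS := sq_sum_le_card_mul_sum_sq (s := B) (f := fun z => ((deg z : ℤ)))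
  have hcast1 : ∑ z ∈ B, ((deg z : ℤ)) = ((t + 1) * ((t - 1) * s) : ℕ) := by
    rw [← Nat.cast_sum, H5]
  have hcast2 : ∑ z ∈ B, ((deg z : ℤ)) ^ 2 =
      (((t + 1) * ((t - 1) * s) + (t + 1) * (t * (t - 1)) : ℕ) : ℤ) := by
    rw [← H6, Nat.cast_sum]
    refine Finset.sum_congr rfl (fun z _ => ?_)
    push_cast
    ring
  rw [hcast1, hcast2] at hCS
  -- now pure arithmetic
  by_contra hcon
  push_neg at hcon
  have ht1 : (1 : ℤ) ≤ (t : ℤ) - 1 := by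
    have : (2 : ℤ) ≤ (t : ℤ) := by exact_mod_cast ht
    omega
  have hs1 : (2 : ℤ) ≤ (s : ℤ) := by exact_mod_cast hs
  have hsc : (s : ℤ) * s + 1 ≤ (t : ℤ) := by exact_mod_cast hcon
  have hBcz : (B.card : ℤ) = (s + 1) * (s * t + 1) + (t + 1) - 2 * ((t + 1) * s + 1) := by
    have := congrArg (fun x : ℕ => (x : ℤ)) hBc
    push_cast at this
    linarith
  have htm : ((t - 1 : ℕ) : ℤ) = (t : ℤ) - 1 := by
    have : 1 ≤ t := by omega
    push_cast [Nat.cast_sub this]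
    ring
  push_cast [htm] at hCS
  have hpos : (0 : ℤ) < ((t : ℤ) + 1) * ((t : ℤ) - 1) := by nlinarith
  have e1 : (((t : ℤ) + 1) * (((t : ℤ) - 1) * (s : ℤ))) ^ 2 =
      (((t : ℤ) + 1) * ((t : ℤ) - 1)) * ((((t : ℤ) + 1) * ((t : ℤ) - 1)) * (s : ℤ) ^ 2) := by
    ring
  have e2 : (B.card : ℤ) * (((t : ℤ) + 1) * (((t : ℤ) - 1) * (s : ℤ)) +
      ((t : ℤ) + 1) * ((t : ℤ) * ((t : ℤ) - 1))) =
      (((t : ℤ) + 1) * ((t : ℤ) - 1)) * ((B.card : ℤ) * ((s : ℤ) + (t : ℤ))) := by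
    ring
  rw [e1, e2] at hCS
  have h3 := le_of_mul_le_mul_left hCS hpos
  have hBval : (B.card : ℤ) = (s:ℤ)*(s:ℤ)*(t:ℤ) - (s:ℤ)*(t:ℤ) - (s:ℤ) + (t:ℤ) := by
    rw [hBcz]; ring
  rw [hBval] at h3
  have hid : ((s:ℤ)*(s:ℤ)*(t:ℤ) - (s:ℤ)*(t:ℤ) - (s:ℤ) + (t:ℤ)) * ((s:ℤ) + (t:ℤ)) -
      (((t : ℤ) + 1) * ((t : ℤ) - 1)) * ((s:ℤ)^2) =
      (t:ℤ) * ((s:ℤ) - 1) * ((s:ℤ)*(s:ℤ) - (t:ℤ)) := by ring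
  have h6 : (0:ℤ) ≤ (t:ℤ) * ((s:ℤ) - 1) * ((s:ℤ)*(s:ℤ) - (t:ℤ)) := by linarith
  have h7 : (1:ℤ) ≤ (t:ℤ) * ((s:ℤ) - 1) := by nlinarith
  have h8 : (s:ℤ)*(s:ℤ) - (t:ℤ) ≤ -1 := by linarith
  have h9 := mul_le_mul_of_nonneg_left h8 (by linarith : (0:ℤ) ≤ (t:ℤ) * ((s:ℤ) - 1))
  linarith

lemma fam_main (hs : 2 ≤ s) (ht : 2 ≤ t) {U : Fin (t + 1) → AddSubgroup N}
    (htrip : ∀ i j k : Fin (t + 1), j ≠ i → k ≠ i → j ≠ k →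
      ∀ u ∈ U j, ∀ v ∈ U k, u + v ∈ U i → u = 0)
    (hcov : ∀ i : Fin (t + 1), ∀ g : N, g ∉ U i → ∃ k, k ≠ i ∧ ∃ u ∈ U i, g - u ∈ U k)
    (hcard : ∀ i, Nat.card (U i) = s + 1) :
    (∀ g : N, g + g = 0) ∧ t = s + 2 ∧
      (∀ i j k : Fin (t + 1), i ≠ j → i ≠ k → j ≠ k → U i ⊔ U j ⊔ U k = ⊤) ∧
      Function.Injective U := by
  classical
  -- parity of t
  have hparity : 2 ∣ t + 1 := by
    obtain ⟨g, hg⟩ := exists_outside (by omega) ht htrip hcov hcard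
    obtain ⟨a, π, ha, hπ, hb, ha0, hππ, haπ, hainj, hchar⟩ :=
      GQFam.fam_rep ht htrip hcov g hg
    have h2 := involution_even Finset.univ π (fun i _ => Finset.mem_univ _)
      (fun i _ => hππ i) (fun i _ => hπ i)
    simpa [Finset.card_univ] using h2
  set p := (s + 1).minFac with hpdef
  have hp : p.Prime := Nat.minFac_prime (by omega)
  have hpdvd : p ∣ s + 1 := Nat.minFac_dvd _
  -- main quotient argument, for each i
  have key : ∀ i : Fin (t + 1),
      (∀ r : ℕ, r.Prime → r ∣ s + 1 → r = p) ∧ (∀ g : N, p • g ∈ U i) := by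
    intro i
    set f := QuotientAddGroup.mk' (U i) with hf
    have hker : ∀ x : N, f x = 0 ↔ x ∈ U i := by
      intro x
      rw [← AddMonoidHom.mem_ker, QuotientAddGroup.ker_mk']
    set V : Fin (t + 1) → AddSubgroup (N ⧸ U i) := fun k => (U k).map f with hV
    have hVpair : ∀ k l : Fin (t + 1), k ≠ i → l ≠ i → k ≠ l →
        ∀ x, x ∈ V k → x ∈ V l → x = 0 := by
      intro k l hki hli hkl x hxk hxl
      obtain ⟨u, hu, rfl⟩ := AddSubgroup.mem_map.mp hxk
      obtain ⟨u', hu', heq⟩ := AddSubgroup.mem_map.mp hxl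
      have h1 : f (u' - u) = 0 := by rw [map_sub, heq, sub_self]
      have h2 : u' + -u ∈ U i := by
        have h2' := (hker _).mp h1
        rwa [sub_eq_add_neg] at h2'
      have h4 := htrip i l k hli hki (fun h => hkl h.symm) u' hu' (-u) (neg_mem hu) h2
      rw [← heq, h4, map_zero]
    have hVcov : ∀ x : N ⧸ U i, ∃ k, k ≠ i ∧ x ∈ V k := by
      intro x
      induction x using QuotientAddGroup.induction_on with
      | H g =>
        by_cases hgi : g ∈ U i
        · obtain ⟨k, hki, _⟩ := fam_third ht i i
          refine ⟨k, hki, ?_⟩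
          have : f g = 0 := (hker g).mpr hgi
          rw [show QuotientAddGroup.mk g = f g from rfl, this]
          exact zero_mem _
        · obtain ⟨k, hki, u, hu, hres⟩ := hcov i g hgi
          refine ⟨k, hki, ?_⟩
          have h1 : f (g - u) = f g := by
            rw [map_sub, (hker u).mpr hu, sub_zero]
          rw [show QuotientAddGroup.mk g = f g from rfl, ← h1]
          exact AddSubgroup.mem_map.mpr ⟨g - u, hres, rfl⟩
    have horder : ∀ k : Fin (t + 1), k ≠ i → ∀ r : ℕ, r.Prime → r ∣ s + 1 →
        ∃ x : N ⧸ U i, x ∈ V k ∧ addOrderOf x = r := by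
      intro k hki r hr hrdvd
      haveI : Fact r.Prime := ⟨hr⟩
      haveI : Fintype (U k) := Fintype.ofFinite _
      have hcardk : Fintype.card (U k) = s + 1 := by
        rw [← Nat.card_eq_fintype_card, hcard]
      obtain ⟨x', hx'⟩ := exists_prime_addOrderOf_dvd_card r
        (by rw [hcardk]; exact hrdvd)
      set ff : (U k) →+ N ⧸ U i := f.comp (U k).subtype with hff
      have hffinj : Function.Injective ff := by
        intro u u' heq
        have h1 : f ((u : N) - (u' : N)) = 0 := by
          rw [map_sub]
          simp only [hff, AddMonoidHom.coe_comp, Function.comp_apply,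
            AddSubgroup.coe_subtype] at heq
          rw [heq, sub_self]
        have h2 : (u : N) - (u' : N) ∈ U i := (hker _).mp h1
        have h3 : (u : N) - (u' : N) ∈ U k := sub_mem u.2 u'.2
        have h4 := fam_pair ht htrip i k (fun h => hki h.symm) _ h2 h3
        have h5 : (u : N) = u' := by rwa [sub_eq_zero] at h4
        exact Subtype.ext h5
      refine ⟨ff x', ?_, ?_⟩
      · exact AddSubgroup.mem_map.mpr ⟨x', x'.2, rfl⟩
      · rw [addOrderOf_injective ff hffinj x', hx']
    constructor
    · -- unique prime
      intro r hr hrdvd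
      by_contra hrp
      obtain ⟨k₁, hk₁i, _⟩ := fam_third ht i i
      obtain ⟨k₂, hk₂i, hk₂k₁⟩ := fam_third ht i k₁
      obtain ⟨x, hxV, hxo⟩ := horder k₁ hk₁i r hr hrdvd
      obtain ⟨y, hyV, hyo⟩ := horder k₂ hk₂i p hp hpdvd
      have hx0 : x ≠ 0 := by
        intro h
        rw [h, addOrderOf_zero] at hxo
        exact hr.one_lt.ne hxo
      have hy0 : y ≠ 0 := by
        intro h
        rw [h, addOrderOf_zero] at hyo
        exact hp.one_lt.ne hyo
      obtain ⟨m, hmi, hzm⟩ := hVcov (x + y)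
      have hmk₁ : m ≠ k₁ := by
        rintro rfl
        have h1 : y ∈ V m := by simpa using sub_mem hzm hxV
        exact hy0 (hVpair m k₂ hmi hk₂i (fun h => hk₂k₁ h.symm) y h1 hyV)
      have hmk₂ : m ≠ k₂ := by
        rintro rfl
        have h1 : x ∈ V m := by simpa using sub_mem hzm hyV
        exact hx0 (hVpair m k₁ hmi hk₁i (fun h => hmk₁ h) x h1 hxV)
      have hrx : r • x = 0 := by
        rw [← hxo]; exact addOrderOf_nsmul_eq_zero x
      have hry : r • y ≠ 0 := by
        intro h
        have h1 : addOrderOf y ∣ r := addOrderOf_dvd_of_nsmul_eq_zero h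
        rw [hyo] at h1
        exact hrp ((Nat.prime_dvd_prime_iff_eq hp hr).mp h1).symm
      have h2 : r • (x + y) = r • y := by rw [smul_add, hrx, zero_add]
      have h3 : r • (x + y) ∈ V m := AddSubgroup.nsmul_mem _ hzm r
      have h4 : r • y ∈ V k₂ := AddSubgroup.nsmul_mem _ hyV r
      rw [h2] at h3
      exact hry (hVpair m k₂ hmi hk₂i hmk₂ _ h3 h4)
    · -- p-torsion
      have hQtor : ∀ x : N ⧸ U i, p • x = 0 := by
        intro x
        by_contra hpx
        have hx0 : x ≠ 0 := by rintro rfl; exact hpx (smul_zero _)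
        obtain ⟨k, hki, hxk⟩ := hVcov x
        obtain ⟨k', hk'i, hk'k⟩ := fam_third ht i k
        obtain ⟨y, hyV, hyo⟩ := horder k' hk'i p hp hpdvd
        have hy0 : y ≠ 0 := by
          intro h
          rw [h, addOrderOf_zero] at hyo
          exact hp.one_lt.ne hyo
        obtain ⟨m, hmi, hzm⟩ := hVcov (x + y)
        have hmk : m ≠ k := by
          rintro rfl
          have h1 : y ∈ V m := by simpa using sub_mem hzm hxk
          exact hy0 (hVpair m k' hmi hk'i (fun h => hk'k h.symm) y h1 hyV)
        have hmk' : m ≠ k' := by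
          rintro rfl
          have h1 : x ∈ V m := by simpa using sub_mem hzm hyV
          exact hx0 (hVpair m k hmi hki hmk x h1 hxk)
        have hpy : p • y = 0 := by rw [← hyo]; exact addOrderOf_nsmul_eq_zero y
        have h2 : p • (x + y) = p • x := by rw [smul_add, hpy, add_zero]
        have h3 : p • (x + y) ∈ V m := AddSubgroup.nsmul_mem _ hzm p
        have h4 : p • x ∈ V k := AddSubgroup.nsmul_mem _ hxk p
        rw [h2] at h3
        exact hpx (hVpair m k hmi hki hmk _ h3 h4)
      intro g
      have h1 : f (p • g) = 0 := by
        rw [map_nsmul]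
        exact hQtor (f g)
      exact (hker _).mp h1
  have i0 : Fin (t + 1) := ⟨0, by omega⟩
  have i1 : Fin (t + 1) := ⟨1, by omega⟩
  have hA : ∀ r : ℕ, r.Prime → r ∣ s + 1 → r = p := (key i0).1
  have hexp : ∀ g : N, p • g = 0 := by
    intro g
    have hne : (⟨0, by omega⟩ : Fin (t + 1)) ≠ ⟨1, by omega⟩ := by
      intro h
      have h0 := congrArg Fin.val h
      simp at h0
    exact fam_pair ht htrip _ _ hne _ ((key ⟨0, by omega⟩).2 g) ((key ⟨1, by omega⟩).2 g)
  -- prime power forms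
  obtain ⟨b, hb⟩ : ∃ b, s + 1 = p ^ b :=
    ⟨_, Nat.eq_prime_pow_of_unique_prime_dvd (by omega) (fun hq hd => hA _ hq hd)⟩
  have hNcard : Fintype.card N = (s + 1) * (s * t + 1) :=
    card_N (by omega) ht htrip hcov hcard
  obtain ⟨w, hw⟩ : ∃ w, s * t + 1 = p ^ w := by
    refine ⟨_, Nat.eq_prime_pow_of_unique_prime_dvd (by omega)
      (fun {r} hq hd => ?_)⟩
    haveI : Fact r.Prime := ⟨hq⟩
    have hdvdN : r ∣ Fintype.card N := by
      rw [hNcard]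
      exact hd.mul_left _
    obtain ⟨x, hx⟩ := exists_prime_addOrderOf_dvd_card r hdvdN
    have h1 : addOrderOf x ∣ p := addOrderOf_dvd_of_nsmul_eq_zero (hexp x)
    rw [hx] at h1
    exact (Nat.prime_dvd_prime_iff_eq hq hp).mp h1
  have hb1 : 1 ≤ b := by
    rcases Nat.eq_zero_or_pos b with rfl | h
    · simp at hb; omega
    · exact h
  have hdvdbw : b ∣ w := by
    apply dvd_of_pow_pred_dvd hp.two_le hb1
    have h1 : p ^ b - 1 = s := by omega
    have h2 : p ^ w - 1 = s * t := by omega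
    rw [h1, h2]
    exact dvd_mul_right s t
  have hblt : b < w := by
    have h1 : p ^ b < p ^ w := by
      have h0 : s + 1 < s * t + 1 := by nlinarith
      calc p ^ b = s + 1 := hb.symm
        _ < s * t + 1 := h0
        _ = p ^ w := hw
    exact (Nat.pow_lt_pow_iff_right hp.one_lt).mp h1
  have ht2 : t ≤ s * s := higman hs ht htrip hcov hcard
  have hwlt : w < 3 * b := by
    have h1 : p ^ w < p ^ (3 * b) := by
      have h2 : p ^ (3 * b) = (s + 1) ^ 3 := by
        rw [hb, ← pow_mul, mul_comm]
      have h3 : s * t + 1 < (s + 1) ^ 3 := by nlinarith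
      calc p ^ w = s * t + 1 := hw.symm
        _ < (s + 1) ^ 3 := h3
        _ = p ^ (3 * b) := h2.symm
    exact (Nat.pow_lt_pow_iff_right hp.one_lt).mp h1
  have hw2b : w = 2 * b := by
    obtain ⟨c, rfl⟩ := hdvdbw
    have hc2 : 2 ≤ c := by
      rcases Nat.lt_or_ge c 2 with h | h
      · interval_cases c <;> omega
      · exact h
    have hc3 : c < 3 := by
      by_contra h
      push_neg at h
      have : 3 * b ≤ b * c := by nlinarith
      omega
    have : c = 2 := by omega
    rw [this]; ring
  have hts : t = s + 2 := by
    have h1 : s * t + 1 = (s + 1) ^ 2 := by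
      rw [hw, hw2b, two_mul, pow_add, ← hb]
      ring
    have h1' : s * t + 1 = s * s + 2 * s + 1 := by rw [h1]; ring
    have h2 : s * t = s * (s + 2) := by
      have h3 : s * (s + 2) = s * s + 2 * s := by ring
      omega
    exact Nat.eq_of_mul_eq_mul_left (by omega) h2
  have hp2 : p = 2 := (hA 2 Nat.prime_two (by omega)).symm
  have hexp2 : ∀ g : N, g + g = 0 := by
    intro g
    have h1 := hexp g
    rw [hp2, two_nsmul] at h1
    exact h1
  -- injectivity
  have hUinj : Function.Injective U := by
    intro i j hij
    by_contra hne
    have hEr : (Er U i).Nonempty := by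
      rw [← Finset.card_pos, card_Er hcard]
      omega
    obtain ⟨u, hu⟩ := hEr
    rw [mem_Er] at hu
    exact hu.1 (fam_pair ht htrip i j hne u hu.2 (hij ▸ hu.2))
  -- triples span
  have hsup : ∀ i j k : Fin (t + 1), i ≠ j → i ≠ k → j ≠ k →
      U i ⊔ U j ⊔ U k = ⊤ := by
    intro i j k hij hik hjk
    have hcard3 : ((Finset.univ.filter (fun z : N => z ∈ U i ⊔ U j ⊔ U k))).card =
        (s + 1) * ((s + 1) * (s + 1)) := by
      have hbij : ((Ufin U i) ×ˢ (Ufin U j) ×ˢ (Ufin U k)).card =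
          ((Finset.univ.filter (fun z : N => z ∈ U i ⊔ U j ⊔ U k))).card := by
        apply Finset.card_bij (fun pq _ => pq.1 + pq.2.1 + pq.2.2)
        · rintro ⟨u, v, wv⟩ hp2
          simp only [Finset.mem_product, mem_Ufin] at hp2
          rw [Finset.mem_filter]
          refine ⟨Finset.mem_univ _, ?_⟩
          exact add_mem (AddSubgroup.mem_sup_left
            (add_mem (AddSubgroup.mem_sup_left hp2.1) (AddSubgroup.mem_sup_right hp2.2.1)))
            (AddSubgroup.mem_sup_right hp2.2.2)
        · rintro ⟨u, v, wv⟩ hp2 ⟨u', v', wv'⟩ hp2' heq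
          simp only [Finset.mem_product, mem_Ufin] at hp2 hp2'
          obtain ⟨hu, hv, hw⟩ := hp2
          obtain ⟨hu', hv', hw'⟩ := hp2'
          have h1 : (v - v') + (wv - wv') ∈ U i := by
            have he : (v - v') + (wv - wv') = (u' - u) := by
              have h0 : u + v + wv = u' + v' + wv' := heq
              linear_combination (norm := abel) h0
            rw [he]
            exact sub_mem hu' hu
          have h2 := htrip i j k (fun h => hij h.symm) (fun h => hik h.symm) hjk
            (v - v') (sub_mem hv hv') (wv - wv') (sub_mem hw hw') h1
          have hveq : v = v' := by rwa [sub_eq_zero] at h2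
          have h3 : wv - wv' ∈ U i := by rwa [h2, zero_add] at h1
          have h4 := fam_pair ht htrip i k hik (wv - wv') h3 (sub_mem hw hw')
          have hweq : wv = wv' := by rwa [sub_eq_zero] at h4
          have hueq : u = u' := by
            have h5 : u + v + wv = u' + v' + wv' := heq
            rw [hveq, hweq] at h5
            exact add_right_cancel (add_right_cancel h5)
          simp only [Prod.mk.injEq]
          exact ⟨hueq, hveq, hweq⟩
        · intro z hz
          rw [Finset.mem_filter] at hz
          obtain ⟨yw, hyw, wv, hwv, heq⟩ := AddSubgroup.mem_sup.mp hz.2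
          obtain ⟨u, hu, v, hv, heq2⟩ := AddSubgroup.mem_sup.mp hyw
          refine ⟨(u, v, wv), ?_, by rw [← heq, ← heq2]⟩
          simp only [Finset.mem_product, mem_Ufin]
          exact ⟨hu, hv, hwv⟩
      rw [← hbij, Finset.card_product, Finset.card_product,
        card_Ufin hcard, card_Ufin hcard, card_Ufin hcard]
    apply AddSubgroup.eq_top_of_card_eq
    have h1 : Nat.card ↥(U i ⊔ U j ⊔ U k) =
        ((Finset.univ.filter (fun z : N => z ∈ U i ⊔ U j ⊔ U k))).card := by
      have h2 : (((Finset.univ.filter (fun z : N => z ∈ U i ⊔ U j ⊔ U k)) : Finset N) :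
          Set N) = ((U i ⊔ U j ⊔ U k : AddSubgroup N) : Set N) := by
        ext z; simp
      calc Nat.card ↥(U i ⊔ U j ⊔ U k)
          = ((U i ⊔ U j ⊔ U k : AddSubgroup N) : Set N).ncard :=
            Nat.card_coe_set_eq _
        _ = (((Finset.univ.filter (fun z : N => z ∈ U i ⊔ U j ⊔ U k)) : Finset N) :
            Set N).ncard := by rw [h2]
        _ = _ := Set.ncard_coe_finset _
    rw [h1, hcard3, Nat.card_eq_fintype_card, hNcard, hts]
    ring
  exact ⟨hexp2, hts, hsup, hUinj⟩

end Counting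
end GQFam

/-- **Corollary.** With notation as in the previous proposition (thick finite generalised
quadrangle with a point-regular abelian automorphism group `N`, lines `ℓ 0, …, ℓ t` through
a fixed point `x`, setwise stabilisers `U i`, and `K` the subring of `End(N)` of
endomorphisms preserving every `U i`): `|K|` is a power of `2`, the `U i` are pairwise
distinct, `t = s + 2`, and `U i ⊔ U j ⊔ U k = ⊤` for pairwise distinct `i, j, k`
(so `{U 0, …, U t}` is a pseudo-hyperoval of the `K`-vector space `N`). -/
theorem pseudo_hyperoval_from_point_regular_abelian
    {P L N : Type*} [Fintype P] [Fintype L] [AddCommGroup N]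
    [AddAction N P] [AddAction N L]
    {I : P → L → Prop} {s t : ℕ}
    (hs : 2 ≤ s) (ht : 2 ≤ t)
    (hline : ∀ ℓ : L, {y : P | I y ℓ}.ncard = s + 1)
    (hpoint : ∀ y : P, {ℓ : L | I y ℓ}.ncard = t + 1)
    (hplinear : ∀ y z : P, y ≠ z → {ℓ : L | I y ℓ ∧ I z ℓ}.Subsingleton)
    (hGQ : ∀ (y : P) (ℓ : L), ¬ I y ℓ →
      ∃! zm : P × L, I y zm.2 ∧ I zm.1 zm.2 ∧ I zm.1 ℓ)
    (hauto : ∀ (g : N) (y : P) (ℓ : L), I y ℓ ↔ I (g +ᵥ y) (g +ᵥ ℓ))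
    (hreg : ∀ y z : P, ∃! g : N, g +ᵥ y = z)
    (x : P) (ℓ : Fin (t + 1) → L)
    (hℓinj : Function.Injective ℓ)
    (hℓinc : ∀ i, I x (ℓ i))
    (hℓall : ∀ m : L, I x m → ∃ i, ℓ i = m)
    (U : Fin (t + 1) → AddSubgroup N)
    (hU : ∀ i, U i = AddAction.stabilizer N (ℓ i))
    (K : Subring (AddMonoid.End N))
    (hK : ∀ φ : AddMonoid.End N, φ ∈ K ↔ ∀ i, ∀ u ∈ U i, φ u ∈ U i) :
    (∃ m : ℕ, Nat.card K = 2 ^ m) ∧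
    Function.Injective U ∧
    t = s + 2 ∧
    (∀ i j k : Fin (t + 1), i ≠ j → i ≠ k → j ≠ k →
      U i ⊔ U j ⊔ U k = ⊤) := by
  classical
  -- the orbit map at x is a bijection
  have hinj : Function.Injective (fun g : N => g +ᵥ x) := by
    intro g g' h
    exact ((hreg x (g' +ᵥ x)).unique h rfl)
  have hsurj : Function.Surjective (fun g : N => g +ᵥ x) := fun z => (hreg x z).exists
  haveI hfinN : Finite N := Finite.of_injective _ hinj
  haveI : Fintype N := Fintype.ofFinite N
  have hvadd_ne : ∀ {g g' : N}, g ≠ g' → g +ᵥ x ≠ g' +ᵥ x := by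
    intro g g' hgg h
    exact hgg (hinj h)
  -- stabilizer membership
  have hstab : ∀ (i : Fin (t + 1)) (u : N), u ∈ U i ↔ u +ᵥ ℓ i = ℓ i := by
    intro i u
    rw [hU i]
    exact AddAction.mem_stabilizer_iff
  -- unique line through two points
  have huniq : ∀ (p q : P) (m m' : L), p ≠ q → I p m → I q m → I p m' → I q m' →
      m = m' := by
    intro p q m m' hpq h1 h2 h3 h4
    exact hplinear p q hpq ⟨h1, h2⟩ ⟨h3, h4⟩
  -- no triangles
  have htri : ∀ (p q r : P) (m₁ m₂ m₃ : L), p ≠ q → q ≠ r → p ≠ r →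
      m₁ ≠ m₂ → m₁ ≠ m₃ → m₂ ≠ m₃ →
      I p m₁ → I q m₁ → I q m₂ → I r m₂ → I p m₃ → I r m₃ → False := by
    intro p q r m₁ m₂ m₃ hpq hqr hpr h12 h13 h23 hp1 hq1 hq2 hr2 hp3 hr3
    have hpm2 : ¬ I p m₂ := by
      intro h
      exact h12 (huniq p q m₁ m₂ hpq hp1 hq1 h hq2)
    obtain ⟨zm, _, hun⟩ := hGQ p m₂ hpm2
    have e1 := hun (q, m₁) ⟨hp1, hq1, hq2⟩
    have e2 := hun (r, m₃) ⟨hp3, hr3, hr2⟩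
    have e3 : (q, m₁) = (r, m₃) := e1.trans e2.symm
    exact hqr (congrArg Prod.fst e3)
  -- every line through a translate of x is a translate of a line through x
  have hlinedec : ∀ (g : N) (m : L), I (g +ᵥ x) m → ∃ k, m = g +ᵥ ℓ k := by
    intro g m h
    have h2 : I x ((-g) +ᵥ m) := by
      have h3 := (hauto (-g) (g +ᵥ x) m).mp h
      rwa [neg_vadd_vadd] at h3
    obtain ⟨k, hk⟩ := hℓall _ h2
    refine ⟨k, ?_⟩
    rw [hk, vadd_neg_vadd]
  -- stabilizer elements give points of the line
  have hUT : ∀ (i : Fin (t + 1)) (u : N), u ∈ U i → I (u +ᵥ x) (ℓ i) := by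
    intro i u hu
    have h1 : u +ᵥ ℓ i = ℓ i := (hstab i u).mp hu
    have h2 := (hauto u x (ℓ i)).mp (hℓinc i)
    rwa [h1] at h2
  -- Ghinelli's lemma: the stabilizer is transitive on the points of the line
  have hGhin : ∀ (i : Fin (t + 1)) (c : N), I (c +ᵥ x) (ℓ i) → c +ᵥ ℓ i = ℓ i := by
    intro i c hc
    by_contra hbad
    have hc0 : c ≠ 0 := by rintro rfl; exact hbad (zero_vadd _ _)
    -- (a) any good element is zero
    have hgood : ∀ d : N, I (d +ᵥ x) (ℓ i) → d +ᵥ ℓ i = ℓ i → d = 0 := by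
      intro d hd hstabd
      by_contra hd0
      have hp1 : I ((c + d) +ᵥ x) (ℓ i) := by
        have h2 := (hauto d (c +ᵥ x) (ℓ i)).mp hc
        rwa [vadd_vadd, hstabd, add_comm d c] at h2
      have hp2 : I ((c + d) +ᵥ x) (c +ᵥ ℓ i) := by
        have h2 := (hauto c (d +ᵥ x) (ℓ i)).mp hd
        rwa [vadd_vadd] at h2
      have hp3 : I (c +ᵥ x) (c +ᵥ ℓ i) := (hauto c x (ℓ i)).mp (hℓinc i)
      have hne : (c +ᵥ x) ≠ ((c + d) +ᵥ x) :=
        hvadd_ne (fun h => hd0 (left_eq_add.mp h))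
      exact hbad ((huniq (c +ᵥ x) ((c + d) +ᵥ x) (ℓ i) (c +ᵥ ℓ i) hne hc hp1 hp3 hp2).symm)
    -- the stabilizer is trivial
    have hstab0 : ∀ u : N, u ∈ U i → u = 0 := fun u hu =>
      hgood u (hUT i u hu) ((hstab i u).mp hu)
    -- -c is not on ℓ i
    have hnegc : ¬ I ((-c) +ᵥ x) (ℓ i) := by
      intro h
      have hx2 : I x ((-c) +ᵥ ℓ i) := by
        have h3 := (hauto (-c) (c +ᵥ x) (ℓ i)).mp hc
        rwa [neg_vadd_vadd] at h3
      have hm2 : I ((-c) +ᵥ x) ((-c) +ᵥ ℓ i) := (hauto (-c) x (ℓ i)).mp (hℓinc i)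
      have hnex : x ≠ (-c) +ᵥ x := by
        have h4 : (0 : N) +ᵥ x ≠ (-c) +ᵥ x := hvadd_ne (fun h => hc0 (neg_eq_zero.mp h.symm))
        rwa [zero_vadd] at h4
      have heq := huniq x ((-c) +ᵥ x) (ℓ i) ((-c) +ᵥ ℓ i) hnex (hℓinc i) h hx2 hm2
      have h5 : -c ∈ U i := (hstab i (-c)).mpr heq.symm
      exact hc0 (neg_eq_zero.mp (hstab0 _ h5))
    -- a third point on ℓ i
    obtain ⟨d, hd, hd0, hdc⟩ : ∃ d : N, I (d +ᵥ x) (ℓ i) ∧ d ≠ 0 ∧ d ≠ c := by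
      by_contra hcon
      push_neg at hcon
      have hsub : {y : P | I y (ℓ i)} ⊆ {x, c +ᵥ x} := by
        intro y hy
        obtain ⟨d, rfl⟩ := hsurj y
        rcases eq_or_ne d 0 with rfl | hd0
        · left; exact zero_vadd _ _
        · right
          rw [hcon d hy hd0]
          exact rfl
      have h4 := Set.ncard_le_ncard hsub (Set.toFinite _)
      rw [hline (ℓ i)] at h4
      have h5 : ({x, c +ᵥ x} : Set P).ncard ≤ 2 := by
        apply (Set.ncard_insert_le _ _).trans
        simp
      omega
    have hdnc : d ≠ -c := by rintro rfl; exact hnegc hd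
    have hdbad : d +ᵥ ℓ i ≠ ℓ i := fun h => hd0 (hgood d hd h)
    -- triangle c+ᵥx, d+ᵥx, (c+d)+ᵥx
    refine htri (c +ᵥ x) (d +ᵥ x) ((c + d) +ᵥ x) (ℓ i) (d +ᵥ ℓ i) (c +ᵥ ℓ i)
      (hvadd_ne (fun h => hdc h.symm)) (hvadd_ne ?_) (hvadd_ne ?_) ?_ ?_ ?_
      hc hd ?_ ?_ ?_ ?_
    · exact fun h => hc0 (right_eq_add.mp h)
    · exact fun h => hd0 (left_eq_add.mp h)
    · exact fun h => hdbad h.symm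
    · exact fun h => hbad h.symm
    · intro h
      have h2 : (-c + d) +ᵥ ℓ i = ℓ i := by
        rw [← vadd_vadd, h, vadd_vadd, neg_add_cancel, zero_vadd]
      have h3 : (-c + d) ∈ U i := (hstab i _).mpr h2
      have h4 := hstab0 _ h3
      apply hdc
      have h5 : d = c + (-c + d) := by abel
      rw [h5, h4, add_zero]
    · -- I (d +ᵥ x) (d +ᵥ ℓ i)
      exact (hauto d x (ℓ i)).mp (hℓinc i)
    · -- I ((c+d) +ᵥ x) (d +ᵥ ℓ i)
      have h2 := (hauto d (c +ᵥ x) (ℓ i)).mp hc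
      rwa [vadd_vadd, add_comm d c] at h2
    · -- I (c +ᵥ x) (c +ᵥ ℓ i)
      exact (hauto c x (ℓ i)).mp (hℓinc i)
    · -- I ((c+d) +ᵥ x) (c +ᵥ ℓ i)
      have h2 := (hauto c (d +ᵥ x) (ℓ i)).mp hd
      rwa [vadd_vadd] at h2
  -- the key equivalence
  have hTU : ∀ (i : Fin (t + 1)) (g : N), I (g +ᵥ x) (ℓ i) ↔ g ∈ U i := by
    intro i g
    constructor
    · intro h
      exact (hstab i g).mpr (hGhin i g h)
    · exact hUT i g
  -- cardinalities
  have hcardU : ∀ i, Nat.card (U i) = s + 1 := by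
    intro i
    have hf : Function.Bijective (fun u : U i => (⟨(u : N) +ᵥ x, hUT i u.1 u.2⟩ :
        {y : P // I y (ℓ i)})) := by
      constructor
      · intro u u' h
        have h2 : (u : N) +ᵥ x = (u' : N) +ᵥ x := congrArg Subtype.val h
        exact Subtype.ext (hinj h2)
      · rintro ⟨y, hy⟩
        obtain ⟨g, rfl⟩ := hsurj y
        exact ⟨⟨g, (hTU i g).mp hy⟩, rfl⟩
    have h1 : Nat.card (U i) = Nat.card {y : P // I y (ℓ i)} :=
      Nat.card_congr (Equiv.ofBijective _ hf)
    rw [h1]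
    have h2 : Nat.card {y : P // I y (ℓ i)} = {y : P | I y (ℓ i)}.ncard :=
      Nat.card_coe_set_eq _
    rw [h2, hline (ℓ i)]
  -- pairwise trivial
  have hpairG : ∀ i j : Fin (t + 1), i ≠ j → ∀ u : N, u ∈ U i → u ∈ U j → u = 0 := by
    intro i j hij u hui huj
    by_contra hu0
    have h1 : x ≠ u +ᵥ x := by
      have h4 : (0 : N) +ᵥ x ≠ u +ᵥ x := hvadd_ne (fun h => hu0 h.symm)
      rwa [zero_vadd] at h4
    exact hij (hℓinj (huniq x (u +ᵥ x) (ℓ i) (ℓ j) h1 (hℓinc i) (hUT i u hui)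
      (hℓinc j) (hUT j u huj)))
  -- triple condition
  have htripG : ∀ i j k : Fin (t + 1), j ≠ i → k ≠ i → j ≠ k →
      ∀ u ∈ U j, ∀ v ∈ U k, u + v ∈ U i → u = 0 := by
    intro i j k hji hki hjk u hu v hv hsum
    by_contra hu0
    have hv0 : v ≠ 0 := by
      rintro rfl
      rw [add_zero] at hsum
      exact hu0 (hpairG j i hji u hu hsum)
    have hw0 : u + v ≠ 0 := by
      intro h
      have h2 : v = -u := by linear_combination (norm := abel) h
      have h3 : -u ∈ U j := neg_mem hu
      rw [h2] at hv0 hv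
      exact hv0 (hpairG k j (fun h' => hjk h'.symm) (-u) hv h3)
    refine htri x (u +ᵥ x) ((u + v) +ᵥ x) (ℓ j) (u +ᵥ ℓ k) (ℓ i)
      ?_ (hvadd_ne ?_) ?_ ?_ (fun h => hji (hℓinj h)) ?_
      (hℓinc j) (hUT j u hu) ?_ ?_ (hℓinc i) (hUT i _ hsum)
    · have h4 : (0 : N) +ᵥ x ≠ u +ᵥ x := hvadd_ne (fun h => hu0 h.symm)
      rwa [zero_vadd] at h4
    · intro h
      exact hv0 (by
        have : u + 0 = u + v := by rw [add_zero]; exact h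
        exact (add_left_cancel this).symm)
    · have h4 : (0 : N) +ᵥ x ≠ (u + v) +ᵥ x := hvadd_ne (fun h => hw0 h.symm)
      rwa [zero_vadd] at h4
    · -- ℓ j ≠ u +ᵥ ℓ k
      intro h
      have h2 : I x (u +ᵥ ℓ k) := h ▸ hℓinc j
      have h3 : I ((-u) +ᵥ x) (ℓ k) := by
        have h4 := (hauto (-u) x (u +ᵥ ℓ k)).mp h2
        rwa [neg_vadd_vadd] at h4
      have h5 : -u ∈ U k := (hTU k (-u)).mp h3
      exact hu0 (hpairG j k hjk u hu (by simpa using neg_mem h5))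
    · -- u +ᵥ ℓ k ≠ ℓ i
      intro h
      have h2 : I x (u +ᵥ ℓ k) := h ▸ hℓinc i
      have h3 : I ((-u) +ᵥ x) (ℓ k) := by
        have h4 := (hauto (-u) x (u +ᵥ ℓ k)).mp h2
        rwa [neg_vadd_vadd] at h4
      have h5 : -u ∈ U k := (hTU k (-u)).mp h3
      exact hu0 (hpairG j k hjk u hu (by simpa using neg_mem h5))
    · -- I (u +ᵥ x) (u +ᵥ ℓ k)
      exact (hauto u x (ℓ k)).mp (hℓinc k)
    · -- I ((u+v) +ᵥ x) (u +ᵥ ℓ k)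
      have h2 := (hauto u (v +ᵥ x) (ℓ k)).mp (hUT k v hv)
      rwa [vadd_vadd] at h2
  -- covering condition
  have hcovG : ∀ i : Fin (t + 1), ∀ g : N, g ∉ U i →
      ∃ k, k ≠ i ∧ ∃ u ∈ U i, g - u ∈ U k := by
    intro i g hgU
    have hnI : ¬ I (g +ᵥ x) (ℓ i) := fun h => hgU ((hTU i g).mp h)
    obtain ⟨⟨z, m⟩, ⟨h1, h2, h3⟩, _⟩ := hGQ (g +ᵥ x) (ℓ i) hnI
    obtain ⟨u, rfl⟩ := hsurj z
    have hu : u ∈ U i := (hTU i u).mp h3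
    obtain ⟨k, rfl⟩ := hlinedec u m h2
    have h4 : I ((g - u) +ᵥ x) (ℓ k) := by
      have h5 := (hauto (-u) (g +ᵥ x) (u +ᵥ ℓ k)).mp h1
      rwa [vadd_vadd, vadd_vadd, neg_add_cancel, zero_vadd,
        show -u + g = g - u by abel] at h5
    have hki : k ≠ i := by
      rintro rfl
      have h6 : u +ᵥ ℓ k = ℓ k := (hstab k u).mp hu
      rw [h6] at h1
      exact hnI h1
    exact ⟨k, hki, u, hu, (hTU k _).mp h4⟩
  -- apply the abstract result
  obtain ⟨hexp2, hts, hsup, hUinj⟩ := GQFam.fam_main hs ht htripG hcovG hcardU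
  refine ⟨?_, hUinj, hts, hsup⟩
  -- the subring K has 2-power order
  haveI hfinEnd : Finite (AddMonoid.End N) := by
    exact Finite.of_injective (fun φ : AddMonoid.End N => (φ : N → N))
      DFunLike.coe_injective
  haveI : Finite K := Subtype.finite
  haveI : Fintype K := Fintype.ofFinite _
  haveI : Nonempty K := ⟨⟨0, K.zero_mem⟩⟩
  have h2tor : ∀ a : K, a + a = 0 := by
    intro a
    have h3 : ((a + a : K) : AddMonoid.End N) = ((0 : K) : AddMonoid.End N) := by
      refine DFunLike.ext _ _ (fun n => ?_)
      show (a : AddMonoid.End N) n + (a : AddMonoid.End N) n = 0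
      exact hexp2 _
    exact Subtype.ext h3
  refine ⟨_, Nat.eq_prime_pow_of_unique_prime_dvd ?_ (fun {r} hq hd => ?_)⟩
  · exact Nat.card_pos.ne'
  · haveI : Fact r.Prime := ⟨hq⟩
    rw [Nat.card_eq_fintype_card] at hd
    obtain ⟨a, ha⟩ := exists_prime_addOrderOf_dvd_card (G := K) r hd
    have h4 : addOrderOf a ∣ 2 :=
      addOrderOf_dvd_of_nsmul_eq_zero (by rw [two_nsmul]; exact h2tor a)
    rw [ha] at h4
    exact (Nat.prime_dvd_prime_iff_eq hq Nat.prime_two).mp h4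
end

section
/- Let (P, L, I) be a thick finite generalised quadrangle of order (s,t) and let N be an abelian group acting on it by automorphisms whose induced action on P is regular. Let x ∈ P and let ℓ_i, ℓ_j, ℓ_k be three pairwise distinct lines incident with x, with setwise stabilisers N_{ℓ_i}, N_{ℓ_j}, N_{ℓ_k} in N. Then (N_{ℓ_i} ⊔ N_{ℓ_j}) ⊓ N_{ℓ_k} is the trivial subgroup of N. -/
/-- **Lemma.** In a thick finite generalised quadrangle with a point-regular abelian
automorphism group `N`, if `ℓᵢ, ℓⱼ, ℓₖ` are three pairwise distinct lines through a point
`x`, then `(N_{ℓᵢ} ⊔ N_{ℓⱼ}) ⊓ N_{ℓₖ}` is trivial, where `N_ℓ` denotes the setwise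
stabiliser of `ℓ` in `N`. -/
theorem stabilizer_join_inf_stabilizer_eq_bot
    {P L N : Type*} [Fintype P] [Fintype L] [CommGroup N]
    [MulAction N P] [MulAction N L]
    {I : P → L → Prop} {s t : ℕ}
    (hs : 2 ≤ s) (ht : 2 ≤ t)
    (hline : ∀ ℓ : L, {y : P | I y ℓ}.ncard = s + 1)
    (hpoint : ∀ y : P, {ℓ : L | I y ℓ}.ncard = t + 1)
    (hplinear : ∀ y z : P, y ≠ z → {ℓ : L | I y ℓ ∧ I z ℓ}.Subsingleton)
    (hGQ : ∀ (y : P) (ℓ : L), ¬ I y ℓ →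
      ∃! zm : P × L, I y zm.2 ∧ I zm.1 zm.2 ∧ I zm.1 ℓ)
    (hauto : ∀ (g : N) (y : P) (ℓ : L), I y ℓ ↔ I (g • y) (g • ℓ))
    (hreg : ∀ y z : P, ∃! g : N, g • y = z)
    (x : P) (ℓi ℓj ℓk : L)
    (hij : ℓi ≠ ℓj) (hik : ℓi ≠ ℓk) (hjk : ℓj ≠ ℓk)
    (hi : I x ℓi) (hj : I x ℓj) (hk : I x ℓk) :
    (MulAction.stabilizer N ℓi ⊔ MulAction.stabilizer N ℓj) ⊓
      MulAction.stabilizer N ℓk = ⊥ := by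
  have free : ∀ (h : N) (y : P), h • y = y → h = 1 := by
    intro h y hy
    obtain ⟨g, -, hu⟩ := hreg y y
    exact (hu h hy).trans (hu 1 (one_smul _ _)).symm
  rw [eq_bot_iff]
  intro g hg
  rw [Subgroup.mem_inf, Subgroup.mem_sup] at hg
  obtain ⟨⟨a, ha, b, hb, hab⟩, hgk⟩ := hg
  rw [MulAction.mem_stabilizer_iff] at ha hb hgk
  suffices hgx : g • x = x by
    simpa [Subgroup.mem_bot] using free g x hgx
  by_contra hgx
  have hne : x ≠ g • x := fun h => hgx h.symm
  have hp3k : I (g • x) ℓk := by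
    have := (hauto g x ℓk).mp hk
    rwa [hgk] at this
  by_cases ha1 : a • x = x
  · -- then g = b stabilises ℓj, giving two lines through x and g•x
    have hgb : g = b := by rw [← hab, free a x ha1, one_mul]
    have hp3j : I (g • x) ℓj := by
      have := (hauto g x ℓj).mp hj
      rwa [hgb, hb, ← hgb] at this
    exact hjk (hplinear x (g • x) hne ⟨hj, hp3j⟩ ⟨hk, hp3k⟩)
  by_cases hb1 : b • x = x
  · -- then g = a stabilises ℓi
    have hga : g = a := by rw [← hab, free b x hb1, mul_one]
    have hp3i : I (g • x) ℓi := by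
      have := (hauto g x ℓi).mp hi
      rwa [hga, ha, ← hga] at this
    exact hik (hplinear x (g • x) hne ⟨hi, hp3i⟩ ⟨hk, hp3k⟩)
  -- general case: triangle x, a•x, g•x
  have hgab : g • x = a • (b • x) := by rw [← hab, mul_smul]
  have hp2i : I (a • x) ℓi := by
    have := (hauto a x ℓi).mp hi
    rwa [ha] at this
  have hp2m : I (a • x) (a • ℓj) := (hauto a x ℓj).mp hj
  have hp3m : I (g • x) (a • ℓj) := by
    have hbx : I (b • x) ℓj := by
      have := (hauto b x ℓj).mp hj
      rwa [hb] at this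
    rw [hgab]
    exact (hauto a (b • x) ℓj).mp hbx
  have hne12 : x ≠ a • x := fun h => ha1 h.symm
  have hne23 : a • x ≠ g • x := by
    intro h
    obtain ⟨c, -, hu⟩ := hreg x (a • x)
    have : a = a * b := (hu a rfl).trans (hu (a * b) (by rw [hab, h])).symm
    have hb' : b = 1 := by
      have h' : a * b = a * 1 := by rw [mul_one, ← this]
      exact mul_left_cancel h'
    exact hb1 (by rw [hb', one_smul])
  have hxm : ¬ I x (a • ℓj) := by
    intro hxm
    have hmi : (a • ℓj) = ℓi := hplinear x (a • x) hne12 ⟨hxm, hp2m⟩ ⟨hi, hp2i⟩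
    have hp3i : I (g • x) ℓi := by rw [← hmi]; exact hp3m
    exact hik (hplinear x (g • x) hne ⟨hi, hp3i⟩ ⟨hk, hp3k⟩)
  obtain ⟨zm, -, huniq⟩ := hGQ x (a • ℓj) hxm
  have e1 : ((a • x, ℓi) : P × L) = zm := huniq _ ⟨hi, hp2i, hp2m⟩
  have e2 : ((g • x, ℓk) : P × L) = zm := huniq _ ⟨hk, hp3k, hp3m⟩
  exact hne23 (congrArg Prod.fst (e1.trans e2.symm))
end

section
/- Let F be a field and V an F-vector space with Module.rank F V ≥ 2. Let f : V → V be an automorphism of the additive group of V such that for every v ∈ V there exists w ∈ V with f '' (F-span of {v}) = F-span of {w} (i.e. f maps every 1-dimensional subspace onto a 1-dimensional subspace). Then f is semilinear: there exists a ring automorphism σ : F ≃+* F such that f(a • v) = σ(a) • f(v) for all a ∈ F and v ∈ V. -/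
/-- **Lemma.** An additive automorphism of a vector space of rank at least `2` that maps
every `1`-dimensional subspace onto a `1`-dimensional subspace is semilinear. -/
theorem additive_automorphism_preserving_lines_is_semilinear
    {F V : Type*} [Field F] [AddCommGroup V] [Module F V]
    (hrank : 2 ≤ Module.rank F V)
    (f : V ≃+ V)
    (hf : ∀ v : V, ∃ w : V,
      f '' (Submodule.span F {v} : Set V) = (Submodule.span F {w} : Set V)) :
    ∃ σ : F ≃+* F, ∀ (a : F) (v : V), f (a • v) = σ a • f v := by
  classical
  have hnt : Nontrivial V := by
    rw [← rank_pos_iff_nontrivial (R := F)]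
    exact lt_of_lt_of_le (by norm_num) hrank
  have hf0 : ∀ x : V, f x = 0 → x = 0 := by
    intro x hx
    have := f.injective (a₁ := x) (a₂ := 0) (by simpa using hx)
    simpa using this
  -- the image of the span of a nonzero vector is the span of its image
  have himg : ∀ v : V, v ≠ 0 →
      f '' (Submodule.span F {v} : Set V) = (Submodule.span F {f v} : Set V) := by
    intro v hv
    obtain ⟨w, hw⟩ := hf v
    have hfvmem : f v ∈ (Submodule.span F {w} : Set V) := by
      rw [← hw]
      exact ⟨v, Submodule.mem_span_singleton_self v, rfl⟩
    have hfv0 : f v ≠ 0 := fun h => hv (hf0 v h)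
    obtain ⟨c, hc⟩ := Submodule.mem_span_singleton.mp hfvmem
    have hc0 : c ≠ 0 := by
      rintro rfl
      rw [zero_smul] at hc
      exact hfv0 hc.symm
    rw [hw]
    have : Submodule.span F {f v} = Submodule.span F {w} := by
      rw [← hc]
      exact Submodule.span_singleton_smul_eq (IsUnit.mk0 c hc0) w
    rw [this]
  -- existence of the scalar
  have hsc : ∀ v : V, v ≠ 0 → ∀ a : F, ∃ b : F, f (a • v) = b • f v := by
    intro v hv a
    have hmem : f (a • v) ∈ (Submodule.span F {f v} : Set V) := by
      rw [← himg v hv]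
      exact ⟨a • v, Submodule.mem_span_singleton.mpr ⟨a, rfl⟩, rfl⟩
    obtain ⟨b, hb⟩ := Submodule.mem_span_singleton.mp hmem
    exact ⟨b, hb.symm⟩
  -- independence is preserved
  have hind : ∀ v u : V, v ≠ 0 → u ∉ Submodule.span F {v} →
      f u ∉ Submodule.span F {f v} := by
    intro v u hv hu hmem
    apply hu
    have : f u ∈ f '' (Submodule.span F {v} : Set V) := by
      rw [himg v hv]; exact hmem
    obtain ⟨x, hx, hxu⟩ := this
    rwa [← f.injective hxu]
  -- the scalars for independent vectors agree
  have hagree : ∀ v u : V, v ≠ 0 → u ∉ Submodule.span F {v} → ∀ a b c : F,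
      f (a • v) = b • f v → f (a • u) = c • f u → b = c := by
    intro v u hv hu a b c hb hc
    have hu0 : u ≠ 0 := by
      rintro rfl; exact hu (Submodule.zero_mem _)
    have hvu : v + u ≠ 0 := by
      intro h
      apply hu
      have : u = (-1 : F) • v := by
        rw [neg_one_smul]
        exact eq_neg_of_add_eq_zero_right h
      exact this ▸ Submodule.smul_mem _ _ (Submodule.mem_span_singleton_self v)
    obtain ⟨d, hd⟩ := hsc (v + u) hvu a
    have hfu : f u ∉ Submodule.span F {f v} := hind v u hv hu
    have hfv0 : f v ≠ 0 := fun h => hv (hf0 v h)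
    have key : b • f v + c • f u = d • f v + d • f u := by
      have : f (a • v) + f (a • u) = d • (f v + f u) := by
        rw [← map_add, ← smul_add, ← map_add] at *
        exact hd
      rw [hb, hc] at this
      rw [this, smul_add]
    have key2 : (b - d) • f v = (d - c) • f u := by
      rw [sub_smul, sub_smul]
      rw [sub_eq_sub_iff_add_eq_add]
      linear_combination (norm := module) key
    have hdc : d = c := by
      by_contra hne
      apply hfu
      have : f u = (d - c)⁻¹ • ((b - d) • f v) := by
        rw [key2, smul_smul, inv_mul_cancel₀ (sub_ne_zero.mpr hne), one_smul]
      rw [this, smul_smul]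
      exact Submodule.mem_span_singleton.mpr ⟨_, rfl⟩
    subst hdc
    have : (b - d) • f v = 0 := by
      rw [key2, sub_self, zero_smul]
    have := sub_eq_zero.mp (by
      rcases smul_eq_zero.mp this with h | h
      · exact h
      · exact absurd h hfv0)
    exact this
  -- pick a base vector and a vector independent from any given nonzero vector
  obtain ⟨v₀, hv₀⟩ := exists_ne (0 : V)
  have hexu : ∀ v : V, ∃ u : V, u ∉ Submodule.span F {v} := by
    intro v
    by_contra h
    push_neg at h
    have htop : Submodule.span F {v} = ⊤ := by
      rw [eq_top_iff]; intro x _; exact h x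
    have h1 : Module.rank F V ≤ 1 := by
      have := rank_span_le (R := F) (M := V) {v}
      rw [htop] at this
      simpa [rank_top, Cardinal.mk_singleton] using this
    exact absurd (le_trans hrank h1) (by norm_num)
  -- define σ via the base vector
  set σ' : F → F := fun a => (hsc v₀ hv₀ a).choose with hσ'
  have hP : ∀ a : F, f (a • v₀) = σ' a • f v₀ := fun a => (hsc v₀ hv₀ a).choose_spec
  have hfv₀0 : f v₀ ≠ 0 := fun h => hv₀ (hf0 v₀ h)
  have huniq : ∀ (v : V), f v ≠ 0 → ∀ b c : F, b • f v = c • f v → b = c := by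
    intro v hv b c h
    exact smul_left_injective F hv h
  -- main: σ' works for every nonzero vector
  have hmain : ∀ v : V, v ≠ 0 → ∀ a : F, f (a • v) = σ' a • f v := by
    intro v hv a
    obtain ⟨b, hb⟩ := hsc v hv a
    by_cases hvs : v ∈ Submodule.span F {v₀}
    · -- pick u independent of v₀; then it's independent of v too
      obtain ⟨u, hu⟩ := hexu v₀
      have hu0 : u ≠ 0 := by rintro rfl; exact hu (Submodule.zero_mem _)
      obtain ⟨c, hc⟩ := hsc u hu0 a
      have h1 : σ' a = c := hagree v₀ u hv₀ hu a _ _ (hP a) hc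
      have husv : u ∉ Submodule.span F {v} := by
        intro hmem
        apply hu
        obtain ⟨e, he⟩ := Submodule.mem_span_singleton.mp hvs
        obtain ⟨g, hg⟩ := Submodule.mem_span_singleton.mp hmem
        rw [← hg, ← he, smul_smul]
        exact Submodule.mem_span_singleton.mpr ⟨_, rfl⟩
      have h2 : b = c := hagree v u hv husv a _ _ hb hc
      rw [hb, h2, h1]
    · have : σ' a = b := hagree v₀ v hv₀ hvs a _ _ (hP a) hb
      rw [hb, this]
  -- σ' is a ring homomorphism and bijective
  have hadd : ∀ a b : F, σ' (a + b) = σ' a + σ' b := by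
    intro a b
    apply huniq v₀ hfv₀0
    rw [← hP (a + b), add_smul, add_smul, map_add, hP a, hP b]
  have hmul : ∀ a b : F, σ' (a * b) = σ' a * σ' b := by
    intro a b
    apply huniq v₀ hfv₀0
    by_cases hb : b = 0
    · subst hb
      have h0 : σ' 0 = 0 := by
        apply huniq v₀ hfv₀0
        rw [← hP 0, zero_smul, zero_smul, map_zero]
      simp [h0]
    · have hbv : b • v₀ ≠ 0 := smul_ne_zero hb hv₀
      have : f ((a * b) • v₀) = σ' a • f (b • v₀) := by
        rw [mul_smul]
        exact hmain (b • v₀) hbv a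
      rw [← hP (a * b), this, hP b, smul_smul, mul_smul, smul_smul]
  have hone : σ' 1 = 1 := by
    apply huniq v₀ hfv₀0
    rw [← hP 1, one_smul, one_smul]
  have hinj : Function.Injective σ' := by
    intro a b h
    have : f (a • v₀) = f (b • v₀) := by rw [hP a, hP b, h]
    have := f.injective this
    exact smul_left_injective F hv₀ this
  have hsurj : Function.Surjective σ' := by
    intro b
    have hmem : b • f v₀ ∈ (Submodule.span F {f v₀} : Set V) :=
      Submodule.mem_span_singleton.mpr ⟨b, rfl⟩
    rw [← himg v₀ hv₀] at hmem
    obtain ⟨x, hx, hxb⟩ := hmem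
    obtain ⟨a, ha⟩ := Submodule.mem_span_singleton.mp hx
    refine ⟨a, ?_⟩
    apply huniq v₀ hfv₀0
    rw [← hP a, ha, hxb]
  refine ⟨{ Equiv.ofBijective σ' ⟨hinj, hsurj⟩ with
            map_add' := hadd, map_mul' := hmul }, ?_⟩
  intro a v
  by_cases hv : v = 0
  · subst hv; simp
  · exact hmain v hv a
end

section
/- Let E be a finite field with |E| = 4 and let V = E³ be regarded as a vector space over the prime field 𝔽₂ by restriction of scalars. Let O be the pseudo-hyperconic, i.e. the set of 𝔽₂-subspaces of V underlying the hyperconic of PG(2,4): O consists of the E-spans E·(1,t,t²) for t ∈ E together with E·(0,1,0) and E·(0,0,1), each regarded as an 𝔽₂-subspace of V. Then the stabiliser of O in the group of 𝔽₂-linear automorphisms of V is transitive on O: for all U, U' ∈ O there exists an 𝔽₂-linear automorphism g of V such that Submodule.map g U'' ∈ O for every U'' ∈ O and Submodule.map g U = U'. -/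
/-- The pseudo-hyperconic: the set of `𝔽₂`-subspaces of `V = E³` underlying the hyperconic
(regular hyperoval) `{E·(1,t,t²) : t ∈ E} ∪ {E·(0,1,0), E·(0,0,1)}` of `PG(2,E)`. -/
def pseudoHyperconic (E : Type*) [Field E] [Algebra (ZMod 2) E] :
    Set (Submodule (ZMod 2) (Fin 3 → E)) :=
  {W | (∃ t : E, W = (Submodule.span E
          ({![1, t, t ^ 2]} : Set (Fin 3 → E))).restrictScalars (ZMod 2)) ∨
    W = (Submodule.span E ({![0, 1, 0]} : Set (Fin 3 → E))).restrictScalars (ZMod 2) ∨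
    W = (Submodule.span E ({![0, 0, 1]} : Set (Fin 3 → E))).restrictScalars (ZMod 2)}

namespace PseudoHyperconicAux

variable {E : Type*} [Field E] [Algebra (ZMod 2) E]

/-- characteristic 2 -/
lemma charE : CharP E 2 :=
  charP_of_injective_algebraMap (algebraMap (ZMod 2) E).injective 2

abbrev cvec (t : E) : Fin 3 → E := ![1, t, t ^ 2]
abbrev Yv : Fin 3 → E := ![0, 1, 0]
abbrev Zv : Fin 3 → E := ![0, 0, 1]

abbrev sp (v : Fin 3 → E) : Submodule (ZMod 2) (Fin 3 → E) :=
  (Submodule.span E ({v} : Set (Fin 3 → E))).restrictScalars (ZMod 2)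

lemma mem_iff (W : Submodule (ZMod 2) (Fin 3 → E)) :
    W ∈ pseudoHyperconic E ↔
      (∃ t : E, W = sp (cvec t)) ∨ W = sp Yv ∨ W = sp Zv := Iff.rfl

lemma sp_smul {a : E} (ha : a ≠ 0) (v : Fin 3 → E) : sp (a • v) = sp v := by
  unfold sp
  rw [Submodule.span_singleton_smul_eq (IsUnit.mk0 a ha)]

lemma map_sp (g : (Fin 3 → E) ≃ₗ[E] (Fin 3 → E)) (v : Fin 3 → E) :
    Submodule.map (g.restrictScalars (ZMod 2)).toLinearMap (sp v) = sp (g v) := by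
  ext x
  simp only [sp, Submodule.mem_map, Submodule.restrictScalars_mem,
    Submodule.mem_span_singleton]
  constructor
  · rintro ⟨y, hy, rfl⟩
    obtain ⟨a, rfl⟩ := hy
    exact ⟨a, (g.map_smul a v).symm⟩
  · rintro ⟨a, rfl⟩
    exact ⟨a • v, ⟨a, rfl⟩, g.map_smul a v⟩

/-- translation generator -/
def gT (u : E) : (Fin 3 → E) ≃ₗ[E] (Fin 3 → E) where
  toFun v := ![v 0, u * v 0 + v 1, u ^ 2 * v 0 + v 2]
  invFun v := ![v 0, -(u * v 0) + v 1, -(u ^ 2 * v 0) + v 2]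
  map_add' a b := by funext i; fin_cases i <;> simp <;> ring
  map_smul' a v := by funext i; fin_cases i <;> simp <;> ring
  left_inv v := by funext i; fin_cases i <;> simp
  right_inv v := by funext i; fin_cases i <;> simp

/-- swap generator -/
def gS : (Fin 3 → E) ≃ₗ[E] (Fin 3 → E) where
  toFun v := ![v 0, v 2, v 1]
  invFun v := ![v 0, v 2, v 1]
  map_add' a b := by funext i; fin_cases i <;> simp
  map_smul' a v := by funext i; fin_cases i <;> simp
  left_inv v := by funext i; fin_cases i <;> simp
  right_inv v := by funext i; fin_cases i <;> simp

/-- reversal generator -/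
def gR : (Fin 3 → E) ≃ₗ[E] (Fin 3 → E) where
  toFun v := ![v 2, v 1, v 0]
  invFun v := ![v 2, v 1, v 0]
  map_add' a b := by funext i; fin_cases i <;> simp
  map_smul' a v := by funext i; fin_cases i <;> simp
  left_inv v := by funext i; fin_cases i <;> simp
  right_inv v := by funext i; fin_cases i <;> simp

lemma gT_c (u t : E) : gT u (cvec t) = cvec (t + u) := by
  have := charE (E := E)
  funext i
  fin_cases i <;> simp [gT, cvec, CharTwo.add_sq] <;> ring

lemma gT_Y (u : E) : gT u Yv = (Yv : Fin 3 → E) := by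
  funext i; fin_cases i <;> simp [gT, Yv]

lemma gT_Z (u : E) : gT u Zv = (Zv : Fin 3 → E) := by
  funext i; fin_cases i <;> simp [gT, Zv]

lemma gS_Y : gS Yv = (Zv : Fin 3 → E) := by
  funext i; fin_cases i <;> simp [gS, Yv, Zv]

lemma gS_Z : gS Zv = (Yv : Fin 3 → E) := by
  funext i; fin_cases i <;> simp [gS, Yv, Zv]

lemma gR_Y : gR Yv = (Yv : Fin 3 → E) := by
  funext i; fin_cases i <;> simp [gR, Yv]

lemma gR_Z : gR Zv = cvec (0 : E) := by
  funext i; fin_cases i <;> simp [gR, Zv, cvec]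

lemma gR_c0 : gR (cvec (0 : E)) = (Zv : Fin 3 → E) := by
  funext i; fin_cases i <;> simp [gR, Zv, cvec]

lemma gR_c {t : E} (ht : t ≠ 0) : gR (cvec t) = t ^ 2 • cvec t⁻¹ := by
  funext i
  fin_cases i <;>
    simp [gR, cvec, Pi.smul_apply, smul_eq_mul] <;> (try field_simp) <;> (try ring)

variable [Fintype E] (hE : Fintype.card E = 4)

include hE in
lemma pow_four (t : E) : t ^ 4 = t := by
  have := FiniteField.pow_card t
  rwa [hE] at this

include hE in
lemma gS_c (t : E) : gS (cvec t) = cvec (t ^ 2) := by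
  funext i
  fin_cases i <;> simp [gS, cvec]
  rw [← pow_mul]
  exact (pow_four hE t).symm

/-- membership helpers -/
lemma sp_c_mem (t : E) : sp (cvec t) ∈ pseudoHyperconic E := Or.inl ⟨t, rfl⟩
lemma sp_Y_mem : sp (Yv : Fin 3 → E) ∈ pseudoHyperconic E := Or.inr (Or.inl rfl)
lemma sp_Z_mem : sp (Zv : Fin 3 → E) ∈ pseudoHyperconic E := Or.inr (Or.inr rfl)

/-- a sufficient condition to stabilise the pseudo-hyperconic -/
lemma stab_of (g : (Fin 3 → E) ≃ₗ[E] (Fin 3 → E))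
    (h1 : ∀ t : E, sp (g (cvec t)) ∈ pseudoHyperconic E)
    (h2 : sp (g Yv) ∈ pseudoHyperconic E)
    (h3 : sp (g Zv) ∈ pseudoHyperconic E) :
    ∀ U ∈ pseudoHyperconic E,
      Submodule.map (g.restrictScalars (ZMod 2)).toLinearMap U ∈ pseudoHyperconic E := by
  rintro U (⟨t, rfl⟩ | rfl | rfl) <;> rw [map_sp]
  · exact h1 t
  · exact h2
  · exact h3

lemma stab_comp (g₁ g₂ : (Fin 3 → E) ≃ₗ[E] (Fin 3 → E))
    (H1 : ∀ U ∈ pseudoHyperconic E,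
      Submodule.map (g₁.restrictScalars (ZMod 2)).toLinearMap U ∈ pseudoHyperconic E)
    (H2 : ∀ U ∈ pseudoHyperconic E,
      Submodule.map (g₂.restrictScalars (ZMod 2)).toLinearMap U ∈ pseudoHyperconic E) :
    ∀ U ∈ pseudoHyperconic E,
      Submodule.map ((g₁.trans g₂).restrictScalars (ZMod 2)).toLinearMap U
        ∈ pseudoHyperconic E := by
  intro U hU
  have : ((g₁.trans g₂).restrictScalars (ZMod 2)).toLinearMap =
      (g₂.restrictScalars (ZMod 2)).toLinearMap.comp
        (g₁.restrictScalars (ZMod 2)).toLinearMap := by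
    ext x; rfl
  rw [this, Submodule.map_comp]
  exact H2 _ (H1 _ hU)

lemma stab_T (u : E) :
    ∀ U ∈ pseudoHyperconic E,
      Submodule.map ((gT u).restrictScalars (ZMod 2)).toLinearMap U ∈ pseudoHyperconic E := by
  refine stab_of _ (fun t => ?_) ?_ ?_
  · rw [gT_c]; exact sp_c_mem _
  · rw [gT_Y]; exact sp_Y_mem
  · rw [gT_Z]; exact sp_Z_mem

include hE in
lemma stab_S :
    ∀ U ∈ pseudoHyperconic E,
      Submodule.map ((gS (E := E)).restrictScalars (ZMod 2)).toLinearMap U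
        ∈ pseudoHyperconic E := by
  refine stab_of _ (fun t => ?_) ?_ ?_
  · rw [gS_c hE]; exact sp_c_mem _
  · rw [gS_Y]; exact sp_Z_mem
  · rw [gS_Z]; exact sp_Y_mem

lemma stab_R :
    ∀ U ∈ pseudoHyperconic E,
      Submodule.map ((gR (E := E)).restrictScalars (ZMod 2)).toLinearMap U
        ∈ pseudoHyperconic E := by
  refine stab_of _ (fun t => ?_) ?_ ?_
  · rcases eq_or_ne t 0 with rfl | ht
    · rw [gR_c0]; exact sp_Z_mem
    · rw [gR_c ht, sp_smul (pow_ne_zero 2 ht)]; exact sp_c_mem _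
  · rw [gR_Y]; exact sp_Y_mem
  · rw [gR_Z]; exact sp_c_mem _

end PseudoHyperconicAux

open PseudoHyperconicAux in
/-- **Proposition (case `|E| = 4`).** The stabiliser of the pseudo-hyperconic of
`PG(5,2)` (obtained by field reduction of the hyperconic of `PG(2,4)`) in the group of
`𝔽₂`-linear automorphisms of `E³` is transitive on the pseudo-hyperconic. -/
theorem pseudoHyperconic_card_four_transitive
    {E : Type*} [Field E] [Fintype E] [Algebra (ZMod 2) E]
    (hE : Fintype.card E = 4) :
    ∀ U ∈ pseudoHyperconic E, ∀ U' ∈ pseudoHyperconic E,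
      ∃ g : (Fin 3 → E) ≃ₗ[ZMod 2] (Fin 3 → E),
        (∀ U'' ∈ pseudoHyperconic E,
          Submodule.map g.toLinearMap U'' ∈ pseudoHyperconic E) ∧
        Submodule.map g.toLinearMap U = U' := by
  haveI hchar : CharP E 2 := charE
  have hadd : ∀ t s : E, t + (t + s) = s := by
    intro t s; rw [← add_assoc, CharTwo.add_self_eq_zero, zero_add]
  rintro U (⟨t, rfl⟩ | rfl | rfl) U' (⟨s, rfl⟩ | rfl | rfl)
  -- c t → c s
  · exact ⟨(gT (t + s)).restrictScalars (ZMod 2), stab_T _,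
      by rw [map_sp, gT_c, hadd]⟩
  -- c t → Y
  · refine ⟨(((gT t).trans gR).trans gS).restrictScalars (ZMod 2),
      stab_comp _ _ (stab_comp _ _ (stab_T t) stab_R) (stab_S hE), ?_⟩
    rw [map_sp]
    rw [LinearEquiv.trans_apply, LinearEquiv.trans_apply]
    rw [gT_c, CharTwo.add_self_eq_zero, gR_c0, gS_Z]
  -- c t → Z
  · refine ⟨((gT t).trans gR).restrictScalars (ZMod 2),
      stab_comp _ _ (stab_T t) stab_R, ?_⟩
    rw [map_sp]
    rw [LinearEquiv.trans_apply]
    rw [gT_c, CharTwo.add_self_eq_zero, gR_c0]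
  -- Y → c s
  · refine ⟨((gS.trans gR).trans (gT s)).restrictScalars (ZMod 2),
      stab_comp _ _ (stab_comp _ _ (stab_S hE) stab_R) (stab_T s), ?_⟩
    rw [map_sp]
    rw [LinearEquiv.trans_apply, LinearEquiv.trans_apply]
    rw [gS_Y, gR_Z, gT_c, zero_add]
  -- Y → Y
  · exact ⟨(gT (0 : E)).restrictScalars (ZMod 2), stab_T _,
      by rw [map_sp, gT_Y]⟩
  -- Y → Z
  · exact ⟨(gS (E := E)).restrictScalars (ZMod 2), stab_S hE,
      by rw [map_sp, gS_Y]⟩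
  -- Z → c s
  · refine ⟨(gR.trans (gT s)).restrictScalars (ZMod 2),
      stab_comp _ _ stab_R (stab_T s), ?_⟩
    rw [map_sp]
    rw [LinearEquiv.trans_apply]
    rw [gR_Z, gT_c, zero_add]
  -- Z → Y
  · exact ⟨(gS (E := E)).restrictScalars (ZMod 2), stab_S hE,
      by rw [map_sp, gS_Z]⟩
  -- Z → Z
  · exact ⟨(gT (0 : E)).restrictScalars (ZMod 2), stab_T _,
      by rw [map_sp, gT_Z]⟩
end
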